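/- arXiv:1201.1076 — 13 statements merged into one kernel-verified Lean document; each statement's English description precedes it below -/
import Mathlib

section
/- Let w ≥ s ≥ 1 and 1 ≤ n ≤ s−1, let 1 ≤ i_1 < i_2 < ... < i_n < s, and let m_1, ..., m_n ≥ 1 be integers with m = m_1 + ... + m_n. Then the number of s-element subsets {l_1 < l_2 < ... < l_s} of {1, ..., w} such that l_{i_j + 1} − l_{i_j} = m_j for each j = 1, ..., n equals C(w − m, s − n). Consequently, if an s-element subset of {1, ..., w} is chosen uniformly at random, the probability that the gaps at positions i_1, ..., i_n equal m_1, ..., m_n is C(w − m, s − n) / C(w, s). -/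
/-!
An increasing sequence `l₀ < ⋯ < l_{s-1}` in `[1, w]` is the same thing as its gap sequence
`(l₀, l₁ - l₀, …, l_{s-1} - l_{s-2})`: `s` positive integers with sum at most `w`, the
inverse map being partial sums. Prescribing the gaps at the positions `i_j` pins `n` of these
entries, which leaves `s - n` free positive entries with sum at most `w - m`; these are in turn
the gap sequences of the `(s - n)`-subsets of `[1, w - m]`.
-/

open Finset Function

section Gaps

variable {s : ℕ}

def partialSums (g : Fin s → ℕ) (k : Fin s) : ℕ := ∑ r ∈ Iic k, g r

def gaps (l : Fin s → ℕ) (k : Fin s) : ℕ :=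
  l k - if (k : ℕ) = 0 then 0 else l ⟨k - 1, lt_of_le_of_lt (Nat.sub_le _ _) k.2⟩

lemma gaps_of_ne_zero (l : Fin s → ℕ) {k : ℕ} (hk : k < s) (hk0 : k ≠ 0) :
    gaps l ⟨k, hk⟩ = l ⟨k, hk⟩ - l ⟨k - 1, lt_of_le_of_lt (Nat.sub_le _ _) hk⟩ := by
  simp [gaps, hk0]

lemma partialSums_zero (g : Fin s → ℕ) (hs : 0 < s) : partialSums g ⟨0, hs⟩ = g ⟨0, hs⟩ := by
  have : Iic (⟨0, hs⟩ : Fin s) = {⟨0, hs⟩} := by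
    ext r; simp [Fin.le_def, Fin.ext_iff]
  simp [partialSums, this]

lemma partialSums_succ (g : Fin s → ℕ) {k : ℕ} (hk : k + 1 < s) :
    partialSums g ⟨k + 1, hk⟩ = partialSums g ⟨k, by omega⟩ + g ⟨k + 1, hk⟩ := by
  have : Iic (⟨k + 1, hk⟩ : Fin s) = insert ⟨k + 1, hk⟩ (Iic ⟨k, by omega⟩) := by
    ext r; simp only [mem_Iic, mem_insert, Fin.le_def, Fin.ext_iff]; omega
  rw [partialSums, this, sum_insert (by simp [Fin.le_def]), add_comm]
  rfl

lemma gaps_partialSums (g : Fin s → ℕ) : gaps (partialSums g) = g := by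
  funext ⟨k, hk⟩
  rcases k with _ | k
  · simp [gaps, partialSums_zero]
  · rw [gaps_of_ne_zero _ hk k.succ_ne_zero, partialSums_succ]
    simp

lemma partialSums_gaps {l : Fin s → ℕ} (hl : Monotone l) : partialSums (gaps l) = l := by
  funext ⟨k, hk⟩
  induction k with
  | zero => simp [partialSums_zero, gaps]
  | succ k ih =>
    rw [partialSums_succ, ih (by omega), gaps_of_ne_zero _ hk k.succ_ne_zero]
    have : l ⟨k, by omega⟩ ≤ l ⟨k + 1, hk⟩ := hl (Fin.mk_le_mk.2 k.le_succ)
    simp only [Nat.add_sub_cancel]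
    omega

lemma strictMono_partialSums {g : Fin s → ℕ} (hg : ∀ k, 0 < g k) : StrictMono (partialSums g) :=
  fun a b hab => sum_lt_sum_of_subset (Iic_subset_Iic.2 hab.le) (mem_Iic.2 le_rfl)
    (by simpa using hab) (hg b) (fun _ _ _ => Nat.zero_le _)

lemma le_partialSums (g : Fin s → ℕ) (k : Fin s) : g k ≤ partialSums g k :=
  single_le_sum (fun _ _ => Nat.zero_le _) (mem_Iic.2 le_rfl)

lemma partialSums_le_sum (g : Fin s → ℕ) (k : Fin s) : partialSums g k ≤ ∑ r, g r :=
  sum_le_sum_of_subset (subset_univ _)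

lemma sum_le_iff_forall_partialSums_le (g : Fin s → ℕ) (w : ℕ) :
    ∑ r, g r ≤ w ↔ ∀ k, partialSums g k ≤ w := by
  refine ⟨fun h k => (partialSums_le_sum g k).trans h, fun h => ?_⟩
  cases s with
  | zero => simp
  | succ t => simpa [partialSums, ← Fin.top_eq_last, Iic_top] using h (Fin.last t)

lemma gaps_pos {l : Fin s → ℕ} (hl : StrictMono l) (hl0 : ∀ k, 0 < l k) (k : Fin s) :
    0 < gaps l k := by
  obtain ⟨k, hk⟩ := k
  rcases k with _ | k
  · simpa [gaps] using hl0 ⟨0, hk⟩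
  · rw [gaps_of_ne_zero _ hk k.succ_ne_zero]
    have : l ⟨k, by omega⟩ < l ⟨k + 1, hk⟩ := hl (Fin.mk_lt_mk.2 k.lt_succ_self)
    simpa using this

lemma orderEmbOfFin_image_univ {α : Type*} [LinearOrder α] {f : Fin s → α} (hf : StrictMono f)
    (h : (univ.image f).card = s) : ⇑((univ.image f).orderEmbOfFin h) = f :=
  (orderEmbOfFin_unique h (fun x => mem_image_of_mem f (mem_univ x)) hf).symm

theorem ncard_subsets_Icc_eq_ncard_gaps (w : ℕ) (P : (Fin s → ℕ) → Prop) :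
    {A : Finset ℕ | A ⊆ Icc 1 w ∧ ∃ hA : A.card = s, P (gaps (A.orderEmbOfFin hA))}.ncard =
      {g : Fin s → ℕ | (∀ k, 0 < g k) ∧ ∑ k, g k ≤ w ∧ P g}.ncard := by
  have hinj : Set.InjOn (fun g : Fin s → ℕ => univ.image (partialSums g))
      {g | (∀ k, 0 < g k) ∧ ∑ k, g k ≤ w ∧ P g} := by
    intro g hg g' hg' heq
    have hrange : Set.range (partialSums g) = Set.range (partialSums g') := by
      rw [← Set.image_univ, ← Set.image_univ, ← coe_univ, ← coe_image, ← coe_image]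
      exact congrArg _ heq
    rw [← gaps_partialSums g, ← gaps_partialSums g',
      ((strictMono_partialSums hg.1).range_inj (strictMono_partialSums hg'.1)).1 hrange]
  rw [← hinj.ncard_image]
  congr 1
  ext A
  constructor
  · rintro ⟨hAw, hA, hP⟩
    set l := A.orderEmbOfFin hA
    have hl : ∀ k, l k ∈ Icc 1 w := fun k => hAw (A.orderEmbOfFin_mem hA k)
    refine ⟨gaps l, ⟨gaps_pos l.strictMono (fun k => (mem_Icc.1 (hl k)).1), ?_, hP⟩, ?_⟩
    · rw [sum_le_iff_forall_partialSums_le, partialSums_gaps l.monotone]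
      exact fun k => (mem_Icc.1 (hl k)).2
    · simp only [partialSums_gaps l.monotone, l, image_orderEmbOfFin_univ]
  · rintro ⟨g, ⟨hpos, hsum, hP⟩, rfl⟩
    have hmono := strictMono_partialSums hpos
    have hcard : (univ.image (partialSums g)).card = s := by
      rw [card_image_of_injective _ hmono.injective, card_univ, Fintype.card_fin]
    refine ⟨?_, hcard, ?_⟩
    · intro x hx
      obtain ⟨k, -, rfl⟩ := mem_image.1 hx
      exact mem_Icc.2 ⟨(hpos k).trans_le (le_partialSums g k),
        (sum_le_iff_forall_partialSums_le g w).1 hsum k⟩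
    · rwa [orderEmbOfFin_image_univ hmono, gaps_partialSums]

theorem ncard_pos_sum_le_eq_choose (s w : ℕ) :
    {g : Fin s → ℕ | (∀ k, 0 < g k) ∧ ∑ k, g k ≤ w}.ncard = w.choose s := by
  have h := ncard_subsets_Icc_eq_ncard_gaps (s := s) w (fun _ => True)
  simp only [and_true, exists_prop] at h
  have hw : w.choose s = (powersetCard s (Icc 1 w)).card := by simp
  rw [← h, hw, ← Set.ncard_coe_finset]
  congr 1
  ext A
  simp

end Gaps

section FixedCoordinates

variable {ι κ τ : Type*} [Fintype ι] [Fintype κ] [Fintype τ]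

theorem exists_sumEquiv_inl_eq {e : κ → ι} (he : Injective e) {t : ℕ}
    (ht : Fintype.card κ + t = Fintype.card ι) :
    ∃ σ : κ ⊕ Fin t ≃ ι, ∀ j, σ (.inl j) = e j := by
  classical
  have hcard : Fintype.card {x // x ∉ Set.range e} = t := by
    rw [Fintype.card_subtype_compl, Set.card_range_of_injective he]
    omega
  exact ⟨(Equiv.sumCongr (Equiv.ofInjective e he) (Fintype.equivFinOfCardEq hcard).symm).trans
    (Equiv.sumCompl _), fun j => rfl⟩

/-- `Nonempty τ` makes the truncated subtraction `w - ∑ j, m j` harmless: when `∑ j, m j > w`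
both sides count the empty set. -/
theorem ncard_pos_sum_le_of_fixed [Nonempty τ] (σ : κ ⊕ τ ≃ ι) {m : κ → ℕ} (hm : ∀ j, 0 < m j)
    (w : ℕ) :
    {g : ι → ℕ | (∀ x, 0 < g x) ∧ ∑ x, g x ≤ w ∧ ∀ j, g (σ (.inl j)) = m j}.ncard =
      {h : τ → ℕ | (∀ t, 0 < h t) ∧ ∑ t, h t ≤ w - ∑ j, m j}.ncard := by
  set extend : (τ → ℕ) → ι → ℕ := fun h => Sum.elim m h ∘ σ.symm
  have hinj : Injective extend := fun h h' e =>
    funext fun t => by simpa [extend] using congrFun e (σ (.inr t))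
  have hsum (g : ι → ℕ) : ∑ x, g x = ∑ j, g (σ (.inl j)) + ∑ t, g (σ (.inr t)) := by
    rw [← σ.sum_comp, Fintype.sum_sum_type]
  rw [← hinj.injOn.ncard_image]
  congr 1
  ext g
  constructor
  · rintro ⟨hpos, hle, hfix⟩
    refine ⟨fun t => g (σ (.inr t)), ⟨fun t => hpos _, ?_⟩, ?_⟩
    · show ∑ t, g (σ (.inr t)) ≤ w - ∑ j, m j
      simp only [hsum, hfix] at hle
      omega
    · funext x
      obtain ⟨y, rfl⟩ := σ.surjective x
      cases y <;> simp [extend, hfix]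
  · rintro ⟨h, ⟨hpos, hle⟩, rfl⟩
    have hh : 0 < ∑ t, h t := sum_pos (fun t _ => hpos t) univ_nonempty
    refine ⟨fun x => ?_, ?_, fun j => by simp [extend]⟩
    · obtain ⟨y, rfl⟩ := σ.surjective x
      cases y <;> simp [extend, hm, hpos]
    · rw [hsum]
      simp only [extend, comp_apply, Equiv.symm_apply_apply, Sum.elim_inl, Sum.elim_inr]
      omega

end FixedCoordinates

theorem stmt2_general (w s n : ℕ) (hs : 1 ≤ s) (hns : n ≤ s - 1)
    (i : Fin n → ℕ) (himono : StrictMono i) (hi1 : ∀ j, 1 ≤ i j) (his : ∀ j, i j < s)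
    (m : Fin n → ℕ) (hm : ∀ j, 1 ≤ m j) :
    {A : Finset ℕ | A ⊆ Finset.Icc 1 w ∧ ∃ hA : A.card = s,
        ∀ j : Fin n,
          (A.orderEmbOfFin hA ⟨i j, his j⟩ : ℕ)
            - (A.orderEmbOfFin hA ⟨i j - 1, lt_of_le_of_lt (Nat.sub_le _ _) (his j)⟩ : ℕ)
            = m j}.ncard
      = (w - ∑ j, m j).choose (s - n)
    ∧ (({A : Finset ℕ | A ⊆ Finset.Icc 1 w ∧ ∃ hA : A.card = s,
        ∀ j : Fin n,
          (A.orderEmbOfFin hA ⟨i j, his j⟩ : ℕ)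
            - (A.orderEmbOfFin hA ⟨i j - 1, lt_of_le_of_lt (Nat.sub_le _ _) (his j)⟩ : ℕ)
            = m j}.ncard : ℝ) / (w.choose s : ℝ)
        = ((w - ∑ j, m j).choose (s - n) : ℝ) / (w.choose s : ℝ)) := by
  refine (fun hcount => ⟨hcount, by rw [hcount]⟩) ?_
  obtain ⟨σ, hσ⟩ := exists_sumEquiv_inl_eq (e := fun j => (⟨i j, his j⟩ : Fin s))
    (fun j j' h => himono.injective (Fin.mk.inj_iff.1 h)) (t := s - n)
    (by simp only [Fintype.card_fin]; omega)
  have : Nonempty (Fin (s - n)) := ⟨⟨0, by omega⟩⟩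
  calc _ = {g : Fin s → ℕ | (∀ k, 0 < g k) ∧ ∑ k, g k ≤ w ∧
          ∀ j, g (σ (.inl j)) = m j}.ncard := by
        rw [← ncard_subsets_Icc_eq_ncard_gaps]
        congr 1
        ext A
        refine and_congr_right fun _ => exists_congr fun hA => forall_congr' fun j => ?_
        rw [hσ, gaps_of_ne_zero _ _ (by have := hi1 j; omega)]
    _ = _ := ncard_pos_sum_le_of_fixed σ hm w
    _ = _ := ncard_pos_sum_le_eq_choose _ _

/-- Let `w ≥ s ≥ 1`, `1 ≤ n ≤ s - 1`, let `1 ≤ i_1 < ⋯ < i_n < s`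
and `m_1, …, m_n ≥ 1` with `m = m_1 + ⋯ + m_n`.  The number of `s`-element subsets
`{l_1 < ⋯ < l_s}` of `{1, …, w}` whose gap at position `i_j` equals `m_j`
(i.e. `l_{i_j+1} - l_{i_j} = m_j`) for each `j` equals `C(w - m, s - n)`; consequently,
for a uniformly chosen `s`-element subset the probability of this event is
`C(w - m, s - n) / C(w, s)`.  (Here `l_k` is the `k`-th smallest element, realized via
`Finset.orderEmbOfFin` with 0-based indexing, so `l_k = orderEmbOfFin ⟨k-1⟩`.) -/
theorem stmt2 (w s n : ℕ) (hs : 1 ≤ s) (hws : s ≤ w) (hn1 : 1 ≤ n) (hns : n ≤ s - 1)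
    (i : Fin n → ℕ) (himono : StrictMono i) (hi1 : ∀ j, 1 ≤ i j) (his : ∀ j, i j < s)
    (m : Fin n → ℕ) (hm : ∀ j, 1 ≤ m j) :
    {A : Finset ℕ | A ⊆ Finset.Icc 1 w ∧ ∃ hA : A.card = s,
        ∀ j : Fin n,
          (A.orderEmbOfFin hA ⟨i j, his j⟩ : ℕ)
            - (A.orderEmbOfFin hA ⟨i j - 1, lt_of_le_of_lt (Nat.sub_le _ _) (his j)⟩ : ℕ)
            = m j}.ncard
      = (w - ∑ j, m j).choose (s - n)
    ∧ (({A : Finset ℕ | A ⊆ Finset.Icc 1 w ∧ ∃ hA : A.card = s,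
        ∀ j : Fin n,
          (A.orderEmbOfFin hA ⟨i j, his j⟩ : ℕ)
            - (A.orderEmbOfFin hA ⟨i j - 1, lt_of_le_of_lt (Nat.sub_le _ _) (his j)⟩ : ℕ)
            = m j}.ncard : ℝ) / (w.choose s : ℝ)
        = ((w - ∑ j, m j).choose (s - n) : ℝ) / (w.choose s : ℝ)) :=
  stmt2_general w s n hs hns i himono hi1 his m hm
end

section
/- Let s ≥ 2 be an integer with f_{W_q}(s) > 0 and let 1 ≤ i < s. Then for all t ≥ 0, P(D_{q,i} ≤ t | W_q = s) = Σ_{m=1}^∞ A_{s,m} F_D^{*m}(t), where F_D^{*m} denotes the m-fold convolution of the distribution function F_D and A_{s,m} = (q^s / f_{W_q}(s)) Σ_{w=s+m−1}^∞ f_W(w) C(w−m, s−1) (1−q)^{w−s}. In particular, the conditional distribution of D_{q,i} given W_q = s does not depend on i. -/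
open MeasureTheory ProbabilityTheory
open scoped ENNReal

namespace Stmt4

variable {Ω : Type*}

/-- Index type for the family consisting of the number of renewals `W` (index `none`),
the interrenewal times `D j` (indices `some (inl j)`) and the Bernoulli sampling
indicators `X k` (indices `some (inr k)`). -/
def renType : Option (ℕ ⊕ ℕ) → Type
  | none => ℕ
  | some (Sum.inl _) => ℝ
  | some (Sum.inr _) => ℕ

def renMS : ∀ o, MeasurableSpace (renType o)
  | none => inferInstanceAs (MeasurableSpace ℕ)
  | some (Sum.inl _) => inferInstanceAs (MeasurableSpace ℝ)
  | some (Sum.inr _) => inferInstanceAs (MeasurableSpace ℕ)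

/-- The family `(W, (D j)_j, (X k)_k)` as a single family of random variables. -/
def fam (W : Ω → ℕ) (D : ℕ → Ω → ℝ) (X : ℕ → Ω → ℕ) : ∀ o, Ω → renType o
  | none => W
  | some (Sum.inl j) => D j
  | some (Sum.inr k) => X k

/-- Indices (among the original renewals `1, …, W ω`) of the sampled renewals. -/
def sampledSet (W : Ω → ℕ) (X : ℕ → Ω → ℕ) (ω : Ω) : Finset ℕ :=
  (Finset.Icc 1 (W ω)).filter fun k => X k ω = 1

/-- Number of sampled renewals. -/
def Wq (W : Ω → ℕ) (X : ℕ → Ω → ℕ) (ω : Ω) : ℕ := (sampledSet W X ω).card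

/-- Original index of the `i`-th sampled renewal (1-based `i`). -/
def sIdx (W : Ω → ℕ) (X : ℕ → Ω → ℕ) (ω : Ω) (i : ℕ) : ℕ :=
  ((sampledSet W X ω).sort (· ≤ ·)).getD (i - 1) 0

/-- Sampled interrenewal time `D_{q,i}`: the time between the `i`-th and `(i+1)`-th
sampled renewals, i.e. the sum of the original interrenewal times lying between them
(the original interrenewal time `D j` separates renewals `j` and `j+1`). -/
def Dq (W : Ω → ℕ) (D : ℕ → Ω → ℝ) (X : ℕ → Ω → ℕ) (i : ℕ) (ω : Ω) : ℝ :=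
  ∑ j ∈ Finset.Ico (sIdx W X ω i) (sIdx W X ω (i + 1)), D j ω

/-- The coefficient `A_{s,m} = (q^s / f_{W_q}(s)) ∑_{w=s+m-1}^∞ f_W(w) C(w-m, s-1)
(1-q)^{w-s}` (the terms with `w < s + m - 1` vanish since then `C(w-m, s-1) = 0`,
and for such terms also `(1-q)^{w-s}` is harmlessly interpreted with truncated
subtraction). -/
noncomputable def A [MeasurableSpace Ω] (μ : Measure Ω) (q : ℝ) (W : Ω → ℕ)
    (X : ℕ → Ω → ℕ) (s m : ℕ) : ℝ :=
  q ^ s / (μ {ω | Wq W X ω = s}).toReal *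
    ∑' w : ℕ, (μ {ω | W ω = w}).toReal * ((w - m).choose (s - 1) : ℝ) * (1 - q) ^ (w - s)

/-!
Given `W = w` and the set `K` of sampled renewals, an event of probability
`P(W = w) q^s (1-q)^(w-s)` when `#K = s`, the time `D_{q,i}` is the sum of the original
interrenewal times over the `i`-th gap of `K`. These times are independent of `(W, X)` and i.i.d.,
so the conditional law only depends on the gap length `m` and is `F_D^{*m}`. The number of
`s`-subsets of `[1, w]` whose `i`-th gap has length `m` is `C(w-m, s-1)` whatever `i` is, and
summing over `w` and `K`, then exchanging the two sums, gives the coefficients `A_{s,m}`.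
-/

open Finset

section Gaps

variable {a m j w : ℕ} {K : Finset ℕ}

lemma toFinset_ofPred_mem (hf : (Set.ofPred (· ∈ K)).Finite) : hf.toFinset = K := by
  ext; simp

lemma nth_mem_eq_getD_sort (j : ℕ) : Nat.nth (· ∈ K) j = (K.sort (· ≤ ·)).getD j 0 := by
  rw [Nat.nth_eq_getD_sort (p := (· ∈ K)) K.finite_toSet, toFinset_ofPred_mem]

lemma nth_mem_of_lt_card (hj : j < #K) : Nat.nth (· ∈ K) j ∈ K :=
  Nat.nth_mem j fun hf => by rwa [toFinset_ofPred_mem]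

lemma count_nth_of_lt_card (hj : j < #K) : Nat.count (· ∈ K) (Nat.nth (· ∈ K) j) = j :=
  Nat.count_nth fun hf => by rwa [toFinset_ofPred_mem]

lemma nth_lt_nth_of_lt_card {i : ℕ} (hij : i < j) (hj : j < #K) :
    Nat.nth (· ∈ K) i < Nat.nth (· ∈ K) j :=
  Nat.nth_lt_nth' hij fun hf => by rwa [toFinset_ofPred_mem]

lemma le_nth_or_nth_succ_le {x : ℕ} (hx : x ∈ K) :
    x ≤ Nat.nth (· ∈ K) j ∨ Nat.nth (· ∈ K) (j + 1) ≤ x := by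
  by_cases h : x < Nat.nth (· ∈ K) (j + 1)
  · exact .inl (Nat.le_nth_of_lt_nth_succ h hx)
  · exact .inr (not_lt.1 h)

def openGap (a m : ℕ) (K : Finset ℕ) : Finset ℕ :=
  insert (a + m) (K.image fun x => if x ≤ a then x else x + m)

def closeGap (a m : ℕ) (K : Finset ℕ) : Finset ℕ :=
  (K.erase (a + m)).image fun x => if x ≤ a then x else x - m

lemma add_notMem_image_openGap (hm : 0 < m) :
    a + m ∉ K.image fun x => if x ≤ a then x else x + m := by
  simp only [mem_image, not_exists, not_and]
  intro x _
  split_ifs <;> omega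

lemma card_openGap (hm : 0 < m) : #(openGap a m K) = #K + 1 := by
  rw [openGap, card_insert_of_notMem (add_notMem_image_openGap hm), card_image_of_injective]
  intro x y hxy
  simp only at hxy
  split_ifs at hxy <;> omega

lemma closeGap_openGap (hm : 0 < m) : closeGap a m (openGap a m K) = K := by
  rw [closeGap, openGap, erase_insert (add_notMem_image_openGap hm), image_image]
  refine (image_congr fun x _ => ?_).trans image_id
  simp only [Function.comp_apply, id_eq]
  split_ifs <;> omega

lemma openGap_closeGap (hb : a + m ∈ K) (hK : ∀ x ∈ K, x ≤ a ∨ a + m ≤ x) :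
    openGap a m (closeGap a m K) = K := by
  rw [openGap, closeGap, image_image]
  conv_rhs => rw [← insert_erase hb]
  congr 1
  refine (image_congr fun x hx => ?_).trans image_id
  have := hK x (mem_of_mem_erase hx)
  have := ne_of_mem_erase hx
  simp only [Function.comp_apply, id_eq]
  split_ifs <;> omega

lemma count_openGap_self : Nat.count (· ∈ openGap a m K) a = Nat.count (· ∈ K) a := by
  simp only [Nat.count_eq_card_filter_range]
  congr 1
  ext x
  simp only [openGap, mem_filter, mem_range, mem_insert, mem_image]
  constructor
  · rintro ⟨hx, rfl | ⟨y, hy, rfl⟩⟩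
    · omega
    · split_ifs at hx ⊢ <;> first | exact ⟨hx, hy⟩ | omega
  · rintro ⟨hx, hxK⟩
    exact ⟨hx, .inr ⟨x, hxK, if_pos hx.le⟩⟩

lemma count_openGap_add (hm : 0 < m) :
    Nat.count (· ∈ openGap a m K) (a + m) = Nat.count (· ∈ K) (a + 1) := by
  simp only [Nat.count_eq_card_filter_range]
  congr 1
  ext x
  simp only [openGap, mem_filter, mem_range, mem_insert, mem_image]
  constructor
  · rintro ⟨hx, rfl | ⟨y, hy, rfl⟩⟩
    · omega
    · split_ifs at hx ⊢ <;> first | exact ⟨by omega, hy⟩ | omega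
  · rintro ⟨hx, hxK⟩
    exact ⟨by omega, .inr ⟨x, hxK, if_pos (by omega)⟩⟩

lemma nth_openGap (hm : 0 < m) (ha : a ∈ K) :
    Nat.nth (· ∈ openGap a m K) (Nat.count (· ∈ K) a) = a ∧
      Nat.nth (· ∈ openGap a m K) (Nat.count (· ∈ K) a + 1) = a + m := by
  have ha' : a ∈ openGap a m K := mem_insert_of_mem (mem_image.2 ⟨a, ha, if_pos le_rfl⟩)
  have hb' : a + m ∈ openGap a m K := mem_insert_self _ _
  constructor
  · rw [← count_openGap_self (m := m)]
    exact Nat.nth_count ha'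
  · rw [← Nat.count_succ_eq_succ_count ha, ← count_openGap_add hm]
    exact Nat.nth_count hb'

lemma nth_closeGap (hm : 0 < m) (ha : a ∈ K) (hb : a + m ∈ K)
    (hK : ∀ x ∈ K, x ≤ a ∨ a + m ≤ x) :
    Nat.nth (· ∈ closeGap a m K) (Nat.count (· ∈ K) a) = a := by
  have ha' : a ∈ closeGap a m K :=
    mem_image.2 ⟨a, mem_erase.2 ⟨by omega, ha⟩, if_pos le_rfl⟩
  calc Nat.nth (· ∈ closeGap a m K) (Nat.count (· ∈ K) a)
      = Nat.nth (· ∈ closeGap a m K) (Nat.count (· ∈ openGap a m (closeGap a m K)) a) := by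
        rw [openGap_closeGap hb hK]
    _ = a := by rw [count_openGap_self]; exact Nat.nth_count ha'

lemma openGap_subset_Icc (ha : a ∈ K) (hK : K ⊆ Icc 1 (w - m)) : openGap a m K ⊆ Icc 1 w := by
  have := mem_Icc.1 (hK ha)
  intro y hy
  simp only [openGap, mem_insert, mem_image] at hy
  rcases hy with rfl | ⟨x, hx, rfl⟩
  · exact mem_Icc.2 ⟨by omega, by omega⟩
  · have := mem_Icc.1 (hK hx)
    exact mem_Icc.2 (by split_ifs <;> omega)

lemma closeGap_subset_Icc (hb : a + m ∈ K) (hK : ∀ x ∈ K, x ≤ a ∨ a + m ≤ x)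
    (hKw : K ⊆ Icc 1 w) : closeGap a m K ⊆ Icc 1 (w - m) := by
  have := mem_Icc.1 (hKw hb)
  intro y hy
  obtain ⟨x, hx, rfl⟩ := mem_image.1 hy
  have := mem_Icc.1 (hKw (mem_of_mem_erase hx))
  have := hK x (mem_of_mem_erase hx)
  have := ne_of_mem_erase hx
  exact mem_Icc.2 (by split_ifs <;> omega)

lemma nth_gap_spec (hjK : j + 1 < #K)
    (hgap : Nat.nth (· ∈ K) (j + 1) - Nat.nth (· ∈ K) j = m) :
    Nat.nth (· ∈ K) j ∈ K ∧ Nat.nth (· ∈ K) j + m ∈ K ∧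
      ∀ x ∈ K, x ≤ Nat.nth (· ∈ K) j ∨ Nat.nth (· ∈ K) j + m ≤ x := by
  have hlt := nth_lt_nth_of_lt_card (lt_add_one j) hjK
  have hb : Nat.nth (· ∈ K) (j + 1) = Nat.nth (· ∈ K) j + m := by omega
  exact ⟨nth_mem_of_lt_card (by omega), hb ▸ nth_mem_of_lt_card hjK,
    fun x hx => hb ▸ le_nth_or_nth_succ_le hx⟩

/-- Closing the gap between the `j`-th and `(j+1)`-th smallest elements is a bijection onto the
`(s-1)`-subsets of `[1, w-m]`, inverted by reopening it. -/
theorem card_filter_gap_eq_choose {s : ℕ} (hm : 0 < m) (hjs : j + 1 < s) :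
    #{K ∈ powersetCard s (Icc 1 w) | Nat.nth (· ∈ K) (j + 1) - Nat.nth (· ∈ K) j = m}
      = (w - m).choose (s - 1) := by
  have hcount : #(powersetCard (s - 1) (Icc 1 (w - m))) = (w - m).choose (s - 1) := by simp
  rw [← hcount]
  refine card_nbij' (fun K => closeGap (Nat.nth (· ∈ K) j) m K)
    (fun K => openGap (Nat.nth (· ∈ K) j) m K) ?_ ?_ ?_ ?_
  · intro K hK
    simp only [mem_coe, mem_filter, mem_powersetCard] at hK
    obtain ⟨⟨hKw, hcard⟩, hgap⟩ := hK
    obtain ⟨-, hb, hsplit⟩ := nth_gap_spec (hcard ▸ hjs) hgap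
    have hcard' :=
      card_openGap (a := Nat.nth (· ∈ K) j) (K := closeGap (Nat.nth (· ∈ K) j) m K) hm
    rw [openGap_closeGap hb hsplit] at hcard'
    refine mem_powersetCard.2 ⟨closeGap_subset_Icc hb hsplit hKw, ?_⟩
    beta_reduce
    omega
  · intro K hK
    obtain ⟨hKw, hcard⟩ := mem_powersetCard.1 hK
    have ha := nth_mem_of_lt_card (K := K) (j := j) (by omega)
    have hnth := nth_openGap hm ha
    rw [count_nth_of_lt_card (by omega)] at hnth
    simp only [mem_coe, mem_filter, mem_powersetCard]
    refine ⟨⟨openGap_subset_Icc ha hKw, by rw [card_openGap hm]; omega⟩, ?_⟩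
    rw [hnth.1, hnth.2]
    omega
  · intro K hK
    simp only [mem_coe, mem_filter, mem_powersetCard] at hK
    obtain ⟨⟨-, hcard⟩, hgap⟩ := hK
    obtain ⟨ha, hb, hsplit⟩ := nth_gap_spec (hcard ▸ hjs) hgap
    have hnth := nth_closeGap hm ha hb hsplit
    rw [count_nth_of_lt_card (by omega)] at hnth
    simp only [hnth]
    exact openGap_closeGap hb hsplit
  · intro K hK
    obtain ⟨-, hcard⟩ := mem_powersetCard.1 hK
    have ha := nth_mem_of_lt_card (K := K) (j := j) (by omega)
    have hnth := nth_openGap hm ha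
    rw [count_nth_of_lt_card (by omega)] at hnth
    simp only [hnth.1]
    exact closeGap_openGap hm

theorem sum_powersetCard_gap {M : Type*} [AddCommMonoid M] {s : ℕ} (hjs : j + 1 < s)
    (f : ℕ → M) :
    ∑ K ∈ powersetCard s (Icc 1 w), f (Nat.nth (· ∈ K) (j + 1) - Nat.nth (· ∈ K) j)
      = ∑ m ∈ range w, (w - (m + 1)).choose (s - 1) • f (m + 1) := by
  have hmaps : ∀ K ∈ powersetCard s (Icc 1 w),
      Nat.nth (· ∈ K) (j + 1) - Nat.nth (· ∈ K) j - 1 ∈ range w := by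
    intro K hK
    obtain ⟨hKw, hcard⟩ := mem_powersetCard.1 hK
    have hlt := nth_lt_nth_of_lt_card (lt_add_one j) (hcard ▸ hjs)
    have := mem_Icc.1 (hKw (nth_mem_of_lt_card (hcard ▸ hjs)))
    exact mem_range.2 (by omega)
  rw [← sum_fiberwise_of_maps_to hmaps]
  refine sum_congr rfl fun m _ => ?_
  have hfiber : {K ∈ powersetCard s (Icc 1 w) |
      Nat.nth (· ∈ K) (j + 1) - Nat.nth (· ∈ K) j - 1 = m}
      = {K ∈ powersetCard s (Icc 1 w) |
          Nat.nth (· ∈ K) (j + 1) - Nat.nth (· ∈ K) j = m + 1} := by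
    refine filter_congr fun K hK => ?_
    obtain ⟨-, hcard⟩ := mem_powersetCard.1 hK
    have := nth_lt_nth_of_lt_card (lt_add_one j) (hcard ▸ hjs)
    omega
  rw [hfiber, sum_congr rfl fun K hK => by rw [(mem_filter.1 hK).2], sum_const,
    card_filter_gap_eq_choose m.succ_pos hjs]

end Gaps

section IidSums

variable {ι β : Type*} [MeasurableSpace Ω] {μ : Measure Ω}
  [MeasurableSpace β] [AddCommMonoid β] [MeasurableAdd₂ β] {D : ι → Ω → β}

lemma map_sum_eq_map_pi (hD : ∀ i, Measurable (D i)) (hind : iIndepFun D μ) {S : Finset ι}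
    {n : ℕ} (e : Fin n ≃ S) :
    μ.map (fun ω => ∑ i ∈ S, D i ω)
      = (Measure.pi fun r => μ.map (D (e r))).map fun x => ∑ r, x r := by
  have hind' : iIndepFun (fun r => D (e r)) μ :=
    hind.precomp (Subtype.val_injective.comp e.injective)
  rw [← hind'.map_fun_eq_pi_map fun r => (hD _).aemeasurable,
    Measure.map_map (Finset.measurable_sum _ fun r _ => measurable_pi_apply r)
      (measurable_pi_lambda _ fun r => hD _)]
  congr 1
  funext ω
  rw [Function.comp_apply, ← sum_coe_sort S]
  exact (e.sum_comp fun i => D i ω).symm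

lemma identDistrib_sum_of_card_eq (hD : ∀ i, Measurable (D i)) (hind : iIndepFun D μ)
    (hid : ∀ i j, IdentDistrib (D i) (D j) μ μ) {S T : Finset ι} (hST : #S = #T) :
    IdentDistrib (fun ω => ∑ i ∈ S, D i ω) (fun ω => ∑ i ∈ T, D i ω) μ μ := by
  refine ⟨(Finset.measurable_sum _ fun i _ => hD i).aemeasurable,
    (Finset.measurable_sum _ fun i _ => hD i).aemeasurable, ?_⟩
  rw [map_sum_eq_map_pi hD hind (S.equivFinOfCardEq hST).symm,
    map_sum_eq_map_pi hD hind (T.equivFinOfCardEq rfl).symm]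
  congr 2
  funext r
  exact (hid _ _).map_eq

end IidSums

attribute [local instance] renMS

section Renewal

variable {W : Ω → ℕ} {D : ℕ → Ω → ℝ} {X : ℕ → Ω → ℕ}

def famSigma (W : Ω → ℕ) (D : ℕ → Ω → ℝ) (X : ℕ → Ω → ℕ) (S : Set (Option (ℕ ⊕ ℕ))) :
    MeasurableSpace Ω :=
  ⨆ o ∈ S, (renMS o).comap (fam W D X o)

lemma measurable_fam_famSigma {S : Set (Option (ℕ ⊕ ℕ))} {o : Option (ℕ ⊕ ℕ)} (ho : o ∈ S) :
    Measurable[famSigma W D X S] (fam W D X o) :=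
  measurable_iff_comap_le.2
    (le_iSup₂ (f := fun o (_ : o ∈ S) => (renMS o).comap (fam W D X o)) o ho)

lemma sIdx_add_one (ω : Ω) (j : ℕ) :
    sIdx W X ω (j + 1) = Nat.nth (· ∈ sampledSet W X ω) j := by
  rw [sIdx, Nat.add_sub_cancel, nth_mem_eq_getD_sort]

def sampleEvent (W : Ω → ℕ) (X : ℕ → Ω → ℕ) (w : ℕ) (K : Finset ℕ) : Set Ω :=
  {ω | W ω = w} ∩ ⋂ k ∈ Icc 1 w, {ω | X k ω = if k ∈ K then 1 else 0}

lemma sampledSet_eq_of_mem_sampleEvent {w : ℕ} {K : Finset ℕ} (hK : K ⊆ Icc 1 w) {ω : Ω}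
    (hω : ω ∈ sampleEvent W X w K) : sampledSet W X ω = K := by
  obtain ⟨hw, hX⟩ := hω
  have hX' : ∀ k ∈ Icc 1 w, X k ω = if k ∈ K then 1 else 0 := fun k hk =>
    Set.mem_iInter₂.1 hX k hk
  ext k
  rw [sampledSet, mem_filter, show W ω = w from hw]
  constructor
  · rintro ⟨hk, hXk⟩
    by_contra hkK
    rw [hX' k hk, if_neg hkK] at hXk
    exact zero_ne_one hXk
  · intro hkK
    exact ⟨hK hkK, by rw [hX' k (hK hkK), if_pos hkK]⟩

lemma mem_sampleEvent_self (hX01 : ∀ k ω, X k ω ≤ 1) (ω : Ω) :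
    ω ∈ sampleEvent W X (W ω) (sampledSet W X ω) := by
  refine ⟨rfl, Set.mem_iInter₂.2 fun k hk => ?_⟩
  have := hX01 k ω
  change X k ω = if k ∈ sampledSet W X ω then 1 else 0
  split_ifs with h
  · exact (mem_filter.1 h).2
  · have : X k ω ≠ 1 := fun h1 => h (mem_filter.2 ⟨hk, h1⟩)
    omega

def gapEvent (W : Ω → ℕ) (D : ℕ → Ω → ℝ) (X : ℕ → Ω → ℕ) (j : ℕ) (t : ℝ) (w : ℕ)
    (K : Finset ℕ) : Set Ω :=
  {ω | ∑ i ∈ Ico (Nat.nth (· ∈ K) j) (Nat.nth (· ∈ K) (j + 1)), D i ω ≤ t}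
    ∩ sampleEvent W X w K

theorem setOf_Dq_le_and_Wq_eq (hX01 : ∀ k ω, X k ω ≤ 1) (j s : ℕ) (t : ℝ) :
    {ω | Dq W D X (j + 1) ω ≤ t ∧ Wq W X ω = s}
      = ⋃ w, ⋃ K ∈ powersetCard s (Icc 1 w), gapEvent W D X j t w K := by
  ext ω
  simp only [gapEvent, Set.mem_ofPred_eq, Set.mem_iUnion, Set.mem_inter_iff, exists_prop,
    mem_powersetCard, Dq, Wq, sIdx_add_one]
  constructor
  · rintro ⟨hDq, hWq⟩
    exact ⟨W ω, sampledSet W X ω, ⟨filter_subset _ _, hWq⟩, hDq, mem_sampleEvent_self hX01 ω⟩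
  · rintro ⟨w, K, ⟨hKw, hcard⟩, hsum, hω⟩
    rw [sampledSet_eq_of_mem_sampleEvent hKw hω]
    exact ⟨hsum, hcard⟩

lemma measurableSet_sampleEvent {mΩ : MeasurableSpace Ω} (hW : Measurable W)
    (hX : ∀ k, Measurable (X k)) (w : ℕ) (K : Finset ℕ) :
    MeasurableSet (sampleEvent W X w K) :=
  (hW (measurableSet_singleton w)).inter
    (.biInter (Icc 1 w).countable_toSet fun k _ => hX k (measurableSet_singleton _))

lemma measurableSet_gapEvent {mΩ : MeasurableSpace Ω} (hW : Measurable W)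
    (hD : ∀ j, Measurable (D j)) (hX : ∀ k, Measurable (X k)) (j : ℕ) (t : ℝ) (w : ℕ)
    (K : Finset ℕ) : MeasurableSet (gapEvent W D X j t w K) :=
  (measurableSet_le (Finset.measurable_sum _ fun i _ => hD i) measurable_const).inter
    (measurableSet_sampleEvent hW hX w K)

variable [MeasurableSpace Ω] {μ : Measure Ω} {q : ℝ}

lemma measurable_fam (hW : Measurable W) (hD : ∀ j, Measurable (D j))
    (hX : ∀ k, Measurable (X k)) : ∀ o, Measurable (fam W D X o)
  | none => hW
  | some (Sum.inl j) => hD j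
  | some (Sum.inr k) => hX k

lemma indep_iSup_fam_of_disjoint (hindep : iIndepFun (fam W D X) μ)
    (hfam : ∀ o, Measurable (fam W D X o)) {S T : Set (Option (ℕ ⊕ ℕ))} (hST : Disjoint S T) :
    Indep (famSigma W D X S) (famSigma W D X T) μ :=
  indep_iSup_of_disjoint (fun o => (hfam o).comap_le) hindep hST

lemma measure_sum_le_inter_sampleEvent (hindep : iIndepFun (fam W D X) μ)
    (hfam : ∀ o, Measurable (fam W D X o)) (J : Finset ℕ) (t : ℝ) (w : ℕ) (K : Finset ℕ) :
    μ ({ω | ∑ j ∈ J, D j ω ≤ t} ∩ sampleEvent W X w K)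
      = μ {ω | ∑ j ∈ J, D j ω ≤ t} * μ (sampleEvent W X w K) := by
  set S : Set (Option (ℕ ⊕ ℕ)) := Set.range (some ∘ Sum.inl)
  have hD : ∀ j, Measurable[famSigma W D X S] (D j) :=
    fun j => measurable_fam_famSigma (o := some (.inl j)) ⟨j, rfl⟩
  have hW : Measurable[famSigma W D X Sᶜ] W :=
    measurable_fam_famSigma (o := none) (by simp [S])
  have hX : ∀ k, Measurable[famSigma W D X Sᶜ] (X k) :=
    fun k => measurable_fam_famSigma (o := some (.inr k)) (by simp [S])
  exact (Indep_iff _ _ μ).1 (indep_iSup_fam_of_disjoint hindep hfam disjoint_compl_right) _ _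
    (measurableSet_le (Finset.measurable_sum _ fun j _ => hD j) measurable_const)
    (measurableSet_sampleEvent hW hX w K)

lemma measure_sum_Ico_le_eq (hindep : iIndepFun (fam W D X) μ) (hD : ∀ j, Measurable (D j))
    (hDiid : ∀ j k : ℕ, IdentDistrib (D j) (D k) μ μ) (a b : ℕ) (t : ℝ) :
    μ {ω | ∑ j ∈ Ico a b, D j ω ≤ t} = μ {ω | ∑ j ∈ Icc 1 (b - a), D j ω ≤ t} := by
  have hDind : iIndepFun D μ :=
    hindep.precomp (g := some ∘ Sum.inl) ((Option.some_injective _).comp Sum.inl_injective)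
  have hcard : #(Ico a b) = #(Icc 1 (b - a)) := by simp
  exact (identDistrib_sum_of_card_eq hD hDind hDiid hcard).measure_mem_eq measurableSet_Iic

lemma measure_preimage_X_ite [IsProbabilityMeasure μ] (hq : 0 ≤ q) (hX : ∀ k, Measurable (X k))
    (hX01 : ∀ k ω, X k ω ≤ 1) (hbern : ∀ k, μ {ω | X k ω = 1} = ENNReal.ofReal q) (k : ℕ)
    (b : Prop) [Decidable b] :
    μ (X k ⁻¹' {if b then 1 else 0})
      = if b then ENNReal.ofReal q else ENNReal.ofReal (1 - q) := by
  split_ifs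
  · exact hbern k
  · have h0 : X k ⁻¹' {0} = {ω | X k ω = 1}ᶜ := by
      ext ω
      have := hX01 k ω
      simp only [Set.mem_preimage, Set.mem_singleton_iff, Set.mem_compl_iff, Set.mem_ofPred_eq]
      omega
    rw [h0, measure_compl (s := {ω | X k ω = 1}) (hX k (measurableSet_singleton 1))
      (measure_ne_top _ _), hbern k, measure_univ, ← ENNReal.ofReal_one, ENNReal.ofReal_sub _ hq]

lemma prod_measure_preimage_X_ite [IsProbabilityMeasure μ] (hq : 0 ≤ q)
    (hX : ∀ k, Measurable (X k)) (hX01 : ∀ k ω, X k ω ≤ 1)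
    (hbern : ∀ k, μ {ω | X k ω = 1} = ENNReal.ofReal q) {w : ℕ} {K : Finset ℕ}
    (hK : K ⊆ Icc 1 w) :
    ∏ k ∈ Icc 1 w, μ (X k ⁻¹' {if k ∈ K then 1 else 0})
      = ENNReal.ofReal q ^ #K * ENNReal.ofReal (1 - q) ^ (w - #K) := by
  have hsampled : {k ∈ Icc 1 w | k ∈ K} = K := by
    rw [filter_mem_eq_inter, inter_eq_right.2 hK]
  have hunsampled : #{k ∈ Icc 1 w | k ∉ K} = w - #K := by
    rw [filter_not, hsampled, card_sdiff_of_subset hK, Nat.card_Icc, Nat.add_sub_cancel]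
  rw [prod_congr rfl fun k _ => measure_preimage_X_ite hq hX hX01 hbern k _, prod_ite,
    prod_const, prod_const, hsampled, hunsampled]

theorem measure_sampleEvent [IsProbabilityMeasure μ] (hq : 0 ≤ q)
    (hindep : iIndepFun (fam W D X) μ) (hfam : ∀ o, Measurable (fam W D X o))
    (hX01 : ∀ k ω, X k ω ≤ 1) (hbern : ∀ k, μ {ω | X k ω = 1} = ENNReal.ofReal q) {w : ℕ}
    {K : Finset ℕ} (hK : K ⊆ Icc 1 w) :
    μ (sampleEvent W X w K)
      = μ {ω | W ω = w} * ENNReal.ofReal q ^ #K * ENNReal.ofReal (1 - q) ^ (w - #K) := by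
  set S : Set (Option (ℕ ⊕ ℕ)) := Set.range (some ∘ Sum.inr)
  have hX : ∀ k, Measurable (X k) := fun k => hfam (some (.inr k))
  have hXS : ∀ k, Measurable[famSigma W D X S] (X k) :=
    fun k => measurable_fam_famSigma (o := some (.inr k)) ⟨k, rfl⟩
  have hW : Measurable[famSigma W D X {none}] W :=
    measurable_fam_famSigma (o := none) (Set.mem_singleton none)
  have hdisj : Disjoint ({none} : Set (Option (ℕ ⊕ ℕ))) S := by
    rw [Set.disjoint_singleton_left]
    rintro ⟨k, hk⟩
    cases hk
  have hXind : iIndepFun X μ :=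
    hindep.precomp (g := some ∘ Sum.inr) ((Option.some_injective _).comp Sum.inr_injective)
  have hprod : μ (⋂ k ∈ Icc 1 w, {ω | X k ω = if k ∈ K then 1 else 0})
      = ∏ k ∈ Icc 1 w, μ (X k ⁻¹' {if k ∈ K then 1 else 0}) :=
    hXind.measure_inter_preimage_eq_mul _ fun _ _ => measurableSet_singleton _
  have hWw : MeasurableSet[famSigma W D X {none}] {ω | W ω = w} :=
    hW (measurableSet_singleton w)
  have hXK : MeasurableSet[famSigma W D X S]
      (⋂ k ∈ Icc 1 w, {ω | X k ω = if k ∈ K then 1 else 0}) :=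
    .biInter (Icc 1 w).countable_toSet fun k _ => hXS k (measurableSet_singleton _)
  rw [sampleEvent, (Indep_iff _ _ μ).1 (indep_iSup_fam_of_disjoint hindep hfam hdisj) _ _ hWw hXK,
    mul_assoc, hprod, prod_measure_preimage_X_ite hq hX hX01 hbern hK]

end Renewal

section Distribution

variable [MeasurableSpace Ω] {μ : Measure Ω} {q : ℝ}
  {W : Ω → ℕ} {D : ℕ → Ω → ℝ} {X : ℕ → Ω → ℕ}

lemma measure_gapEvent [IsProbabilityMeasure μ] (hq : 0 ≤ q) (hD : ∀ j, Measurable (D j))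
    (hfam : ∀ o, Measurable (fam W D X o)) (hDiid : ∀ j k : ℕ, IdentDistrib (D j) (D k) μ μ)
    (hX01 : ∀ k ω, X k ω ≤ 1) (hbern : ∀ k, μ {ω | X k ω = 1} = ENNReal.ofReal q)
    (hindep : iIndepFun (fam W D X) μ) (j : ℕ) (t : ℝ) {w s : ℕ} {K : Finset ℕ}
    (hK : K ∈ powersetCard s (Icc 1 w)) :
    μ (gapEvent W D X j t w K)
      = μ {ω | ∑ i ∈ Icc 1 (Nat.nth (· ∈ K) (j + 1) - Nat.nth (· ∈ K) j), D i ω ≤ t}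
        * (μ {ω | W ω = w} * ENNReal.ofReal q ^ s * ENNReal.ofReal (1 - q) ^ (w - s)) := by
  obtain ⟨hKw, hcard⟩ := mem_powersetCard.1 hK
  rw [gapEvent, measure_sum_le_inter_sampleEvent hindep hfam, measure_sum_Ico_le_eq hindep hD hDiid,
    measure_sampleEvent hq hindep hfam hX01 hbern hKw, hcard]

lemma measure_biUnion_gapEvent [IsProbabilityMeasure μ] (hq : 0 ≤ q) (hW : Measurable W)
    (hD : ∀ j, Measurable (D j)) (hX : ∀ k, Measurable (X k))
    (hDiid : ∀ j k : ℕ, IdentDistrib (D j) (D k) μ μ) (hX01 : ∀ k ω, X k ω ≤ 1)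
    (hbern : ∀ k, μ {ω | X k ω = 1} = ENNReal.ofReal q) (hindep : iIndepFun (fam W D X) μ)
    {j s : ℕ} (hjs : j + 1 < s) (t : ℝ) (w : ℕ) :
    μ (⋃ K ∈ powersetCard s (Icc 1 w), gapEvent W D X j t w K)
      = ∑' m : ℕ, μ {ω | W ω = w} * ENNReal.ofReal q ^ s * ENNReal.ofReal (1 - q) ^ (w - s)
          * ((w - (m + 1)).choose (s - 1) : ℝ≥0∞)
          * μ {ω | ∑ i ∈ Icc 1 (m + 1), D i ω ≤ t} := by
  have hdisj : Set.PairwiseDisjoint ↑(powersetCard s (Icc 1 w)) (gapEvent W D X j t w) := by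
    intro K hK K' hK' hne
    refine Set.disjoint_left.2 fun ω hω hω' => hne ?_
    rw [← sampledSet_eq_of_mem_sampleEvent (mem_powersetCard.1 hK).1 hω.2,
      ← sampledSet_eq_of_mem_sampleEvent (mem_powersetCard.1 hK').1 hω'.2]
  rw [measure_biUnion_finset hdisj fun K _ => measurableSet_gapEvent hW hD hX j t w K,
    sum_congr rfl fun K hK => measure_gapEvent hq hD (measurable_fam hW hD hX) hDiid hX01 hbern
      hindep j t hK,
    sum_powersetCard_gap hjs fun n => μ {ω | ∑ i ∈ Icc 1 n, D i ω ≤ t}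
      * (μ {ω | W ω = w} * ENNReal.ofReal q ^ s * ENNReal.ofReal (1 - q) ^ (w - s)),
    tsum_eq_sum (s := range w) fun m hm => ?_]
  · exact sum_congr rfl fun m _ => by rw [nsmul_eq_mul]; ring
  · rw [Nat.choose_eq_zero_of_lt (by simp at hm; omega), Nat.cast_zero, mul_zero, zero_mul]

theorem measure_Dq_le_and_Wq_eq [IsProbabilityMeasure μ] (hq : 0 ≤ q) (hW : Measurable W)
    (hD : ∀ j, Measurable (D j)) (hX : ∀ k, Measurable (X k))
    (hDiid : ∀ j k : ℕ, IdentDistrib (D j) (D k) μ μ) (hX01 : ∀ k ω, X k ω ≤ 1)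
    (hbern : ∀ k, μ {ω | X k ω = 1} = ENNReal.ofReal q) (hindep : iIndepFun (fam W D X) μ)
    {j s : ℕ} (hjs : j + 1 < s) (t : ℝ) :
    μ {ω | Dq W D X (j + 1) ω ≤ t ∧ Wq W X ω = s}
      = ∑' m : ℕ, (∑' w : ℕ, μ {ω | W ω = w} * ENNReal.ofReal q ^ s
            * ENNReal.ofReal (1 - q) ^ (w - s) * ((w - (m + 1)).choose (s - 1) : ℝ≥0∞))
          * μ {ω | ∑ i ∈ Icc 1 (m + 1), D i ω ≤ t} := by
  have hdisj : Pairwise (Function.onFun Disjoint fun w => ⋃ K ∈ powersetCard s (Icc 1 w),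
      gapEvent W D X j t w K) := by
    intro w w' hne
    refine Set.disjoint_left.2 fun ω hω hω' => hne ?_
    obtain ⟨K, -, hK⟩ := Set.mem_iUnion₂.1 hω
    obtain ⟨K', -, hK'⟩ := Set.mem_iUnion₂.1 hω'
    exact hK.2.1.symm.trans hK'.2.1
  rw [setOf_Dq_le_and_Wq_eq hX01, measure_iUnion hdisj fun w => .biUnion (countable_toSet _)
      fun K _ => measurableSet_gapEvent hW hD hX j t w K,
    tsum_congr (measure_biUnion_gapEvent hq hW hD hX hDiid hX01 hbern hindep hjs t),
    ENNReal.tsum_comm]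
  exact tsum_congr fun m => ENNReal.tsum_mul_right

lemma toReal_tsum_weight [IsFiniteMeasure μ] (hq0 : 0 ≤ q) (hq1 : q ≤ 1) (s n : ℕ) :
    (∑' w : ℕ, μ {ω | W ω = w} * ENNReal.ofReal q ^ s * ENNReal.ofReal (1 - q) ^ (w - s)
        * ((w - n).choose (s - 1) : ℝ≥0∞)).toReal
      = q ^ s * ∑' w : ℕ, (μ {ω | W ω = w}).toReal * ((w - n).choose (s - 1) : ℝ)
          * (1 - q) ^ (w - s) := by
  rw [ENNReal.tsum_toReal_eq fun w => by finiteness, ← tsum_mul_left]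
  refine tsum_congr fun w => ?_
  simp only [ENNReal.toReal_mul, ENNReal.toReal_pow, ENNReal.toReal_ofReal hq0,
    ENNReal.toReal_ofReal (sub_nonneg.2 hq1), ENNReal.toReal_natCast]
  ring

end Distribution

theorem stmt4_general [MeasurableSpace Ω] (μ : Measure Ω) [IsProbabilityMeasure μ]
    (q : ℝ) (hq0 : 0 < q) (hq1 : q < 1)
    (W : Ω → ℕ) (D : ℕ → Ω → ℝ) (X : ℕ → Ω → ℕ)
    (hWmeas : Measurable W) (hDmeas : ∀ j, Measurable (D j))
    (hXmeas : ∀ k, Measurable (X k))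
    (hDiid : ∀ j k : ℕ, IdentDistrib (D j) (D k) μ μ)
    (hX01 : ∀ k ω, X k ω ≤ 1)
    (hbern : ∀ k, μ {ω | X k ω = 1} = ENNReal.ofReal q)
    (hindep : iIndepFun (m := renMS) (fam W D X) μ)
    (s : ℕ) :
    ∀ i : ℕ, 1 ≤ i → i < s → ∀ t : ℝ, 0 ≤ t →
      (μ {ω | Dq W D X i ω ≤ t ∧ Wq W X ω = s}).toReal
          / (μ {ω | Wq W X ω = s}).toReal
        = ∑' m : ℕ,
            A μ q W X s (m + 1) *
              (μ {ω | (∑ j ∈ Finset.Icc 1 (m + 1), D j ω) ≤ t}).toReal := by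
  intro i hi his t _
  obtain ⟨j, rfl⟩ : ∃ j, i = j + 1 := ⟨i - 1, by omega⟩
  have hmeas := measure_Dq_le_and_Wq_eq hq0.le hWmeas hDmeas hXmeas hDiid hX01 hbern hindep his t
  rw [hmeas, ENNReal.tsum_toReal_eq (ENNReal.ne_top_of_tsum_ne_top (hmeas ▸ measure_ne_top μ _)),
    ← tsum_div_const]
  refine tsum_congr fun m => ?_
  rw [ENNReal.toReal_mul, toReal_tsum_weight hq0.le hq1.le, A]
  ring

/-- For a finite renewal process (`W ≥ 1` renewals, positive i.i.d.
interrenewal times `D j`, independent of `W`) sampled with i.i.d. Bernoulli(q)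
indicators `X k` (jointly independent of everything), for any `s ≥ 2` with
`P(W_q = s) > 0`, any `1 ≤ i < s` and any `t ≥ 0`,
`P(D_{q,i} ≤ t | W_q = s) = ∑_{m=1}^∞ A_{s,m} F_D^{*m}(t)`,
where `F_D^{*m}(t) = P(D 1 + ⋯ + D m ≤ t)` is the `m`-fold convolution of `F_D`.
In particular (the right-hand side being independent of `i`), the conditional
distribution of `D_{q,i}` given `W_q = s` does not depend on `i`. -/
theorem stmt4 [MeasurableSpace Ω] (μ : Measure Ω) [IsProbabilityMeasure μ]
    (q : ℝ) (hq0 : 0 < q) (hq1 : q < 1)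
    (W : Ω → ℕ) (D : ℕ → Ω → ℝ) (X : ℕ → Ω → ℕ)
    (hWmeas : Measurable W) (hDmeas : ∀ j, Measurable (D j))
    (hXmeas : ∀ k, Measurable (X k))
    (hW1 : ∀ ω, 1 ≤ W ω)
    (hDpos : ∀ j ω, 0 < D j ω)
    (hDiid : ∀ j k : ℕ, IdentDistrib (D j) (D k) μ μ)
    (hX01 : ∀ k ω, X k ω ≤ 1)
    (hbern : ∀ k, μ {ω | X k ω = 1} = ENNReal.ofReal q)
    (hindep : iIndepFun (m := renMS) (fam W D X) μ)
    (s : ℕ) (hs : 2 ≤ s) (hWqs : μ {ω | Wq W X ω = s} ≠ 0) :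
    ∀ i : ℕ, 1 ≤ i → i < s → ∀ t : ℝ, 0 ≤ t →
      (μ {ω | Dq W D X i ω ≤ t ∧ Wq W X ω = s}).toReal
          / (μ {ω | Wq W X ω = s}).toReal
        = ∑' m : ℕ,
            A μ q W X s (m + 1) *
              (μ {ω | (∑ j ∈ Finset.Icc 1 (m + 1), D j ω) ≤ t}).toReal :=
  stmt4_general μ q hq0 hq1 W D X hWmeas hDmeas hXmeas hDiid hX01 hbern hindep s

end Stmt4
end

section
/- Let q, c ∈ (0,1) and let f_W(w) = c^{w−1}(1−c) for w ≥ 1 (geometric distribution with parameter c). Define f_{W_q}(s) = Σ_{w=s}^∞ C(w,s) q^s (1−q)^{w−s} f_W(w) and, for s ≥ 2 and m ≥ 1, A_{s,m} = (q^s / f_{W_q}(s)) Σ_{w=s+m−1}^∞ f_W(w) C(w−m, s−1) (1−q)^{w−s}. Then for every s ≥ 2 and m ≥ 1, A_{s,m} = (c(1−q))^{m−1} (1 − c(1−q)); in particular, A_{s,m} is the probability mass function of a geometric distribution with parameter c(1−q) and does not depend on s. -/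
namespace Stmt7

/-- `f_W(w) = c^{w-1}(1-c)`, the geometric distribution with parameter `c` on the
positive integers (its value at `0` is irrelevant in all sums below, which only
involve `w ≥ s ≥ 2`). -/
noncomputable def fW (c : ℝ) (w : ℕ) : ℝ := c ^ (w - 1) * (1 - c)

/-- `f_{W_q}(s) = ∑_{w=s}^∞ C(w,s) q^s (1-q)^{w-s} f_W(w)`. -/
noncomputable def fWq (q c : ℝ) (s : ℕ) : ℝ :=
  ∑' w : ℕ, if s ≤ w then (w.choose s : ℝ) * q ^ s * (1 - q) ^ (w - s) * fW c w else 0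

/-- `A_{s,m} = (q^s / f_{W_q}(s)) ∑_{w=s+m-1}^∞ f_W(w) C(w-m, s-1) (1-q)^{w-s}`. -/
noncomputable def A (q c : ℝ) (s m : ℕ) : ℝ :=
  q ^ s / fWq q c s *
    ∑' w : ℕ, if s + m - 1 ≤ w then
      fW c w * ((w - m).choose (s - 1) : ℝ) * (1 - q) ^ (w - s) else 0

/-!
With `x = c(1-q)`, shifting the summation index turns both series into negative binomial
series `∑ₖ C(k+n, n) xᵏ = (1-x)^{-(n+1)}`: one finds
`f_{W_q}(n+1) = q^{n+1} cⁿ (1-c) / (1-x)^{n+2}` and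
`∑_w f_W(w) C(w-m, n) (1-q)^{w-n-1} = (1-c) cⁿ x^{m-1} / (1-x)^{n+1}`,
whose quotient, after multiplying by `q^{n+1}`, is `x^{m-1}(1-x)`.
-/

lemma tsum_ite_le_eq_tsum_add (a : ℕ) (g : ℕ → ℝ) :
    (∑' w : ℕ, if a ≤ w then g w else 0) = ∑' k : ℕ, g (k + a) := by
  rw [← (add_left_injective a).tsum_eq]
  · exact tsum_congr fun k => if_pos (Nat.le_add_left a k)
  · intro w hw
    have haw : a ≤ w := by by_contra h; exact hw (if_neg h)
    exact ⟨w - a, Nat.sub_add_cancel haw⟩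

section

variable {q c : ℝ}

lemma fWq_succ (hx : ‖c * (1 - q)‖ < 1) (n : ℕ) :
    fWq q c (n + 1) = q ^ (n + 1) * c ^ n * (1 - c) / (1 - c * (1 - q)) ^ (n + 2) := by
  have hterm : ∀ k : ℕ, ((k + (n + 1)).choose (n + 1) : ℝ) * q ^ (n + 1) *
      (1 - q) ^ (k + (n + 1) - (n + 1)) * fW c (k + (n + 1)) =
      q ^ (n + 1) * c ^ n * (1 - c) * (((k + (n + 1)).choose (n + 1) : ℝ) * (c * (1 - q)) ^ k) := by
    intro k
    rw [fW, Nat.add_sub_cancel, show k + (n + 1) - 1 = k + n by omega, mul_pow]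
    ring
  rw [fWq, tsum_ite_le_eq_tsum_add, tsum_congr hterm, tsum_mul_left,
    tsum_choose_mul_geometric_of_norm_lt_one _ hx]
  ring

lemma tsum_fW_mul_choose_succ (hx : ‖c * (1 - q)‖ < 1) (n k : ℕ) :
    (∑' w : ℕ, if n + 1 + k ≤ w then
      fW c w * ((w - (k + 1)).choose n : ℝ) * (1 - q) ^ (w - (n + 1)) else 0) =
      (1 - c) * c ^ n * (c * (1 - q)) ^ k / (1 - c * (1 - q)) ^ (n + 1) := by
  have hterm : ∀ j : ℕ, fW c (j + (n + 1 + k)) *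
      ((j + (n + 1 + k) - (k + 1)).choose n : ℝ) * (1 - q) ^ (j + (n + 1 + k) - (n + 1)) =
      (1 - c) * c ^ n * (c * (1 - q)) ^ k * (((j + n).choose n : ℝ) * (c * (1 - q)) ^ j) := by
    intro j
    rw [fW, show j + (n + 1 + k) - 1 = j + n + k by omega,
      show j + (n + 1 + k) - (k + 1) = j + n by omega,
      show j + (n + 1 + k) - (n + 1) = j + k by omega, mul_pow, mul_pow]
    ring
  rw [tsum_ite_le_eq_tsum_add, tsum_congr hterm, tsum_mul_left,
    tsum_choose_mul_geometric_of_norm_lt_one _ hx]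
  ring

end

/-- For the geometric `f_W` with parameter `c ∈ (0,1)` and sampling
probability `q ∈ (0,1)`, one has, for every `s ≥ 2` and `m ≥ 1`,
`A_{s,m} = (c(1-q))^{m-1} (1 - c(1-q))`; in particular `A_{s,·}` is the geometric
probability mass function with parameter `c(1-q)` and does not depend on `s`. -/
theorem stmt7 (q c : ℝ) (hq0 : 0 < q) (hq1 : q < 1) (hc0 : 0 < c) (hc1 : c < 1) :
    ∀ s m : ℕ, 2 ≤ s → 1 ≤ m →
      A q c s m = (c * (1 - q)) ^ (m - 1) * (1 - c * (1 - q)) := by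
  intro s m hs hm
  obtain ⟨n, rfl⟩ : ∃ n, s = n + 1 := ⟨s - 1, by omega⟩
  obtain ⟨k, rfl⟩ : ∃ k, m = k + 1 := ⟨m - 1, by omega⟩
  have hx0 : 0 < c * (1 - q) := mul_pos hc0 (by linarith)
  have hx1 : c * (1 - q) < 1 := by nlinarith
  have hx : ‖c * (1 - q)‖ < 1 := by rwa [Real.norm_of_nonneg hx0.le]
  simp only [A, ← add_assoc, Nat.add_sub_cancel]
  rw [fWq_succ hx, tsum_fW_mul_choose_succ hx]
  have hx_ne : 1 - c * (1 - q) ≠ 0 := by linarith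
  have hc_ne : 1 - c ≠ 0 := by linarith
  field_simp
  ring

end Stmt7
end

section
/- Let q, c ∈ (0,1) and let f_W(w) = c^{w−1}(1−c) for w ≥ 1 (geometric distribution with parameter c). Define f_{W_q}(s) = Σ_{w=s}^∞ C(w,s) q^s (1−q)^{w−s} f_W(w), for s ≥ 2 and m ≥ 1 let A_{s,m} = (q^s / f_{W_q}(s)) Σ_{w=s+m−1}^∞ f_W(w) C(w−m, s−1) (1−q)^{w−s}, and for n ≥ 1, (m_1,...,m_n) ∈ ℕ_{≥1}^n with m = m_1+...+m_n and s ≥ n+1 let B_{s,(m_1,...,m_n)} = (q^s / f_{W_q}(s)) Σ_{w=s+m−n}^∞ f_W(w) C(w−m, s−n) (1−q)^{w−s}. Then for all such s, n and (m_1,...,m_n), B_{s,(m_1,...,m_n)} = A_{s,m_1} ⋯ A_{s,m_n}. -/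
namespace Stmt8

/-- `f_W(w) = c^{w-1}(1-c)`, the geometric distribution with parameter `c` on the
positive integers (its value at `0` is irrelevant in all sums below). -/
noncomputable def fW (c : ℝ) (w : ℕ) : ℝ := c ^ (w - 1) * (1 - c)

/-- `f_{W_q}(s) = ∑_{w=s}^∞ C(w,s) q^s (1-q)^{w-s} f_W(w)`. -/
noncomputable def fWq (q c : ℝ) (s : ℕ) : ℝ :=
  ∑' w : ℕ, if s ≤ w then (w.choose s : ℝ) * q ^ s * (1 - q) ^ (w - s) * fW c w else 0

/-- `A_{s,m} = (q^s / f_{W_q}(s)) ∑_{w=s+m-1}^∞ f_W(w) C(w-m, s-1) (1-q)^{w-s}`. -/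
noncomputable def A (q c : ℝ) (s m : ℕ) : ℝ :=
  q ^ s / fWq q c s *
    ∑' w : ℕ, if s + m - 1 ≤ w then
      fW c w * ((w - m).choose (s - 1) : ℝ) * (1 - q) ^ (w - s) else 0

/-- `B_{s,(m_1,…,m_n)} = (q^s / f_{W_q}(s)) ∑_{w=s+m-n}^∞ f_W(w) C(w-m, s-n)
(1-q)^{w-s}` with `m = m_1 + ⋯ + m_n`. -/
noncomputable def B (q c : ℝ) (s : ℕ) {n : ℕ} (m : Fin n → ℕ) : ℝ :=
  q ^ s / fWq q c s *
    ∑' w : ℕ, if s + (∑ j, m j) - n ≤ w then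
      fW c w * ((w - ∑ j, m j).choose (s - n) : ℝ) * (1 - q) ^ (w - s) else 0

/-! Put `r = c(1-q)`. Started at its first nonzero term, each of the series defining
`f_{W_q}(s)` and `B` is a multiple of a negative binomial series `∑ C(k+j, j) r^k`. The closed
forms show `B_{s,(m_1,…,m_n)} = (1-r)^n r^{M-n}` with `M = m_1 + ⋯ + m_n`, so it depends on
`m` only through `M`; `A` is the case `n = 1`, and the product `∏ (1-r) r^{m_j-1}` is the same
expression. -/

theorem tsum_ite_le_eq_tsum_add {α : Type*} [AddCommMonoid α] [TopologicalSpace α]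
    (f : ℕ → α) (a : ℕ) :
    ∑' w : ℕ, (if a ≤ w then f w else 0) = ∑' k : ℕ, f (k + a) := by
  have hsupp : Function.support (fun w => if a ≤ w then f w else 0) ⊆ Set.range (· + a) := by
    intro w hw
    by_cases h : a ≤ w
    · exact ⟨w - a, Nat.sub_add_cancel h⟩
    · exact absurd (if_neg h) hw
  simpa using ((add_left_injective a).tsum_eq hsupp).symm

section Geometric

variable {q c : ℝ}

theorem norm_mul_one_sub_lt_one (hq0 : 0 < q) (hq1 : q < 1) (hc0 : 0 < c) (hc1 : c < 1) :
    ‖c * (1 - q)‖ < 1 := by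
  rw [Real.norm_eq_abs, abs_of_pos (by nlinarith)]
  nlinarith

/-- The negative binomial series `∑ C(k+j, j) r^k = (1-r)^{-(j+1)}` at `r = c(1-q)`. -/
theorem tsum_fW_mul_choose (hq0 : 0 < q) (hq1 : q < 1) (hc0 : 0 < c) (hc1 : c < 1)
    {a : ℕ} (ha : 1 ≤ a) (b j : ℕ) :
    ∑' k : ℕ, fW c (k + a + b) * ((k + j).choose j : ℝ) * (1 - q) ^ (k + b)
      = (1 - c) * c ^ (a - 1) * (c * (1 - q)) ^ b / (1 - c * (1 - q)) ^ (j + 1) := by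
  have hterm : ∀ k : ℕ, fW c (k + a + b) * ((k + j).choose j : ℝ) * (1 - q) ^ (k + b)
      = (1 - c) * c ^ (a - 1) * (c * (1 - q)) ^ b *
          (((k + j).choose j : ℝ) * (c * (1 - q)) ^ k) := by
    intro k
    rw [fW, show k + a + b - 1 = k + (a - 1) + b by omega, pow_add, pow_add, mul_pow, mul_pow]
    ring
  simp_rw [hterm]
  rw [tsum_mul_left, tsum_choose_mul_geometric_of_norm_lt_one j
    (norm_mul_one_sub_lt_one hq0 hq1 hc0 hc1), mul_one_div]

theorem fWq_eq (hq0 : 0 < q) (hq1 : q < 1) (hc0 : 0 < c) (hc1 : c < 1)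
    {s : ℕ} (hs : 1 ≤ s) :
    fWq q c s = q ^ s * ((1 - c) * c ^ (s - 1) / (1 - c * (1 - q)) ^ (s + 1)) := by
  have hterm : ∀ k : ℕ, ((k + s).choose s : ℝ) * q ^ s * (1 - q) ^ (k + s - s) * fW c (k + s)
      = q ^ s * (fW c (k + s + 0) * ((k + s).choose s : ℝ) * (1 - q) ^ (k + 0)) := by
    intro k
    rw [Nat.add_sub_cancel, add_zero, add_zero]
    ring
  rw [fWq, tsum_ite_le_eq_tsum_add]
  simp_rw [hterm]
  rw [tsum_mul_left, tsum_fW_mul_choose hq0 hq1 hc0 hc1 hs, pow_zero, mul_one]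

theorem B_eq_pow_mul_pow (hq0 : 0 < q) (hq1 : q < 1) (hc0 : 0 < c) (hc1 : c < 1)
    {n : ℕ} (m : Fin n → ℕ) (hm : n ≤ ∑ j, m j) {s : ℕ} (hs : n < s) :
    B q c s m = (1 - c * (1 - q)) ^ n * (c * (1 - q)) ^ ((∑ j, m j) - n) := by
  rw [B, tsum_ite_le_eq_tsum_add]
  set M := ∑ j, m j
  have hterm : ∀ k : ℕ, fW c (k + (s + M - n)) * ((k + (s + M - n) - M).choose (s - n) : ℝ)
        * (1 - q) ^ (k + (s + M - n) - s)
      = fW c (k + s + (M - n)) * ((k + (s - n)).choose (s - n) : ℝ)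
          * (1 - q) ^ (k + (M - n)) := by
    intro k
    rw [show k + (s + M - n) - M = k + (s - n) by omega,
      show k + (s + M - n) - s = k + (M - n) by omega,
      show k + (s + M - n) = k + s + (M - n) by omega]
  have hpow : (1 - c * (1 - q)) ^ (s + 1)
      = (1 - c * (1 - q)) ^ n * (1 - c * (1 - q)) ^ (s - n + 1) := by
    rw [← pow_add]
    congr 1
    omega
  have hq : q ^ s ≠ 0 := pow_ne_zero _ hq0.ne'
  have hc : 1 - c ≠ 0 := by linarith
  have hcs : c ^ (s - 1) ≠ 0 := pow_ne_zero _ hc0.ne'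
  have hr : (1 - c * (1 - q)) ^ (s - n + 1) ≠ 0 := pow_ne_zero _ (by nlinarith)
  simp_rw [hterm]
  rw [tsum_fW_mul_choose hq0 hq1 hc0 hc1 (by omega), fWq_eq hq0 hq1 hc0 hc1 (by omega), hpow]
  field_simp

theorem A_eq_mul_pow (hq0 : 0 < q) (hq1 : q < 1) (hc0 : 0 < c) (hc1 : c < 1)
    {m : ℕ} (hm : 1 ≤ m) {s : ℕ} (hs : 1 < s) :
    A q c s m = (1 - c * (1 - q)) * (c * (1 - q)) ^ (m - 1) := by
  have hAB : A q c s m = B q c s ![m] := by simp [A, B]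
  simpa using hAB.trans (B_eq_pow_mul_pow hq0 hq1 hc0 hc1 ![m] (by simpa using hm) hs)

end Geometric

/-- For the geometric `f_W` with parameter `c ∈ (0,1)` and sampling
probability `q ∈ (0,1)`: for every `n ≥ 1`, every `(m_1,…,m_n)` with all `m_j ≥ 1`
and every `s ≥ n + 1`, `B_{s,(m_1,…,m_n)} = A_{s,m_1} ⋯ A_{s,m_n}`. -/
theorem stmt8 (q c : ℝ) (hq0 : 0 < q) (hq1 : q < 1) (hc0 : 0 < c) (hc1 : c < 1) :
    ∀ (n : ℕ), 1 ≤ n → ∀ (m : Fin n → ℕ), (∀ j, 1 ≤ m j) → ∀ s : ℕ, n + 1 ≤ s →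
      B q c s m = ∏ j, A q c s (m j) := by
  intro n _ m hm s hs
  have hsum : n ≤ ∑ j, m j := by
    simpa using Finset.sum_le_sum fun j (_ : j ∈ Finset.univ) => hm j
  rw [B_eq_pow_mul_pow hq0 hq1 hc0 hc1 m hsum hs,
    Finset.prod_congr rfl fun j _ => A_eq_mul_pow hq0 hq1 hc0 hc1 (hm j) (by omega),
    Finset.prod_mul_distrib, Finset.prod_const, Finset.prod_pow_eq_pow_sum, Finset.card_univ,
    Fintype.card_fin, Finset.sum_tsub_distrib _ fun j _ => hm j]
  simp

end Stmt8
end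

section
/- Let q ∈ (0,1), α > 0, c > 0, and let f_W be a probability mass function on the positive integers with f_W(w) ~ c α w^{−α−1} as w → ∞ (i.e., the ratio of the two sides tends to 1). Define f_{W_q}(s) = Σ_{w=s}^∞ C(w,s) q^s (1−q)^{w−s} f_W(w), P(W_q ≥ 2) = Σ_{s=2}^∞ f_{W_q}(s), and C_m = (q^2 / P(W_q ≥ 2)) Σ_{w=m+1}^∞ f_W(w) (w−m) (1−q)^{w−m−1} for m ≥ 1. Then C_m ~ (c α / P(W_q ≥ 2)) m^{−α−1} as m → ∞. -/
/-!
Substituting `w = m + 1 + j`, the series in `C_m` is `∑_j f_W(m+1+j) (j+1) (1-q)^j`.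
For fixed `j`, `f_W(m+1+j) ~ cα m^{-α-1}`, and `f_W(w) = O(m^{-α-1})` uniformly in `w ≥ m`
because `w^{-α-1}` is decreasing; so dominated convergence gives
`∑ ~ cα m^{-α-1} ∑_j (j+1)(1-q)^j = cα m^{-α-1} / q²`.
The factor `1 / P(W_q ≥ 2)` then cancels, provided `P(W_q ≥ 2) > 0`: `f_W` is positive at some
`w ≥ 2`, which gives `f_{W_q}(2) > 0`, and the series defining `P(W_q ≥ 2)` converges because
binomial thinning preserves total mass (binomial theorem plus Tonelli).
-/

open Filter

namespace Stmt9

/-- `f_{W_q}(s) = ∑_{w=s}^∞ C(w,s) q^s (1-q)^{w-s} f_W(w)`. -/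
noncomputable def fWq (q : ℝ) (fW : ℕ → ℝ) (s : ℕ) : ℝ :=
  ∑' w : ℕ, if s ≤ w then (w.choose s : ℝ) * q ^ s * (1 - q) ^ (w - s) * fW w else 0

/-- `P(W_q ≥ 2) = ∑_{s=2}^∞ f_{W_q}(s)`. -/
noncomputable def PWq2 (q : ℝ) (fW : ℕ → ℝ) : ℝ :=
  ∑' s : ℕ, if 2 ≤ s then fWq q fW s else 0

/-- `C_m = (q^2 / P(W_q ≥ 2)) ∑_{w=m+1}^∞ f_W(w) (w-m) (1-q)^{w-m-1}`. -/
noncomputable def Cm (q : ℝ) (fW : ℕ → ℝ) (m : ℕ) : ℝ :=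
  q ^ 2 / PWq2 q fW *
    ∑' w : ℕ, if m + 1 ≤ w then fW w * ((w : ℝ) - (m : ℝ)) * (1 - q) ^ (w - m - 1) else 0

end Stmt9

open Topology Asymptotics

theorem tsum_ite_le_eq_tsum_add {M : Type*} [AddCommMonoid M] [TopologicalSpace M]
    (k : ℕ) (f : ℕ → M) :
    ∑' w, (if k ≤ w then f w else 0) = ∑' j, f (k + j) := by
  rw [← (add_right_injective k).tsum_eq]
  · simp
  · intro w hw
    by_cases h : k ≤ w
    · exact ⟨w - k, Nat.add_sub_cancel' h⟩
    · simp [h] at hw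

section Tail

variable {f : ℕ → ℝ} {C p : ℝ}

theorem exists_forall_ge_norm_le_of_isBigO_rpow (hp : p ≤ 0)
    (hf : f =O[atTop] fun w : ℕ => (w : ℝ) ^ p) :
    ∃ K, ∀ᶠ m : ℕ in atTop, ∀ w ≥ m, ‖f w‖ ≤ K * (m : ℝ) ^ p := by
  obtain ⟨K, hK, hfK⟩ := hf.exists_pos
  obtain ⟨M, hM⟩ := eventually_atTop.mp hfK.bound
  refine ⟨K, eventually_atTop.mpr ⟨max M 1, fun m hm w hw => ?_⟩⟩
  have hm : (0 : ℝ) < m := by exact_mod_cast (le_of_max_le_right hm)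
  calc ‖f w‖ ≤ K * ‖(w : ℝ) ^ p‖ := hM w (by omega)
    _ = K * (w : ℝ) ^ p := by rw [Real.norm_of_nonneg (by positivity)]
    _ ≤ K * (m : ℝ) ^ p := mul_le_mul_of_nonneg_left
      (Real.rpow_le_rpow_of_nonpos hm (by exact_mod_cast hw) hp) hK.le

theorem Asymptotics.IsEquivalent.nat_add_rpow (hf : f ~[atTop] fun w : ℕ => C * (w : ℝ) ^ p)
    (n : ℕ) :
    (fun m => f (m + n)) ~[atTop] fun m : ℕ => C * (m : ℝ) ^ p := by
  have hshift : (fun m : ℕ => ((m + n : ℕ) : ℝ)) ~[atTop] fun m : ℕ => (m : ℝ) := by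
    push_cast
    exact IsEquivalent.refl.add_const_of_norm_tendsto_atTop
      (tendsto_norm_atTop_atTop.comp tendsto_natCast_atTop_atTop)
  exact (hf.comp_tendsto (tendsto_add_atTop_nat n)).trans
    (IsEquivalent.refl.mul (hshift.rpow fun m => by positivity))

theorem tendsto_tsum_mul_div_rpow {a : ℕ → ℝ} {A : ℝ} (hC : 0 < C) (hp : p ≤ 0)
    (ha0 : ∀ j, 0 ≤ a j) (ha : HasSum a A)
    (hf : f ~[atTop] fun w : ℕ => C * (w : ℝ) ^ p) :
    Tendsto (fun m : ℕ => (∑' j, f (m + 1 + j) * a j) / (C * (m : ℝ) ^ p)) atTop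
      (𝓝 A) := by
  have hpos : ∀ᶠ m : ℕ in atTop, 0 < C * (m : ℝ) ^ p :=
    (eventually_gt_atTop 0).mono fun m hm => by positivity
  obtain ⟨K, hK⟩ := exists_forall_ge_norm_le_of_isBigO_rpow hp
    (hf.isBigO.trans (isBigO_const_mul_self C _ _))
  have hpoint (j : ℕ) :
      Tendsto (fun m : ℕ => f (m + 1 + j) * a j / (C * (m : ℝ) ^ p)) atTop (𝓝 (a j)) := by
    have := ((isEquivalent_iff_tendsto_one (hpos.mono fun m hm => hm.ne')).mp
      (hf.nat_add_rpow (1 + j))).mul_const (a j)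
    rw [one_mul] at this
    refine this.congr fun m => ?_
    simp only [Pi.div_apply, ← add_assoc]
    ring
  have hbound : ∀ᶠ m : ℕ in atTop, ∀ j,
      ‖f (m + 1 + j) * a j / (C * (m : ℝ) ^ p)‖ ≤ K / C * a j := by
    filter_upwards [hK, hpos] with m hm hCm j
    rw [norm_div, norm_mul, Real.norm_of_nonneg (ha0 j), Real.norm_of_nonneg hCm.le,
      div_le_iff₀ hCm]
    calc ‖f (m + 1 + j)‖ * a j ≤ K * (m : ℝ) ^ p * a j := by
          gcongr
          · exact ha0 j
          · exact hm _ (by omega)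
      _ = K / C * a j * (C * (m : ℝ) ^ p) := by field_simp
  rw [← ha.tsum_eq]
  refine (tendsto_tsum_of_dominated_convergence (ha.summable.mul_left (K / C)) hpoint
    hbound).congr fun m => ?_
  exact tsum_div_const

end Tail

namespace Stmt9

noncomputable def thinningTerm (q : ℝ) (fW : ℕ → ℝ) (w s : ℕ) : ℝ :=
  if s ≤ w then (w.choose s : ℝ) * q ^ s * (1 - q) ^ (w - s) * fW w else 0

theorem fWq_eq_tsum_thinningTerm (q : ℝ) (fW : ℕ → ℝ) (s : ℕ) :
    fWq q fW s = ∑' w, thinningTerm q fW w s :=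
  rfl

section Thinning

variable {q : ℝ} {fW : ℕ → ℝ}

theorem thinningTerm_nonneg (hq0 : 0 ≤ q) (hq1 : q ≤ 1) (hfW : ∀ w, 0 ≤ fW w) (w s : ℕ) :
    0 ≤ thinningTerm q fW w s := by
  have hw := hfW w
  have hq : 0 ≤ 1 - q := by linarith
  unfold thinningTerm
  split_ifs <;> positivity

theorem hasSum_thinningTerm (q : ℝ) (fW : ℕ → ℝ) (w : ℕ) :
    HasSum (thinningTerm q fW w) (fW w) := by
  have hsupp : ∀ s ∉ Finset.range (w + 1), thinningTerm q fW w s = 0 := fun s hs => by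
    simp only [Finset.mem_range] at hs
    simp [thinningTerm, show ¬s ≤ w by omega]
  have hbinom : ∑ s ∈ Finset.range (w + 1), thinningTerm q fW w s = fW w :=
    calc _ = (q + (1 - q)) ^ w * fW w := by
          rw [add_pow, Finset.sum_mul]
          refine Finset.sum_congr rfl fun s hs => ?_
          rw [thinningTerm, if_pos (Nat.lt_succ_iff.mp (Finset.mem_range.mp hs))]
          ring
      _ = fW w := by simp
  exact hbinom ▸ hasSum_sum_of_ne_finset_zero hsupp

theorem thinningTerm_le (hq0 : 0 ≤ q) (hq1 : q ≤ 1) (hfW : ∀ w, 0 ≤ fW w) (w s : ℕ) :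
    thinningTerm q fW w s ≤ fW w :=
  le_hasSum (hasSum_thinningTerm q fW w) s fun s' _ => thinningTerm_nonneg hq0 hq1 hfW w s'

theorem hasSum_fWq (hq0 : 0 ≤ q) (hq1 : q ≤ 1) (hfW : ∀ w, 0 ≤ fW w) {a : ℝ}
    (h : HasSum fW a) : HasSum (fWq q fW) a := by
  set g : ℕ × ℕ → ℝ := fun x => thinningTerm q fW x.1 x.2
  have hg : Summable g :=
    (summable_prod_of_nonneg fun x => thinningTerm_nonneg hq0 hq1 hfW x.1 x.2).mpr
      ⟨fun w => (hasSum_thinningTerm q fW w).summable,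
        h.summable.congr fun w => (hasSum_thinningTerm q fW w).tsum_eq.symm⟩
  have hga : HasSum g a := by
    convert hg.hasSum
    exact h.unique (hg.hasSum.prod_fiberwise (hasSum_thinningTerm q fW))
  have hswap : HasSum (g ∘ Equiv.prodComm ℕ ℕ) a :=
    (Equiv.prodComm ℕ ℕ).hasSum_iff.mpr hga
  simp only [funext (fWq_eq_tsum_thinningTerm q fW)]
  exact hswap.prod_fiberwise fun s => (hg.prod_symm.prod_factor s).hasSum

theorem PWq2_pos (hq0 : 0 < q) (hq1 : q < 1) (hfW : ∀ w, 0 ≤ fW w) (hsum : Summable fW)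
    {w₀ : ℕ} (hw₀ : 2 ≤ w₀) (hpos : 0 < fW w₀) : 0 < PWq2 q fW := by
  obtain ⟨a, ha⟩ := hsum
  have hWq := hasSum_fWq hq0.le hq1.le hfW ha
  have hterm : 0 < thinningTerm q fW w₀ 2 := by
    have hq : 0 < 1 - q := by linarith
    have hchoose := Nat.choose_pos hw₀
    simp only [thinningTerm, if_pos hw₀]
    positivity
  calc 0 < thinningTerm q fW w₀ 2 := hterm
    _ ≤ fWq q fW 2 := fWq_eq_tsum_thinningTerm q fW 2 ▸
      (ha.summable.of_nonneg_of_le (thinningTerm_nonneg hq0.le hq1.le hfW · 2)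
        (thinningTerm_le hq0.le hq1.le hfW · 2)).le_tsum w₀ fun w _ =>
          thinningTerm_nonneg hq0.le hq1.le hfW w 2
    _ ≤ ∑' j, fWq q fW (2 + j) :=
      (hWq.summable.comp_injective (add_right_injective 2)).le_tsum 0 fun j _ =>
        tsum_nonneg fun w => thinningTerm_nonneg hq0.le hq1.le hfW w _
    _ = PWq2 q fW := (tsum_ite_le_eq_tsum_add 2 _).symm

end Thinning

theorem Cm_eq (q : ℝ) (fW : ℕ → ℝ) (m : ℕ) :
    Cm q fW m = q ^ 2 / PWq2 q fW * ∑' j, fW (m + 1 + j) * (((j : ℝ) + 1) * (1 - q) ^ j) := by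
  rw [Cm, tsum_ite_le_eq_tsum_add]
  congr 1
  refine tsum_congr fun j => ?_
  rw [show m + 1 + j - m - 1 = j by omega]
  push_cast
  ring

theorem stmt9_general (q α c : ℝ) (hq0 : 0 < q) (hq1 : q < 1) (hα : 0 < α) (hc : 0 < c)
    (fW : ℕ → ℝ) (hfWnn : ∀ w, 0 ≤ fW w) (hfWsum : HasSum fW 1)
    (hasymp : Tendsto (fun w : ℕ => fW w / (c * α * (w : ℝ) ^ (-α - 1)))
      atTop (nhds 1)) :
    Tendsto (fun m : ℕ => Cm q fW m / (c * α / PWq2 q fW * (m : ℝ) ^ (-α - 1)))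
      atTop (nhds 1) := by
  have hP : PWq2 q fW ≠ 0 := by
    obtain ⟨w₀, hw₀, hne⟩ :=
      ((eventually_ge_atTop 2).and (hasymp.eventually_ne one_ne_zero)).exists
    have hpos : 0 < fW w₀ := (hfWnn w₀).lt_of_ne' fun h => hne (by rw [h, zero_div])
    exact (PWq2_pos hq0 hq1 hfWnn hfWsum.summable hw₀ hpos).ne'
  have hgeom : HasSum (fun j : ℕ => ((j : ℝ) + 1) * (1 - q) ^ j) (1 / q ^ 2) := by
    simpa using hasSum_choose_mul_geometric_of_norm_lt_one 1
      (show ‖1 - q‖ < 1 by rw [Real.norm_eq_abs, abs_lt]; constructor <;> linarith)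
  have htail := (tendsto_tsum_mul_div_rpow (mul_pos hc hα) (by linarith)
    (fun j => mul_nonneg (by positivity) (pow_nonneg (by linarith) j)) hgeom
    (isEquivalent_of_tendsto_one hasymp)).const_mul (q ^ 2)
  rw [mul_one_div_cancel (pow_ne_zero 2 hq0.ne')] at htail
  refine htail.congr fun m => ?_
  rw [Cm_eq]
  field_simp

/-- Let `q ∈ (0,1)`, `α > 0`, `c > 0`, and let `f_W` be a probability
mass function on the positive integers with `f_W(w) ∼ c α w^{-α-1}` as `w → ∞`.
Then `C_m ∼ (c α / P(W_q ≥ 2)) m^{-α-1}` as `m → ∞`. -/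
theorem stmt9 (q α c : ℝ) (hq0 : 0 < q) (hq1 : q < 1) (hα : 0 < α) (hc : 0 < c)
    (fW : ℕ → ℝ) (hfW0 : fW 0 = 0) (hfWnn : ∀ w, 0 ≤ fW w) (hfWsum : HasSum fW 1)
    (hasymp : Tendsto (fun w : ℕ => fW w / (c * α * (w : ℝ) ^ (-α - 1)))
      atTop (nhds 1)) :
    Tendsto (fun m : ℕ => Cm q fW m / (c * α / PWq2 q fW * (m : ℝ) ^ (-α - 1)))
      atTop (nhds 1) :=
  stmt9_general q α c hq0 hq1 hα hc fW hfWnn hfWsum hasymp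

end Stmt9
end

section
/- Let q ∈ (0,1) and let f_W be a probability mass function on the positive integers such that Σ_{w=n}^∞ C(w,n) 2^{w−n} (1−q)^{w−n} f_W(w) < ∞ for every n ≥ 1. Define f_{W_q}(s) = Σ_{w=s}^∞ C(w,s) q^s (1−q)^{w−s} f_W(w). Then for every n ≥ 1, Σ_{s=n}^∞ C(s,n) (1−q)^{s−n} q^{−s} f_{W_q}(s) = Σ_{w=n}^∞ C(w,n) 2^{w−n} (1−q)^{w−n} f_W(w) < ∞, and for every w ≥ 1 the inversion formula f_W(w) = Σ_{s=w}^∞ C(s,w) (−1)^{s−w} q^{−s} (1−q)^{s−w} f_{W_q}(s) holds, the series converging absolutely. -/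
/-!
Both claims come from one double series
`∑_w ∑_s C(w,s) C(s,n) x^(s-n) (1-q)^(w-n) f_W(w)`.
Summing over `w` first gives `∑_s C(s,n) x^(s-n) (1-q)^(s-n) q^(-s) f_{W_q}(s)`; summing over `s`
first gives `∑_w C(w,n) (1+x)^(w-n) (1-q)^(w-n) f_W(w)`, because
`C(w,s) C(s,n) = C(w,n) C(w-n,s-n)` and the binomial theorem. For `|x| = 1` the hypothesis makes
the double series absolutely summable, so the two orders agree. Then `x = 1` is the first claim,
and `x = -1` is the inversion formula, since `(1 + x)^(w-n)` kills every term but `w = n`.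
-/

open Finset

namespace Stmt10

/-- `f_{W_q}(s) = ∑_{w=s}^∞ C(w,s) q^s (1-q)^{w-s} f_W(w)`. -/
noncomputable def fWq (q : ℝ) (fW : ℕ → ℝ) (s : ℕ) : ℝ :=
  ∑' w : ℕ, if s ≤ w then (w.choose s : ℝ) * q ^ s * (1 - q) ^ (w - s) * fW w else 0

theorem sum_range_choose_mul_choose_mul_pow {R : Type*} [CommSemiring R] (x : R) (n w : ℕ) :
    ∑ s ∈ range (w + 1), (w.choose s : R) * s.choose n * x ^ (s - n)
      = w.choose n * (1 + x) ^ (w - n) := by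
  rcases lt_or_ge w n with hwn | hnw
  · rw [Nat.choose_eq_zero_of_lt hwn, Nat.cast_zero, zero_mul]
    refine sum_eq_zero fun s hs => ?_
    rw [Nat.choose_eq_zero_of_lt (by rw [mem_range] at hs; omega : s < n)]
    simp
  · obtain ⟨m, rfl⟩ := Nat.exists_eq_add_of_le hnw
    rw [add_assoc, sum_range_add, sum_eq_zero fun s hs => by
      simp [Nat.choose_eq_zero_of_lt (mem_range.mp hs)], zero_add, Nat.add_sub_cancel_left,
      add_comm 1 x, add_pow, mul_sum]
    refine sum_congr rfl fun k _ => ?_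
    have h := Nat.choose_mul (n := n + m) (Nat.le_add_right n k)
    rw [Nat.add_sub_cancel_left, Nat.add_sub_cancel_left] at h
    rw [Nat.add_sub_cancel_left, one_pow, mul_one, ← Nat.cast_mul, h]
    push_cast
    ring

theorem summable_abs_tsum_of_summable {α β : Type*} {f : α × β → ℝ} (hf : Summable f) :
    Summable fun b => |∑' a, f (a, b)| := by
  have hswap : Summable fun p : β × α => |f p.swap| := hf.abs.prod_symm
  have hcols : Summable fun b => ∑' a, |f (a, b)| := hswap.prod
  refine Summable.of_nonneg_of_le (fun _ => abs_nonneg _) (fun b => ?_) hcols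
  have hcol : Summable fun a => ‖f (a, b)‖ := hswap.prod_factor b
  exact norm_tsum_le_tsum_norm hcol

section BinomKernel

variable (q x : ℝ) (a : ℕ → ℝ) (n : ℕ)

/-- No indicator of `n ≤ s ≤ w` is needed: the binomial coefficients vanish outside that range,
which also makes the truncated subtractions harmless. -/
def binomKernel : ℕ × ℕ → ℝ
  | (w, s) => (w.choose s : ℝ) * s.choose n * x ^ (s - n) * ((1 - q) ^ (w - n) * a w)

theorem binomKernel_eq_zero_of_lt {w s : ℕ} (hws : w < s) : binomKernel q x a n (w, s) = 0 := by
  simp [binomKernel, Nat.choose_eq_zero_of_lt hws]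

theorem tsum_binomKernel_row (w : ℕ) :
    ∑' s, binomKernel q x a n (w, s)
      = if n ≤ w then (w.choose n : ℝ) * (1 + x) ^ (w - n) * (1 - q) ^ (w - n) * a w else 0 := by
  rw [tsum_eq_sum (s := range (w + 1)) fun s hs =>
    binomKernel_eq_zero_of_lt q x a n (by rw [mem_range] at hs; omega)]
  simp only [binomKernel]
  rw [← sum_mul, sum_range_choose_mul_choose_mul_pow]
  split_ifs with hnw
  · ring
  · simp [Nat.choose_eq_zero_of_lt (not_le.mp hnw)]

theorem tsum_binomKernel_col (hq : q ≠ 0) (s : ℕ) :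
    ∑' w, binomKernel q x a n (w, s)
      = if n ≤ s then
          (s.choose n : ℝ) * x ^ (s - n) * (1 - q) ^ (s - n) / q ^ s * fWq q a s
        else 0 := by
  split_ifs with hns
  · rw [fWq, ← tsum_mul_left]
    refine tsum_congr fun w => ?_
    split_ifs with hsw
    · rw [binomKernel, show w - n = (s - n) + (w - s) by omega, pow_add]
      field_simp
    · rw [binomKernel_eq_zero_of_lt q x a n (not_le.mp hsw), mul_zero]
  · simp [binomKernel, Nat.choose_eq_zero_of_lt (not_le.mp hns)]

theorem abs_binomKernel (hq1 : q ≤ 1) (ha : ∀ w, 0 ≤ a w) (p : ℕ × ℕ) :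
    |binomKernel q x a n p| = binomKernel q |x| a n p := by
  obtain ⟨w, s⟩ := p
  have h1q : 0 ≤ 1 - q := by linarith
  simp [binomKernel, abs_mul, abs_pow, abs_of_nonneg h1q, abs_of_nonneg (ha w)]

theorem summable_binomKernel (hq1 : q ≤ 1) (ha : ∀ w, 0 ≤ a w)
    (h : Summable fun w =>
      if n ≤ w then (w.choose n : ℝ) * (1 + |x|) ^ (w - n) * (1 - q) ^ (w - n) * a w else 0) :
    Summable (binomKernel q x a n) := by
  refine Summable.of_abs ?_
  simp_rw [abs_binomKernel q x a n hq1 ha]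
  refine (summable_prod_of_nonneg fun p => ?_).mpr ⟨fun w => ?_, ?_⟩
  · rw [Pi.zero_apply, ← abs_binomKernel q x a n hq1 ha]
    exact abs_nonneg _
  · exact summable_of_ne_finset_zero (s := range (w + 1)) fun s hs =>
      binomKernel_eq_zero_of_lt q |x| a n (by rw [mem_range] at hs; omega)
  · simpa only [tsum_binomKernel_row] using h

theorem summable_abs_and_tsum_eq_of_summable_binomKernel (hq : q ≠ 0)
    (hK : Summable (binomKernel q x a n)) :
    Summable (fun s => |if n ≤ s then
        (s.choose n : ℝ) * x ^ (s - n) * (1 - q) ^ (s - n) / q ^ s * fWq q a s else 0|)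
    ∧ ∑' s, (if n ≤ s then
        (s.choose n : ℝ) * x ^ (s - n) * (1 - q) ^ (s - n) / q ^ s * fWq q a s else 0)
      = ∑' w, if n ≤ w then (w.choose n : ℝ) * (1 + x) ^ (w - n) * (1 - q) ^ (w - n) * a w
          else 0 := by
  simp_rw [← tsum_binomKernel_col q x a n hq, ← tsum_binomKernel_row]
  exact ⟨summable_abs_tsum_of_summable hK,
    Summable.tsum_comm (f := fun w s => binomKernel q x a n (w, s)) hK⟩

end BinomKernel

theorem stmt10_general (q : ℝ) (hq0 : 0 < q) (hq1 : q < 1)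
    (fW : ℕ → ℝ) (hfWnn : ∀ w, 0 ≤ fW w)
    (hfin : ∀ n : ℕ, 1 ≤ n →
      Summable (fun w : ℕ =>
        if n ≤ w then (w.choose n : ℝ) * 2 ^ (w - n) * (1 - q) ^ (w - n) * fW w else 0)) :
    (∀ n : ℕ, 1 ≤ n →
      Summable (fun s : ℕ =>
        if n ≤ s then (s.choose n : ℝ) * (1 - q) ^ (s - n) / q ^ s * fWq q fW s else 0)
      ∧ (∑' s : ℕ,
          if n ≤ s then (s.choose n : ℝ) * (1 - q) ^ (s - n) / q ^ s * fWq q fW s else 0)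
        = ∑' w : ℕ,
            if n ≤ w then (w.choose n : ℝ) * 2 ^ (w - n) * (1 - q) ^ (w - n) * fW w else 0)
    ∧ (∀ w : ℕ, 1 ≤ w →
      Summable (fun s : ℕ =>
        |if w ≤ s then
            (s.choose w : ℝ) * (-1 : ℝ) ^ (s - w) * (1 - q) ^ (s - w) / q ^ s * fWq q fW s
          else 0|)
      ∧ fW w
        = ∑' s : ℕ,
            if w ≤ s then
              (s.choose w : ℝ) * (-1 : ℝ) ^ (s - w) * (1 - q) ^ (s - w) / q ^ s * fWq q fW s
            else 0) := by
  have hK : ∀ x : ℝ, |x| = 1 → ∀ n, 1 ≤ n → Summable (binomKernel q x fW n) :=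
    fun x hx n hn => summable_binomKernel q x fW n hq1.le hfWnn (by
      rw [hx, one_add_one_eq_two]
      exact hfin n hn)
  refine ⟨fun n hn => ?_, fun w hw => ?_⟩
  · obtain ⟨habs, hsum⟩ :=
      summable_abs_and_tsum_eq_of_summable_binomKernel q 1 fW n hq0.ne' (hK 1 abs_one n hn)
    simp only [one_pow, mul_one, one_add_one_eq_two] at habs hsum
    exact ⟨habs.of_abs, hsum⟩
  · obtain ⟨habs, hsum⟩ := summable_abs_and_tsum_eq_of_summable_binomKernel q (-1) fW w
      hq0.ne' (hK (-1) (by simp) w hw)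
    refine ⟨habs, ?_⟩
    rw [hsum, tsum_eq_single w fun v hvw => ?_]
    · simp
    · split_ifs with hwv
      · rw [add_neg_cancel, zero_pow (by omega), mul_zero, zero_mul, zero_mul]
      · rfl

/-- Let `q ∈ (0,1)` and let `f_W` be a probability mass function on
the positive integers such that `∑_{w=n}^∞ C(w,n) 2^{w-n} (1-q)^{w-n} f_W(w) < ∞` for
every `n ≥ 1`.  Then for every `n ≥ 1`,
`∑_{s=n}^∞ C(s,n) (1-q)^{s-n} q^{-s} f_{W_q}(s)
   = ∑_{w=n}^∞ C(w,n) 2^{w-n} (1-q)^{w-n} f_W(w) < ∞`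
(both series of nonnegative terms being summable), and for every `w ≥ 1` the inversion
formula `f_W(w) = ∑_{s=w}^∞ C(s,w) (-1)^{s-w} q^{-s} (1-q)^{s-w} f_{W_q}(s)` holds,
the series converging absolutely. -/
theorem stmt10 (q : ℝ) (hq0 : 0 < q) (hq1 : q < 1)
    (fW : ℕ → ℝ) (hfW0 : fW 0 = 0) (hfWnn : ∀ w, 0 ≤ fW w) (hfWsum : HasSum fW 1)
    (hfin : ∀ n : ℕ, 1 ≤ n →
      Summable (fun w : ℕ =>
        if n ≤ w then (w.choose n : ℝ) * 2 ^ (w - n) * (1 - q) ^ (w - n) * fW w else 0)) :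
    (∀ n : ℕ, 1 ≤ n →
      Summable (fun s : ℕ =>
        if n ≤ s then (s.choose n : ℝ) * (1 - q) ^ (s - n) / q ^ s * fWq q fW s else 0)
      ∧ (∑' s : ℕ,
          if n ≤ s then (s.choose n : ℝ) * (1 - q) ^ (s - n) / q ^ s * fWq q fW s else 0)
        = ∑' w : ℕ,
            if n ≤ w then (w.choose n : ℝ) * 2 ^ (w - n) * (1 - q) ^ (w - n) * fW w else 0)
    ∧ (∀ w : ℕ, 1 ≤ w →
      Summable (fun s : ℕ =>
        |if w ≤ s then
            (s.choose w : ℝ) * (-1 : ℝ) ^ (s - w) * (1 - q) ^ (s - w) / q ^ s * fWq q fW s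
          else 0|)
      ∧ fW w
        = ∑' s : ℕ,
            if w ≤ s then
              (s.choose w : ℝ) * (-1 : ℝ) ^ (s - w) * (1 - q) ^ (s - w) / q ^ s * fWq q fW s
            else 0) :=
  stmt10_general q hq0 hq1 fW hfWnn hfin

end Stmt10
end

section
/- Let q ∈ (0,1) and let z_1 satisfy max(0, 1−2q) < z_1 < min(1−q, 1/2). Let x = (x_n)_{n≥1} be a real sequence such that Σ_{i=n}^∞ C(i,n) (1−q)^{i−n} q^{−i} |x_i| < ∞ for every n ≥ 1. Define T^{(1)}(x)_n = Σ_{i=n}^∞ C(i,n) (x_i / q^i) (z_1 − (1−q))^{i−n}, T^{(2)}(x)_n = Σ_{i=n}^∞ C(i,n) T^{(1)}(x)_i (−z_1)^{i−n}, and S(x)_n = Σ_{i=n}^∞ C(i,n) (−1)^{i−n} q^{−i} (1−q)^{i−n} x_i. Then all of these series converge absolutely and T^{(2)}(x)_n = S(x)_n for every n ≥ 1. -/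
/-!
`T^{(1)}`, `T^{(2)}` and `S` are binomial transforms `(∑_{i ≥ n} C(i,n) y_i a^{i-n})_n` of
`y_i = x_i / q^i`, with parameters `a = z₁ - (1-q)`, `a = -z₁` and `a = -(1-q)`. Binomial
transforms compose additively in the parameter: exchanging the order of summation in
`∑_j C(j,n) a^{j-n} ∑_i C(i,j) b^{i-j} y_i` and using
`∑_{j=n}^{i} C(j,n) C(i,j) a^{j-n} b^{i-j} = C(i,n) (a+b)^{i-n}` gives the transform with
parameter `a + b`. The same computation with `|a|, |b|, |y|` bounds the double series by
`∑_i C(i,n) (|a|+|b|)^{i-n} |y_i|`, which justifies the exchange; for `0 < z₁ < 1-q` we have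
`|-z₁| + |z₁ - (1-q)| = 1-q`, so this majorant is the hypothesis on `x`.
-/

namespace Stmt11

/-- `T^{(1)}(x)_n = ∑_{i=n}^∞ C(i,n) (x_i / q^i) (z_1 - (1-q))^{i-n}`. -/
noncomputable def T1 (q z1 : ℝ) (x : ℕ → ℝ) (n : ℕ) : ℝ :=
  ∑' i : ℕ, if n ≤ i then (i.choose n : ℝ) * (x i / q ^ i) * (z1 - (1 - q)) ^ (i - n) else 0

/-- `T^{(2)}(x)_n = ∑_{i=n}^∞ C(i,n) T^{(1)}(x)_i (-z_1)^{i-n}`. -/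
noncomputable def T2 (q z1 : ℝ) (x : ℕ → ℝ) (n : ℕ) : ℝ :=
  ∑' i : ℕ, if n ≤ i then (i.choose n : ℝ) * T1 q z1 x i * (-z1) ^ (i - n) else 0

/-- `S(x)_n = ∑_{i=n}^∞ C(i,n) (-1)^{i-n} q^{-i} (1-q)^{i-n} x_i`. -/
noncomputable def S (q : ℝ) (x : ℕ → ℝ) (n : ℕ) : ℝ :=
  ∑' i : ℕ, if n ≤ i then (i.choose n : ℝ) * (-1 : ℝ) ^ (i - n) * (1 - q) ^ (i - n) / q ^ i * x i else 0

open Finset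

lemma sum_Icc_choose_mul_pow_mul_choose_mul_pow {n i : ℕ} (h : n ≤ i) (a b : ℝ) :
    ∑ j ∈ Icc n i, (j.choose n : ℝ) * a ^ (j - n) * ((i.choose j : ℝ) * b ^ (i - j))
      = i.choose n * (a + b) ^ (i - n) := by
  obtain ⟨m, rfl⟩ := Nat.exists_eq_add_of_le h
  have hterm : ∀ k ∈ range (m + 1),
      ((n + k).choose n : ℝ) * a ^ (n + k - n) *
          (((n + m).choose (n + k) : ℝ) * b ^ (n + m - (n + k)))
        = (n + m).choose n * (a ^ k * b ^ (m - k) * m.choose k) := by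
    intro k _
    have hchoose :
        ((n + m).choose (n + k) : ℝ) * (n + k).choose n = (n + m).choose n * m.choose k := by
      exact_mod_cast (Nat.choose_mul (n := n + m) (Nat.le_add_right n k)).trans (by simp)
    rw [Nat.add_sub_cancel_left, Nat.add_sub_add_left]
    linear_combination a ^ k * b ^ (m - k) * hchoose
  rw [← Ico_add_one_right_eq_Icc, sum_Ico_eq_sum_range, show n + m + 1 - n = m + 1 by omega,
    sum_congr rfl hterm, ← mul_sum, ← add_pow, Nat.add_sub_cancel_left]

noncomputable def binomialSummand (a : ℝ) (y : ℕ → ℝ) (n i : ℕ) : ℝ :=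
  if n ≤ i then (i.choose n : ℝ) * y i * a ^ (i - n) else 0

noncomputable def binomialTransform (a : ℝ) (y : ℕ → ℝ) (n : ℕ) : ℝ :=
  ∑' i, binomialSummand a y n i

section BinomialTransform

variable {a b c : ℝ} {y : ℕ → ℝ} {n : ℕ}

lemma binomialSummand_of_le {i : ℕ} (h : n ≤ i) :
    binomialSummand a y n i = (i.choose n : ℝ) * y i * a ^ (i - n) :=
  if_pos h

lemma binomialSummand_of_lt {i : ℕ} (h : i < n) : binomialSummand a y n i = 0 :=
  if_neg (not_le.mpr h)

lemma binomialSummand_eq_zero {i : ℕ} (h : y i = 0) : binomialSummand a y n i = 0 := by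
  simp [binomialSummand, h]

lemma binomialSummand_nonneg (ha : 0 ≤ a) (hy : ∀ i, 0 ≤ y i) (i : ℕ) :
    0 ≤ binomialSummand a y n i := by
  unfold binomialSummand
  split_ifs
  · exact mul_nonneg (mul_nonneg (Nat.cast_nonneg _) (hy i)) (pow_nonneg ha _)
  · exact le_rfl

lemma abs_binomialSummand (i : ℕ) :
    |binomialSummand a y n i| = binomialSummand |a| (fun k => |y k|) n i := by
  unfold binomialSummand
  split_ifs <;> simp [abs_mul, abs_pow]

lemma abs_binomialSummand_le (hac : |a| ≤ c) (i : ℕ) :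
    |binomialSummand a y n i| ≤ binomialSummand c (fun k => |y k|) n i := by
  rw [abs_binomialSummand]
  unfold binomialSummand
  split_ifs
  · gcongr
  · exact le_rfl

lemma summable_abs_binomialSummand (hac : |a| ≤ c)
    (h : Summable (binomialSummand c (fun k => |y k|) n)) :
    Summable fun i => |binomialSummand a y n i| :=
  h.of_nonneg_of_le (fun _ => abs_nonneg _) (abs_binomialSummand_le hac)

noncomputable def binomialDoubleSummand (a b : ℝ) (y : ℕ → ℝ) (n : ℕ) (p : ℕ × ℕ) : ℝ :=
  binomialSummand a (fun j => binomialSummand b y j p.2) n p.1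

lemma tsum_binomialDoubleSummand_right (a b : ℝ) (y : ℕ → ℝ) (n j : ℕ) :
    ∑' i, binomialDoubleSummand a b y n (j, i) =
      binomialSummand a (binomialTransform b y) n j := by
  simp only [binomialDoubleSummand]
  rcases le_or_gt n j with hnj | hjn
  · simp only [binomialSummand_of_le hnj, binomialTransform]
    rw [tsum_mul_right, tsum_mul_left]
  · simp only [binomialSummand_of_lt hjn, tsum_zero]

lemma tsum_binomialDoubleSummand_left (a b : ℝ) (y : ℕ → ℝ) (n i : ℕ) :
    ∑' j, binomialDoubleSummand a b y n (j, i) = binomialSummand (a + b) y n i := by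
  simp only [binomialDoubleSummand]
  rw [tsum_eq_sum (s := Icc n i) fun j hj => ?vanish]
  case vanish =>
    rcases not_and_or.mp (mem_Icc.not.mp hj) with hjn | hij
    · exact binomialSummand_of_lt (not_le.mp hjn)
    · exact binomialSummand_eq_zero (binomialSummand_of_lt (not_le.mp hij))
  rcases le_or_gt n i with hni | hin
  · rw [binomialSummand_of_le hni, mul_right_comm,
      ← sum_Icc_choose_mul_pow_mul_choose_mul_pow hni, sum_mul]
    refine sum_congr rfl fun j hj => ?_
    obtain ⟨hnj, hji⟩ := mem_Icc.mp hj
    rw [binomialSummand_of_le hnj, binomialSummand_of_le hji]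
    ring
  · rw [Icc_eq_empty_of_lt hin, sum_empty, binomialSummand_of_lt hin]

lemma abs_binomialDoubleSummand (p : ℕ × ℕ) :
    |binomialDoubleSummand a b y n p| = binomialDoubleSummand |a| |b| (fun k => |y k|) n p := by
  simp only [binomialDoubleSummand, abs_binomialSummand]

lemma summable_binomialDoubleSummand
    (h : Summable (binomialSummand (|a| + |b|) (fun k => |y k|) n)) :
    Summable (binomialDoubleSummand a b y n) := by
  refine Summable.of_abs ?_
  simp only [abs_binomialDoubleSummand]
  have hnonneg : 0 ≤ binomialDoubleSummand |a| |b| (fun k => |y k|) n := fun p =>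
    binomialSummand_nonneg (abs_nonneg a)
      (fun _ => binomialSummand_nonneg (abs_nonneg b) (fun _ => abs_nonneg _) _) _
  suffices Summable fun p : ℕ × ℕ => binomialDoubleSummand |a| |b| (fun k => |y k|) n p.swap by
    simpa using this.prod_symm
  refine (summable_prod_of_nonneg fun p => hnonneg p.swap).mpr ⟨fun i => ?_, ?_⟩
  · refine summable_of_ne_finset_zero (s := range (i + 1)) fun j hj => ?_
    exact binomialSummand_eq_zero (binomialSummand_of_lt (by simpa using hj))
  · simpa only [Prod.swap, tsum_binomialDoubleSummand_left] using h

theorem binomialTransform_binomialTransform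
    (h : Summable (binomialSummand (|a| + |b|) (fun k => |y k|) n)) :
    binomialTransform a (binomialTransform b y) n = binomialTransform (a + b) y n := by
  have hsum := summable_binomialDoubleSummand h
  calc binomialTransform a (binomialTransform b y) n
      = ∑' j, ∑' i, binomialDoubleSummand a b y n (j, i) :=
        tsum_congr fun j => (tsum_binomialDoubleSummand_right a b y n j).symm
    _ = ∑' i, ∑' j, binomialDoubleSummand a b y n (j, i) :=
        (hsum.tsum_comm (f := fun j i => binomialDoubleSummand a b y n (j, i))).symm
    _ = binomialTransform (a + b) y n := tsum_congr (tsum_binomialDoubleSummand_left a b y n)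

lemma summable_abs_binomialSummand_binomialTransform
    (h : Summable (binomialSummand (|a| + |b|) (fun k => |y k|) n)) :
    Summable fun j => |binomialSummand a (binomialTransform b y) n j| := by
  simpa only [tsum_binomialDoubleSummand_right] using (summable_binomialDoubleSummand h).prod.abs

end BinomialTransform

theorem stmt11_general (q z1 : ℝ) (hq0 : 0 < q)
    (hz1l : max 0 (1 - 2 * q) < z1) (hz1u : z1 < min (1 - q) (1 / 2))
    (x : ℕ → ℝ)
    (hx : ∀ n : ℕ, 1 ≤ n →
      Summable (fun i : ℕ =>
        if n ≤ i then (i.choose n : ℝ) * (1 - q) ^ (i - n) / q ^ i * |x i| else 0)) :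
    ∀ n : ℕ, 1 ≤ n →
      Summable (fun i : ℕ =>
        |if n ≤ i then (i.choose n : ℝ) * (x i / q ^ i) * (z1 - (1 - q)) ^ (i - n) else 0|)
      ∧ Summable (fun i : ℕ =>
        |if n ≤ i then (i.choose n : ℝ) * T1 q z1 x i * (-z1) ^ (i - n) else 0|)
      ∧ Summable (fun i : ℕ =>
        |if n ≤ i then
            (i.choose n : ℝ) * (-1 : ℝ) ^ (i - n) * (1 - q) ^ (i - n) / q ^ i * x i
          else 0|)
      ∧ T2 q z1 x n = S q x n := by
  intro n hn
  have hz0 : 0 < z1 := (le_max_left _ _).trans_lt hz1l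
  have hzq : z1 < 1 - q := hz1u.trans_le (min_le_left _ _)
  set y : ℕ → ℝ := fun i => x i / q ^ i
  have hparam : |-z1| + |z1 - (1 - q)| = 1 - q := by
    rw [abs_neg, abs_of_pos hz0, abs_of_neg (by linarith)]
    ring
  have hmajorant : Summable (binomialSummand (|-z1| + |z1 - (1 - q)|) (fun k => |y k|) n) := by
    refine (hx n hn).congr fun i => ?_
    simp only [hparam, binomialSummand, y, abs_div, abs_of_pos (pow_pos hq0 i)]
    split_ifs <;> ring
  have hS : ∀ i, binomialSummand (-z1 + (z1 - (1 - q))) y n i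
      = if n ≤ i then (i.choose n : ℝ) * (-1 : ℝ) ^ (i - n) * (1 - q) ^ (i - n) / q ^ i * x i
        else 0 := by
    intro i
    rw [show -z1 + (z1 - (1 - q)) = -1 * (1 - q) by ring, binomialSummand, mul_pow]
    split_ifs <;> ring
  refine ⟨summable_abs_binomialSummand (c := |-z1| + |z1 - (1 - q)|)
    (le_add_of_nonneg_left (abs_nonneg _)) hmajorant,
    summable_abs_binomialSummand_binomialTransform hmajorant, ?_, ?_⟩
  · simpa only [hS] using summable_abs_binomialSummand (abs_add_le _ _) hmajorant
  · exact (binomialTransform_binomialTransform hmajorant).trans (tsum_congr hS)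

/-- Let `q ∈ (0,1)` and `max(0, 1-2q) < z_1 < min(1-q, 1/2)`.
If `x = (x_n)_{n ≥ 1}` satisfies `∑_{i=n}^∞ C(i,n) (1-q)^{i-n} q^{-i} |x_i| < ∞`
for every `n ≥ 1`, then for every `n ≥ 1` the series defining `T^{(1)}(x)_n`,
`T^{(2)}(x)_n` and `S(x)_n` converge absolutely and `T^{(2)}(x)_n = S(x)_n`. -/
theorem stmt11 (q z1 : ℝ) (hq0 : 0 < q) (hq1 : q < 1)
    (hz1l : max 0 (1 - 2 * q) < z1) (hz1u : z1 < min (1 - q) (1 / 2))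
    (x : ℕ → ℝ)
    (hx : ∀ n : ℕ, 1 ≤ n →
      Summable (fun i : ℕ =>
        if n ≤ i then (i.choose n : ℝ) * (1 - q) ^ (i - n) / q ^ i * |x i| else 0)) :
    ∀ n : ℕ, 1 ≤ n →
      Summable (fun i : ℕ =>
        |if n ≤ i then (i.choose n : ℝ) * (x i / q ^ i) * (z1 - (1 - q)) ^ (i - n) else 0|)
      ∧ Summable (fun i : ℕ =>
        |if n ≤ i then (i.choose n : ℝ) * T1 q z1 x i * (-z1) ^ (i - n) else 0|)
      ∧ Summable (fun i : ℕ =>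
        |if n ≤ i then
            (i.choose n : ℝ) * (-1 : ℝ) ^ (i - n) * (1 - q) ^ (i - n) / q ^ i * x i
          else 0|)
      ∧ T2 q z1 x n = S q x n :=
  stmt11_general q z1 hq0 hz1l hz1u x hx

end Stmt11
end

section
/- Let q ∈ (0,1), let z_1 satisfy max(0, 1−2q) < z_1 < min(1−q, 1/2), and let f_W be any probability mass function on the positive integers. Define f_{W_q}(s) = Σ_{w=s}^∞ C(w,s) q^s (1−q)^{w−s} f_W(w), T^{(1)}(f_{W_q})_n = Σ_{i=n}^∞ C(i,n) (f_{W_q}(i) / q^i) (z_1 − (1−q))^{i−n}, and T^{(2)}(f_{W_q})_n = Σ_{i=n}^∞ C(i,n) T^{(1)}(f_{W_q})_i (−z_1)^{i−n}. Then for every n ≥ 1 these series converge absolutely, T^{(1)}(f_{W_q})_n = Σ_{k=n}^∞ f_W(k) C(k,n) z_1^{k−n}, and T^{(2)}(f_{W_q})_n = f_W(n). -/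
/-!
Write `B_a u (n) = ∑_{i ≥ n} C(i,n) a^{i-n} u(i)`. On generating functions this is the Taylor shift
`G(x) ↦ G(x + a)`, so `B_a ∘ B_b = B_{a+b}`. Analytically, for bounded `u` and `|a| + |b| < 1` the
double series `∑_{n ≤ i ≤ w} C(i,n) C(w,i) a^{i-n} b^{w-i} u(w)` converges absolutely, and summing
it first over `i` gives `C(w,n) (a+b)^{w-n} u(w)` by the binomial theorem.

Now `f_{W_q}(i) / q^i = B_{1-q} f_W (i)`, the transforms `T^{(1)}` and `T^{(2)}` apply
`B_{z_1-(1-q)}` and `B_{-z_1}`, and `f_W` is bounded since it is summable. The constraints on `z_1`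
give `|z_1-(1-q)| + |1-q| < 1` and `|-z_1| + |z_1| < 1`, hence `T^{(1)}(f_{W_q}) = B_{z_1} f_W` and
`T^{(2)}(f_{W_q}) = B_0 f_W = f_W`.
-/

namespace Stmt12

/-- `f_{W_q}(s) = ∑_{w=s}^∞ C(w,s) q^s (1-q)^{w-s} f_W(w)`. -/
noncomputable def fWq (q : ℝ) (fW : ℕ → ℝ) (s : ℕ) : ℝ :=
  ∑' w : ℕ, if s ≤ w then (w.choose s : ℝ) * q ^ s * (1 - q) ^ (w - s) * fW w else 0

/-- `T^{(1)}(f_{W_q})_n = ∑_{i=n}^∞ C(i,n) (f_{W_q}(i) / q^i) (z_1 - (1-q))^{i-n}`. -/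
noncomputable def T1 (q z1 : ℝ) (fW : ℕ → ℝ) (n : ℕ) : ℝ :=
  ∑' i : ℕ, if n ≤ i then
    (i.choose n : ℝ) * (fWq q fW i / q ^ i) * (z1 - (1 - q)) ^ (i - n) else 0

/-- `T^{(2)}(f_{W_q})_n = ∑_{i=n}^∞ C(i,n) T^{(1)}(f_{W_q})_i (-z_1)^{i-n}`. -/
noncomputable def T2 (q z1 : ℝ) (fW : ℕ → ℝ) (n : ℕ) : ℝ :=
  ∑' i : ℕ, if n ≤ i then (i.choose n : ℝ) * T1 q z1 fW i * (-z1) ^ (i - n) else 0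

theorem sum_Icc_choose_mul_choose_mul_pow_mul_pow {R : Type*} [CommSemiring R] (n w : ℕ)
    (a b : R) :
    ∑ i ∈ Finset.Icc n w, (i.choose n : R) * w.choose i * a ^ (i - n) * b ^ (w - i)
      = w.choose n * (a + b) ^ (w - n) := by
  rcases lt_or_ge w n with hwn | hnw
  · simp [Finset.Icc_eq_empty_of_lt hwn, Nat.choose_eq_zero_of_lt hwn]
  rw [← Finset.Ico_add_one_right_eq_Icc, Finset.sum_Ico_eq_sum_range, Nat.sub_add_comm hnw,
    add_pow, Finset.mul_sum]
  refine Finset.sum_congr rfl fun j hj => ?_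
  have hj : j ≤ w - n := Nat.lt_succ_iff.mp (Finset.mem_range.mp hj)
  have hchoose : w.choose (n + j) * (n + j).choose n = w.choose n * (w - n).choose j := by
    simpa using Nat.choose_mul (n := w) (Nat.le_add_right n j)
  rw [Nat.add_sub_cancel_left, show w - (n + j) = w - n - j by omega]
  calc ((n + j).choose n : R) * (w.choose (n + j)) * a ^ j * b ^ (w - n - j)
      = ((w.choose (n + j) * (n + j).choose n : ℕ) : R) * a ^ j * b ^ (w - n - j) := by
        push_cast; ring
    _ = w.choose n * (a ^ j * b ^ (w - n - j) * (w - n).choose j) := by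
        rw [hchoose]; push_cast; ring

theorem summable_choose_mul_pow {r : ℝ} (hr : |r| < 1) (n : ℕ) :
    Summable fun w : ℕ => (w.choose n : ℝ) * r ^ (w - n) := by
  rw [← summable_nat_add_iff n]
  simpa using summable_choose_mul_geometric_of_norm_lt_one (R := ℝ) n hr

section BinomialTransform

/-- The summand of `B_a u (n)`, written in the shape of the summands of `T1` and `T2`. -/
def binomTerm (a : ℝ) (u : ℕ → ℝ) (n i : ℕ) : ℝ :=
  if n ≤ i then (i.choose n : ℝ) * u i * a ^ (i - n) else 0

noncomputable def binomShift (a : ℝ) (u : ℕ → ℝ) (n : ℕ) : ℝ :=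
  ∑' i, binomTerm a u n i

variable {a b C : ℝ} {u : ℕ → ℝ} {n : ℕ}

theorem binomTerm_eq (a : ℝ) (u : ℕ → ℝ) (n i : ℕ) :
    binomTerm a u n i = (i.choose n : ℝ) * u i * a ^ (i - n) := by
  unfold binomTerm
  split_ifs with h
  · rfl
  · simp [Nat.choose_eq_zero_of_lt (not_le.mp h)]

theorem abs_binomTerm (a : ℝ) (u : ℕ → ℝ) (n i : ℕ) :
    |binomTerm a u n i| = binomTerm |a| (fun i => |u i|) n i := by
  simp [binomTerm_eq, abs_mul, abs_pow]

theorem tsum_binomTerm (a : ℝ) (v : ℕ → ℕ → ℝ) (n i : ℕ) :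
    ∑' w, binomTerm a (fun j => v j w) n i = binomTerm a (fun j => ∑' w, v j w) n i := by
  simp only [binomTerm_eq, tsum_mul_right, tsum_mul_left]

theorem summable_binomTerm (ha : |a| < 1) (hu : ∀ w, |u w| ≤ C) :
    Summable (binomTerm a u n) := by
  refine .of_norm_bounded ((summable_choose_mul_pow (r := |a|) (by simpa) n).mul_left C)
    fun w => ?_
  rw [Real.norm_eq_abs, abs_binomTerm, binomTerm_eq]
  calc (w.choose n : ℝ) * |u w| * |a| ^ (w - n) ≤ (w.choose n : ℝ) * C * |a| ^ (w - n) := by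
        gcongr; exact hu w
    _ = C * ((w.choose n : ℝ) * |a| ^ (w - n)) := by ring

theorem binomShift_zero (u : ℕ → ℝ) (n : ℕ) : binomShift 0 u n = u n := by
  rw [binomShift, tsum_eq_single n fun i hi => ?_]
  · simp [binomTerm]
  · rcases lt_or_gt_of_ne hi with h | h
    · simp [binomTerm_eq, Nat.choose_eq_zero_of_lt h]
    · simp [binomTerm_eq, zero_pow (Nat.sub_ne_zero_of_lt h)]

/-- The double series behind `B_a (B_b u) = B_{a+b} u`, indexed by `(i, w)`. -/
def binomKernel (a b : ℝ) (u : ℕ → ℝ) (n : ℕ) (p : ℕ × ℕ) : ℝ :=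
  binomTerm a (fun i => binomTerm b u i p.2) n p.1

theorem abs_binomKernel (p : ℕ × ℕ) :
    |binomKernel a b u n p| = binomKernel |a| |b| (fun w => |u w|) n p := by
  simp only [binomKernel, abs_binomTerm]

theorem hasSum_binomKernel_fst (a b : ℝ) (u : ℕ → ℝ) (n w : ℕ) :
    HasSum (fun i => binomKernel a b u n (i, w)) (binomTerm (a + b) u n w) := by
  have hsupp : ∀ i ∉ Finset.Icc n w, binomKernel a b u n (i, w) = 0 := by
    intro i hi
    rcases not_and_or.mp (Finset.mem_Icc.not.mp hi) with h | h
    · simp [binomKernel, binomTerm_eq, Nat.choose_eq_zero_of_lt (not_le.mp h)]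
    · simp [binomKernel, binomTerm_eq, Nat.choose_eq_zero_of_lt (not_le.mp h)]
  convert hasSum_sum_of_ne_finset_zero (L := .unconditional ℕ) hsupp using 1
  simp only [binomKernel, binomTerm_eq]
  rw [mul_right_comm, ← sum_Icc_choose_mul_choose_mul_pow_mul_pow, Finset.sum_mul]
  exact Finset.sum_congr rfl fun i _ => by ring

theorem tsum_binomKernel_snd (a b : ℝ) (u : ℕ → ℝ) (n i : ℕ) :
    ∑' w, binomKernel a b u n (i, w) = binomTerm a (binomShift b u) n i :=
  tsum_binomTerm a (fun j w => binomTerm b u j w) n i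

theorem summable_binomKernel (hab : |a| + |b| < 1) (hu : ∀ w, |u w| ≤ C) :
    Summable (binomKernel a b u n) := by
  rw [← summable_abs_iff, funext abs_binomKernel, ← (Equiv.prodComm ℕ ℕ).summable_iff]
  have hnonneg : 0 ≤ binomKernel |a| |b| (fun w => |u w|) n ∘ Equiv.prodComm ℕ ℕ :=
    fun p => by simpa [abs_binomKernel] using abs_nonneg (binomKernel a b u n p.swap)
  refine (summable_prod_of_nonneg hnonneg).mpr
    ⟨fun w => (hasSum_binomKernel_fst _ _ _ n w).summable, ?_⟩
  simp only [Function.comp_def, Equiv.prodComm_apply, Prod.swap_prod_mk,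
    fun w => (hasSum_binomKernel_fst |a| |b| (fun w => |u w|) n w).tsum_eq]
  exact summable_binomTerm (by rwa [abs_of_nonneg (by positivity)])
    fun w => (abs_abs (u w)).trans_le (hu w)

theorem summable_abs_binomTerm_binomShift (hab : |a| + |b| < 1) (hu : ∀ w, |u w| ≤ C) :
    Summable fun i => |binomTerm a (binomShift b u) n i| := by
  have hK := (summable_binomKernel (n := n) hab hu).norm
  refine .of_nonneg_of_le (fun _ => abs_nonneg _) (fun i => ?_) hK.prod
  rw [← tsum_binomKernel_snd, ← Real.norm_eq_abs]
  exact norm_tsum_le_tsum_norm (hK.prod_factor i)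

theorem binomShift_binomShift (hab : |a| + |b| < 1) (hu : ∀ w, |u w| ≤ C) :
    binomShift a (binomShift b u) n = binomShift (a + b) u n := calc
  binomShift a (binomShift b u) n = ∑' i, ∑' w, binomKernel a b u n (i, w) := by
    simp only [binomShift, tsum_binomKernel_snd]
  _ = ∑' w, ∑' i, binomKernel a b u n (i, w) :=
    (Summable.tsum_comm (f := fun i w => binomKernel a b u n (i, w))
      (summable_binomKernel hab hu)).symm
  _ = binomShift (a + b) u n := tsum_congr fun w => (hasSum_binomKernel_fst a b u n w).tsum_eq

end BinomialTransform

theorem fWq_eq_pow_mul_binomShift (q : ℝ) (fW : ℕ → ℝ) (s : ℕ) :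
    fWq q fW s = q ^ s * binomShift (1 - q) fW s := by
  rw [fWq, binomShift, ← tsum_mul_left]
  refine tsum_congr fun w => ?_
  unfold binomTerm
  split_ifs <;> ring

theorem stmt12_general (q z1 : ℝ) (hq0 : 0 < q)
    (hz1l : max 0 (1 - 2 * q) < z1) (hz1u : z1 < min (1 - q) (1 / 2))
    (fW : ℕ → ℝ) (hfWsum : HasSum fW 1) :
    ∀ n : ℕ, 1 ≤ n →
      Summable (fun i : ℕ =>
        |if n ≤ i then
            (i.choose n : ℝ) * (fWq q fW i / q ^ i) * (z1 - (1 - q)) ^ (i - n)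
          else 0|)
      ∧ Summable (fun i : ℕ =>
        |if n ≤ i then (i.choose n : ℝ) * T1 q z1 fW i * (-z1) ^ (i - n) else 0|)
      ∧ T1 q z1 fW n
          = (∑' k : ℕ, if n ≤ k then fW k * (k.choose n : ℝ) * z1 ^ (k - n) else 0)
      ∧ T2 q z1 fW n = fW n := by
  intro n _
  obtain ⟨hz0, hqz⟩ := max_lt_iff.mp hz1l
  obtain ⟨hzq, hz⟩ := lt_min_iff.mp hz1u
  have hfW : ∀ w, |fW w| ≤ ∑' k, |fW k| :=
    fun w => hfWsum.summable.abs.le_tsum w fun _ _ => abs_nonneg _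
  have h1 : |z1 - (1 - q)| + |1 - q| < 1 := by
    rw [abs_of_neg (by linarith), abs_of_pos (by linarith)]; linarith
  have h2 : |-z1| + |z1| < 1 := by rw [abs_neg, abs_of_pos hz0]; linarith
  have hfWq : (fun i => fWq q fW i / q ^ i) = binomShift (1 - q) fW := funext fun i => by
    rw [fWq_eq_pow_mul_binomShift, mul_div_cancel_left₀ _ (pow_ne_zero i hq0.ne')]
  have hT1 : T1 q z1 fW = binomShift z1 fW := funext fun m => by
    change binomShift _ (fun i => fWq q fW i / q ^ i) m = _
    rw [hfWq, binomShift_binomShift h1 hfW, sub_add_cancel]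
  refine ⟨?_, ?_, ?_, ?_⟩
  · change Summable fun i => |binomTerm _ (fun i => fWq q fW i / q ^ i) n i|
    rw [hfWq]
    exact summable_abs_binomTerm_binomShift h1 hfW
  · change Summable fun i => |binomTerm _ (T1 q z1 fW) n i|
    rw [hT1]
    exact summable_abs_binomTerm_binomShift h2 hfW
  · rw [hT1, binomShift]
    refine tsum_congr fun k => ?_
    unfold binomTerm
    split_ifs <;> ring
  · change binomShift _ (T1 q z1 fW) n = _
    rw [hT1, binomShift_binomShift h2 hfW, neg_add_cancel, binomShift_zero]

/-- Let `q ∈ (0,1)`, `max(0, 1-2q) < z_1 < min(1-q, 1/2)`, and let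
`f_W` be any probability mass function on the positive integers.  Then for every
`n ≥ 1` the series defining `T^{(1)}(f_{W_q})_n` and `T^{(2)}(f_{W_q})_n` converge
absolutely, `T^{(1)}(f_{W_q})_n = ∑_{k=n}^∞ f_W(k) C(k,n) z_1^{k-n}`, and
`T^{(2)}(f_{W_q})_n = f_W(n)`. -/
theorem stmt12 (q z1 : ℝ) (hq0 : 0 < q) (hq1 : q < 1)
    (hz1l : max 0 (1 - 2 * q) < z1) (hz1u : z1 < min (1 - q) (1 / 2))
    (fW : ℕ → ℝ) (hfW0 : fW 0 = 0) (hfWnn : ∀ w, 0 ≤ fW w) (hfWsum : HasSum fW 1) :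
    ∀ n : ℕ, 1 ≤ n →
      Summable (fun i : ℕ =>
        |if n ≤ i then
            (i.choose n : ℝ) * (fWq q fW i / q ^ i) * (z1 - (1 - q)) ^ (i - n)
          else 0|)
      ∧ Summable (fun i : ℕ =>
        |if n ≤ i then (i.choose n : ℝ) * T1 q z1 fW i * (-z1) ^ (i - n) else 0|)
      ∧ T1 q z1 fW n
          = (∑' k : ℕ, if n ≤ k then fW k * (k.choose n : ℝ) * z1 ^ (k - n) else 0)
      ∧ T2 q z1 fW n = fW n :=
  stmt12_general q z1 hq0 hz1l hz1u fW hfWsum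

end Stmt12
end

section
/- Let q ∈ (0,1), let z_1 satisfy max(0, 1−2q) < z_1 < min(1−q, 1/2), let f_{W_q} be a probability mass function on the nonnegative integers, and let (η_s)_{s≥1} be i.i.d. standard normal random variables. Suppose that for each n ≥ 1 the Gaussian series T^{(1)}_n = Σ_{s=n}^∞ C(s,n) ((z_1 − (1−q))^{s−n} / q^s) f_{W_q}(s)^{1/2} η_s converges almost surely, and for j ≥ w ≥ 1 define T^{(2)}_{j,w} = Σ_{k=w}^j C(k,w) (−z_1)^{k−w} T^{(1)}_k. If, for a fixed w ≥ 1, T^{(2)}_{j,w} converges in distribution as j → ∞, then necessarily R_{q,w} = Σ_{s=w}^∞ C(s,w)^2 (1−q)^{2(s−w)} q^{−2s} f_{W_q}(s) < ∞. -/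
open MeasureTheory ProbabilityTheory Filter
open scoped NNReal BoundedContinuousFunction Topology

/-!
Almost surely `T^{(2)}_{j,w} = ∑_s c_{j,s} η_s`, and the binomial identity
`∑_k C(k,w) C(s,k) a^{k-w} b^{s-k} = C(s,w) (a+b)^{s-w}` with `a + b = -z_1 + (z_1 - (1-q))`
shows that `c_{j,s}²` is exactly the `s`-th term of `R_{q,w}` for `s ≤ j`. Since finite
partial sums of the series are centred Gaussians, `E cos(t T^{(2)}_{j,w}) ≤ exp(-t² R_j / 2)`
with `R_j` the partial sums of `R_{q,w}`. If `R_{q,w} = ∞`, the limit law `ν` would satisfy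
`∫ cos(t x) dν ≤ 0` for every `t`, contradicting continuity at `0` of its characteristic
function, whose value there is `1`.
-/

lemma Finset.sum_Icc_choose_mul_pow_mul_choose_mul_pow {R : Type*} [CommSemiring R] {w s : ℕ}
    (h : w ≤ s) (x y : R) :
    ∑ k ∈ Finset.Icc w s, (k.choose w : R) * x ^ (k - w) * ((s.choose k : R) * y ^ (s - k)) =
      s.choose w * (x + y) ^ (s - w) := by
  rw [← Finset.Ico_add_one_right_eq_Icc, Finset.sum_Ico_eq_sum_range,
    show s + 1 - w = s - w + 1 by omega, add_pow, Finset.mul_sum]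
  refine Finset.sum_congr rfl fun m _ => ?_
  have hchoose : (s.choose (w + m) : R) * ((w + m).choose w : R) =
      (s.choose w : R) * ((s - w).choose m : R) := by
    rw [← Nat.cast_mul, ← Nat.cast_mul, Nat.choose_mul (Nat.le_add_right w m),
      Nat.add_sub_cancel_left]
  rw [Nat.add_sub_cancel_left, show s - (w + m) = s - w - m by omega]
  calc ((w + m).choose w : R) * x ^ m * ((s.choose (w + m) : R) * y ^ (s - w - m))
      = (s.choose (w + m) : R) * ((w + m).choose w : R) * (x ^ m * y ^ (s - w - m)) := by ring
    _ = (s.choose w : R) * (x ^ m * y ^ (s - w - m) * ((s - w).choose m : R)) := by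
      rw [hchoose]; ring

lemma integral_cos_mul_eq_re_charFun (ν : Measure ℝ) [IsFiniteMeasure ν] (t : ℝ) :
    ∫ x, Real.cos (t * x) ∂ν = (charFun ν t).re := by
  rw [charFun_apply_real, ← RCLike.re_to_complex, ← integral_re]
  · simp_rw [← Complex.ofReal_mul, RCLike.re_to_complex, Complex.exp_ofReal_mul_I_re]
  · exact (integrable_const (1 : ℝ)).mono' (by fun_prop) (ae_of_all _ fun x => by
      simp [← Complex.ofReal_mul, Complex.norm_exp_ofReal_mul_I])

lemma exists_ne_zero_integral_cos_mul_pos (ν : Measure ℝ) [IsProbabilityMeasure ν] :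
    ∃ t ≠ 0, 0 < ∫ x, Real.cos (t * x) ∂ν := by
  have hcont : Continuous fun t => ∫ x, Real.cos (t * x) ∂ν := by
    simp_rw [integral_cos_mul_eq_re_charFun]
    exact Complex.continuous_re.comp continuous_charFun
  have hpos : ∀ᶠ t in 𝓝[≠] 0, 0 < ∫ x, Real.cos (t * x) ∂ν :=
    nhdsWithin_le_nhds ((hcont.tendsto 0).eventually_const_lt (by simp))
  obtain ⟨t, ht, ht0⟩ := (hpos.and self_mem_nhdsWithin).exists
  exact ⟨t, ht0, ht⟩

lemma integral_cos_mul_gaussianReal (v : ℝ≥0) (t : ℝ) :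
    ∫ x, Real.cos (t * x) ∂gaussianReal 0 v = Real.exp (-(v * t ^ 2) / 2) := by
  have h : (0 * Complex.I - v * t ^ 2 / 2 : ℂ) = ((-(v * t ^ 2) / 2 : ℝ) : ℂ) := by
    push_cast; ring
  rw [integral_cos_mul_eq_re_charFun, charFun_gaussianReal, Complex.ofReal_zero, mul_zero, h,
    Complex.exp_ofReal_re]

section GaussianSeries

variable {Ω : Type*} [MeasurableSpace Ω] {μ : Measure Ω} [IsProbabilityMeasure μ]

lemma map_sum_mul_eq_gaussianReal {ι : Type*} {η : ι → Ω → ℝ} (hmeas : ∀ s, Measurable (η s))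
    (hindep : iIndepFun η μ) (hgauss : ∀ s, μ.map (η s) = gaussianReal 0 1) (c : ι → ℝ)
    (S : Finset ι) :
    μ.map (fun ω => ∑ s ∈ S, c s * η s ω) =
      gaussianReal 0 (.mk (∑ s ∈ S, c s ^ 2) (Finset.sum_nonneg fun _ _ => sq_nonneg _)) := by
  classical
  induction S using Finset.induction with
  | empty =>
    simp only [Finset.sum_empty, Measure.map_const, measure_univ, one_smul]
    exact (gaussianReal_zero_var 0).symm
  | insert a S ha ih =>
    have hindep' : iIndepFun (fun s ω => c s * η s ω) μ :=
      hindep.comp (fun s x => c s * x) fun s => measurable_id.const_mul (c s)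
    have hY : IndepFun (fun ω => c a * η a ω) (fun ω => ∑ s ∈ S, c s * η s ω) μ := by
      convert (hindep'.indepFun_finsetSum_of_notMem (fun s => (hmeas s).const_mul (c s)) ha).symm
      simp [Finset.sum_apply]
    have hX : μ.map (fun ω => c a * η a ω) = gaussianReal 0 (.mk (c a ^ 2) (sq_nonneg _)) := by
      rw [(gaussianReal_const_mul ⟨(hmeas a).aemeasurable, hgauss a⟩ (c a)).map_eq, mul_zero,
        mul_one]
    have hsum := gaussianReal_add_gaussianReal_of_indepFun hY hX ih
    rw [zero_add] at hsum
    simp_rw [Finset.sum_insert ha]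
    exact hsum

lemma integral_cos_mul_le_of_hasSum {η : ℕ → Ω → ℝ} (hmeas : ∀ s, Measurable (η s))
    (hindep : iIndepFun η μ) (hgauss : ∀ s, μ.map (η s) = gaussianReal 0 1) {c : ℕ → ℝ}
    {X : Ω → ℝ} (hX : ∀ᵐ ω ∂μ, HasSum (fun s => c s * η s ω) (X ω)) (t : ℝ) (N : ℕ) :
    ∫ ω, Real.cos (t * X ω) ∂μ ≤ Real.exp (-(t ^ 2 * ∑ s ∈ Finset.range N, c s ^ 2) / 2) := by
  have hpartial : ∀ M, ∫ ω, Real.cos (t * ∑ s ∈ Finset.range M, c s * η s ω) ∂μ =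
      Real.exp (-(t ^ 2 * ∑ s ∈ Finset.range M, c s ^ 2) / 2) := by
    intro M
    rw [← integral_map (φ := fun ω => ∑ s ∈ Finset.range M, c s * η s ω) (by fun_prop)
      (f := fun x => Real.cos (t * x)) (by fun_prop), map_sum_mul_eq_gaussianReal hmeas hindep
      hgauss, integral_cos_mul_gaussianReal, NNReal.coe_mk, mul_comm]
  have hlim : Tendsto (fun M => ∫ ω, Real.cos (t * ∑ s ∈ Finset.range M, c s * η s ω) ∂μ) atTop
      (𝓝 (∫ ω, Real.cos (t * X ω) ∂μ)) :=
    tendsto_integral_of_dominated_convergence (fun _ => 1) (fun M => by fun_prop)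
      (integrable_const 1) (fun M => ae_of_all _ fun ω => by simp [Real.abs_cos_le_one])
      (hX.mono fun ω h => ((Real.continuous_cos.comp (continuous_const_mul t)).tendsto _).comp
        h.tendsto_sum_nat)
  refine le_of_tendsto hlim (eventually_atTop.2 ⟨N, fun M hM => ?_⟩)
  rw [hpartial]
  gcongr

end GaussianSeries

namespace Stmt14

/-- The Gaussian series `T^{(1)}_n = ∑_{s=n}^∞ C(s,n) ((z_1-(1-q))^{s-n}/q^s)
f_{W_q}(s)^{1/2} η_s` (realized pointwise as a `tsum`). -/
noncomputable def T1 {Ω : Type*} (q z1 : ℝ) (fWq : ℕ → ℝ) (η : ℕ → Ω → ℝ)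
    (n : ℕ) (ω : Ω) : ℝ :=
  ∑' s : ℕ, if n ≤ s then
    (s.choose n : ℝ) * ((z1 - (1 - q)) ^ (s - n) / q ^ s) * Real.sqrt (fWq s) * η s ω
  else 0

/-- `T^{(2)}_{j,w} = ∑_{k=w}^j C(k,w) (-z_1)^{k-w} T^{(1)}_k`. -/
noncomputable def T2 {Ω : Type*} (q z1 : ℝ) (fWq : ℕ → ℝ) (η : ℕ → Ω → ℝ)
    (j w : ℕ) (ω : Ω) : ℝ :=
  ∑ k ∈ Finset.Icc w j, (k.choose w : ℝ) * (-z1) ^ (k - w) * T1 q z1 fWq η k ω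

noncomputable def t1Coeff (q z1 : ℝ) (fWq : ℕ → ℝ) (n s : ℕ) : ℝ :=
  if n ≤ s then (s.choose n : ℝ) * ((z1 - (1 - q)) ^ (s - n) / q ^ s) * Real.sqrt (fWq s) else 0

noncomputable def t2Coeff (q z1 : ℝ) (fWq : ℕ → ℝ) (j w s : ℕ) : ℝ :=
  ∑ k ∈ Finset.Icc w j, (k.choose w : ℝ) * (-z1) ^ (k - w) * t1Coeff q z1 fWq k s

noncomputable def rTerm (q : ℝ) (fWq : ℕ → ℝ) (w s : ℕ) : ℝ :=
  if w ≤ s then (s.choose w : ℝ) ^ 2 * (1 - q) ^ (2 * (s - w)) / q ^ (2 * s) * fWq s else 0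

section Coefficients

variable {q z1 : ℝ} {fWq : ℕ → ℝ}

lemma t1Coeff_mul (n s : ℕ) (x : ℝ) :
    t1Coeff q z1 fWq n s * x = if n ≤ s then
      (s.choose n : ℝ) * ((z1 - (1 - q)) ^ (s - n) / q ^ s) * Real.sqrt (fWq s) * x else 0 := by
  rw [t1Coeff, ite_mul, zero_mul]

lemma T1_eq_tsum {Ω : Type*} (η : ℕ → Ω → ℝ) (n : ℕ) (ω : Ω) :
    T1 q z1 fWq η n ω = ∑' s, t1Coeff q z1 fWq n s * η s ω := by
  simp_rw [t1Coeff_mul]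
  rfl

lemma hasSum_t2Coeff_mul {Ω : Type*} {η : ℕ → Ω → ℝ} {j w : ℕ} {ω : Ω}
    (h : ∀ k ∈ Finset.Icc w j, Summable fun s => t1Coeff q z1 fWq k s * η s ω) :
    HasSum (fun s => t2Coeff q z1 fWq j w s * η s ω) (T2 q z1 fWq η j w ω) := by
  have hk := hasSum_sum fun k hk =>
    (h k hk).hasSum.mul_left ((k.choose w : ℝ) * (-z1) ^ (k - w))
  simp only [T2, T1_eq_tsum, t2Coeff, Finset.sum_mul]
  simpa only [mul_assoc] using hk

lemma t2Coeff_of_lt {j w s : ℕ} (h : s < w) : t2Coeff q z1 fWq j w s = 0 :=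
  Finset.sum_eq_zero fun k hk => by
    rw [t1Coeff, if_neg (by grind), mul_zero]

lemma t2Coeff_of_le {j w s : ℕ} (hws : w ≤ s) (hsj : s ≤ j) :
    t2Coeff q z1 fWq j w s =
      (s.choose w : ℝ) * (-(1 - q)) ^ (s - w) * (Real.sqrt (fWq s) / q ^ s) := by
  have hvanish : ∀ k ∈ Finset.Icc w j, k ∉ Finset.Icc w s →
      (k.choose w : ℝ) * (-z1) ^ (k - w) * t1Coeff q z1 fWq k s = 0 := fun k hk hks => by
    rw [t1Coeff, if_neg (by grind), mul_zero]
  have hterm : ∀ k ∈ Finset.Icc w s,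
      (k.choose w : ℝ) * (-z1) ^ (k - w) * t1Coeff q z1 fWq k s =
        (k.choose w : ℝ) * (-z1) ^ (k - w) * ((s.choose k : ℝ) * (z1 - (1 - q)) ^ (s - k)) *
          (Real.sqrt (fWq s) / q ^ s) := fun k hk => by
    rw [t1Coeff, if_pos (Finset.mem_Icc.1 hk).2]
    ring
  rw [t2Coeff, ← Finset.sum_subset (Finset.Icc_subset_Icc_right hsj) hvanish,
    Finset.sum_congr rfl hterm, ← Finset.sum_mul,
    Finset.sum_Icc_choose_mul_pow_mul_choose_mul_pow hws,
    show -z1 + (z1 - (1 - q)) = -(1 - q) by ring]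

lemma t2Coeff_sq {j w s : ℕ} (hsj : s ≤ j) (hf : 0 ≤ fWq s) :
    t2Coeff q z1 fWq j w s ^ 2 = rTerm q fWq w s := by
  rw [rTerm]
  split_ifs with hws
  · rw [t2Coeff_of_le hws hsj, mul_pow, mul_pow, div_pow, Real.sq_sqrt hf, ← pow_mul, ← pow_mul,
      Even.neg_pow ⟨s - w, by ring⟩]
    ring
  · rw [t2Coeff_of_lt (not_le.1 hws), sq, zero_mul]

lemma integral_cos_mul_T2_le {Ω : Type*} [MeasurableSpace Ω] {μ : Measure Ω}
    [IsProbabilityMeasure μ] (hfnn : ∀ s, 0 ≤ fWq s) {η : ℕ → Ω → ℝ}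
    (hηmeas : ∀ s, Measurable (η s)) (hηindep : iIndepFun η μ)
    (hηgauss : ∀ s, μ.map (η s) = gaussianReal 0 1) {j w : ℕ}
    (hT1 : ∀ k ∈ Finset.Icc w j, ∀ᵐ ω ∂μ, Summable fun s => t1Coeff q z1 fWq k s * η s ω)
    (t : ℝ) :
    ∫ ω, Real.cos (t * T2 q z1 fWq η j w ω) ∂μ ≤
      Real.exp (-(t ^ 2 * ∑ s ∈ Finset.range (j + 1), rTerm q fWq w s) / 2) := by
  have hsum : ∀ᵐ ω ∂μ, HasSum (fun s => t2Coeff q z1 fWq j w s * η s ω) (T2 q z1 fWq η j w ω) :=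
    ((Finset.Icc w j).eventually_all.2 hT1).mono fun ω => hasSum_t2Coeff_mul
  have hvar : ∑ s ∈ Finset.range (j + 1), t2Coeff q z1 fWq j w s ^ 2 =
      ∑ s ∈ Finset.range (j + 1), rTerm q fWq w s :=
    Finset.sum_congr rfl fun s hs => t2Coeff_sq (Finset.mem_range_succ_iff.1 hs) (hfnn s)
  rw [← hvar]
  exact integral_cos_mul_le_of_hasSum hηmeas hηindep hηgauss hsum t (j + 1)

end Coefficients

theorem stmt14_general {Ω : Type*} [MeasurableSpace Ω] (μ : Measure Ω) [IsProbabilityMeasure μ]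
    (q z1 : ℝ)
    (fWq : ℕ → ℝ) (hfnn : ∀ s, 0 ≤ fWq s)
    (η : ℕ → Ω → ℝ) (hηmeas : ∀ s, Measurable (η s))
    (hηindep : iIndepFun η μ)
    (hηgauss : ∀ s, μ.map (η s) = gaussianReal 0 1)
    (hT1 : ∀ n : ℕ, 1 ≤ n →
      ∀ᵐ ω ∂μ, Summable (fun s : ℕ =>
        if n ≤ s then
          (s.choose n : ℝ) * ((z1 - (1 - q)) ^ (s - n) / q ^ s)
            * Real.sqrt (fWq s) * η s ω
        else 0))
    (w : ℕ) (hw : 1 ≤ w)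
    (hconv : ∃ ν : Measure ℝ, IsProbabilityMeasure ν ∧
      ∀ f : ℝ →ᵇ ℝ,
        Tendsto (fun j : ℕ => ∫ ω, f (T2 q z1 fWq η j w ω) ∂μ) atTop
          (nhds (∫ x, f x ∂ν))) :
    Summable (fun s : ℕ =>
      if w ≤ s then
        (s.choose w : ℝ) ^ 2 * (1 - q) ^ (2 * (s - w)) / q ^ (2 * s) * fWq s
      else 0) := by
  change Summable (rTerm q fWq w)
  by_contra hR
  obtain ⟨ν, hν, hconv⟩ := hconv
  obtain ⟨t, ht, hpos⟩ := exists_ne_zero_integral_cos_mul_pos ν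
  have hR_nonneg : ∀ s, 0 ≤ rTerm q fWq w s := fun s =>
    t2Coeff_sq (z1 := z1) le_rfl (hfnn s) ▸ sq_nonneg _
  have hdiv := (not_summable_iff_tendsto_nat_atTop_of_nonneg hR_nonneg).1 hR
  have hzero : Tendsto (fun N => Real.exp (-(t ^ 2 * ∑ s ∈ Finset.range N, rTerm q fWq w s) / 2))
      atTop (𝓝 0) :=
    Real.tendsto_exp_atBot.comp ((tendsto_neg_atTop_atBot.comp
      (hdiv.const_mul_atTop (by positivity))).atBot_div_const two_pos)
  have hlim := hconv (.ofNormedAddCommGroup (fun x => Real.cos (t * x)) (by fun_prop) 1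
    fun x => by simpa using Real.abs_cos_le_one (t * x))
  refine hpos.not_ge (le_of_tendsto_of_tendsto' hlim (hzero.comp (tendsto_add_atTop_nat 1))
    fun j => integral_cos_mul_T2_le hfnn hηmeas hηindep hηgauss (fun k hk => ?_) t)
  simpa only [t1Coeff_mul] using hT1 k (hw.trans (Finset.mem_Icc.1 hk).1)

/-- Let `q ∈ (0,1)`, `max(0, 1-2q) < z_1 < min(1-q, 1/2)`, `f_{W_q}`
a pmf on the nonnegative integers and `(η_s)` i.i.d. standard normals.  Suppose the
Gaussian series `T^{(1)}_n` converges almost surely for each `n ≥ 1`.  If, for a fixed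
`w ≥ 1`, `T^{(2)}_{j,w}` converges in distribution as `j → ∞` (to some probability
measure `ν`, in the sense of convergence of integrals of bounded continuous
functions), then necessarily
`R_{q,w} = ∑_{s=w}^∞ C(s,w)² (1-q)^{2(s-w)} q^{-2s} f_{W_q}(s) < ∞`. -/
theorem stmt14 {Ω : Type*} [MeasurableSpace Ω] (μ : Measure Ω) [IsProbabilityMeasure μ]
    (q z1 : ℝ) (hq0 : 0 < q) (hq1 : q < 1)
    (hz1l : max 0 (1 - 2 * q) < z1) (hz1u : z1 < min (1 - q) (1 / 2))
    (fWq : ℕ → ℝ) (hfnn : ∀ s, 0 ≤ fWq s) (hfsum : HasSum fWq 1)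
    (η : ℕ → Ω → ℝ) (hηmeas : ∀ s, Measurable (η s))
    (hηindep : iIndepFun η μ)
    (hηgauss : ∀ s, μ.map (η s) = gaussianReal 0 1)
    (hT1 : ∀ n : ℕ, 1 ≤ n →
      ∀ᵐ ω ∂μ, Summable (fun s : ℕ =>
        if n ≤ s then
          (s.choose n : ℝ) * ((z1 - (1 - q)) ^ (s - n) / q ^ s)
            * Real.sqrt (fWq s) * η s ω
        else 0))
    (w : ℕ) (hw : 1 ≤ w)
    (hconv : ∃ ν : Measure ℝ, IsProbabilityMeasure ν ∧
      ∀ f : ℝ →ᵇ ℝ,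
        Tendsto (fun j : ℕ => ∫ ω, f (T2 q z1 fWq η j w ω) ∂μ) atTop
          (nhds (∫ x, f x ∂ν))) :
    Summable (fun s : ℕ =>
      if w ≤ s then
        (s.choose w : ℝ) ^ 2 * (1 - q) ^ (2 * (s - w)) / q ^ (2 * s) * fWq s
      else 0) :=
  stmt14_general μ q z1 fWq hfnn η hηmeas hηindep hηgauss hT1 w hw hconv

end Stmt14
end

section
/- Let q ∈ (0,1) and 0 < b < b'. For a real sequence x = (x_n)_{n≥0} write ‖x‖_{∞,a} = sup_{n≥0} a^n |x_n|, and define S(x)_n = Σ_{i=n}^∞ C(i,n) (−1)^{i−n} q^{−i} (1−q)^{i−n} x_i for n ≥ 1. If x and y are real sequences with ‖x‖_{∞,(b'+1−q)/q} < ∞ and ‖y‖_{∞,(b'+1−q)/q} < ∞, then the series defining S(x)_n and S(y)_n converge absolutely for every n ≥ 1, and ‖S(x) − S(y)‖_{∞,b} ≤ ((b' + 1 − q)/(b' − b)) · ‖x − y‖_{∞,(b'+1−q)/q}. -/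
/-!
Put `B = b' + 1 - q` and `r = (1 - q) / B < 1`. If `(B/q)^i |z_i| ≤ C` for all `i`, the `i`-th
summand of `S(z)_n` is bounded by `C B^{-n} C(i,n) r^{i-n}`, and the negative-binomial series
`∑_i C(i,n) r^{i-n} = (1 - r)^{-(n+1)}` gives absolute convergence together with
`|S(z)_n| ≤ C B / b'^{n+1}`. Since `S` is linear, applying this to `z = x - y` with
`C = ‖x - y‖_{∞,B/q}` and multiplying by `b^n ≤ b'^n` yields the Lipschitz bound, even with
the constant `B / b' ≤ B / (b' - b)`.
-/

namespace Stmt15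

/-- The weighted sup "norm" `‖x‖_{∞,a} = sup_{n ≥ 0} a^n |x_n|`. -/
noncomputable def wnorm (a : ℝ) (x : ℕ → ℝ) : ℝ := ⨆ n : ℕ, a ^ n * |x n|

/-- `S(x)_n = ∑_{i=n}^∞ C(i,n) (-1)^{i-n} q^{-i} (1-q)^{i-n} x_i`. -/
noncomputable def S (q : ℝ) (x : ℕ → ℝ) (n : ℕ) : ℝ :=
  ∑' i : ℕ, if n ≤ i then
    (i.choose n : ℝ) * (-1 : ℝ) ^ (i - n) * (1 - q) ^ (i - n) / q ^ i * x i else 0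

open Finset

theorem hasSum_choose_mul_geometric_sub {𝕜 : Type*} [NormedField 𝕜] [CompleteSpace 𝕜]
    (n : ℕ) {r : 𝕜} (hr : ‖r‖ < 1) :
    HasSum (fun i : ℕ => (i.choose n : 𝕜) * r ^ (i - n)) (1 / (1 - r) ^ (n + 1)) := by
  have hvanish : ∑ i ∈ range n, (i.choose n : 𝕜) * r ^ (i - n) = 0 :=
    sum_eq_zero fun i hi => by simp [Nat.choose_eq_zero_of_lt (mem_range.mp hi)]
  rw [← hasSum_nat_add_iff' n, hvanish, sub_zero]
  simpa using hasSum_choose_mul_geometric_of_norm_lt_one n hr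

noncomputable def sTerm (q : ℝ) (x : ℕ → ℝ) (n i : ℕ) : ℝ :=
  if n ≤ i then (i.choose n : ℝ) * (-1 : ℝ) ^ (i - n) * (1 - q) ^ (i - n) / q ^ i * x i else 0

theorem S_eq_tsum_sTerm (q : ℝ) (x : ℕ → ℝ) (n : ℕ) : S q x n = ∑' i, sTerm q x n i := rfl

theorem sTerm_sub (q : ℝ) (x y : ℕ → ℝ) (n i : ℕ) :
    sTerm q (x - y) n i = sTerm q x n i - sTerm q y n i := by
  unfold sTerm
  split_ifs
  · simp only [Pi.sub_apply]; ring
  · simp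

theorem S_sub {q : ℝ} {x y : ℕ → ℝ} {n : ℕ} (hx : Summable (sTerm q x n))
    (hy : Summable (sTerm q y n)) : S q x n - S q y n = S q (x - y) n := by
  simp only [S_eq_tsum_sTerm, sTerm_sub, hx.tsum_sub hy]

theorem abs_sTerm_le {q B C : ℝ} {z : ℕ → ℝ} (hq0 : 0 < q) (hq1 : q ≤ 1) (hB : 0 < B)
    (hC : ∀ i, (B / q) ^ i * |z i| ≤ C) (n i : ℕ) :
    |sTerm q z n i| ≤ C / B ^ n * ((i.choose n : ℝ) * ((1 - q) / B) ^ (i - n)) := by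
  unfold sTerm
  split_ifs with hni
  · obtain ⟨k, rfl⟩ := Nat.exists_eq_add_of_le hni
    rw [Nat.add_sub_cancel_left]
    have hq1' : 0 ≤ 1 - q := by linarith
    calc |((n + k).choose n : ℝ) * (-1) ^ k * (1 - q) ^ k / q ^ (n + k) * z (n + k)|
        = ((n + k).choose n : ℝ) * (1 - q) ^ k / B ^ (n + k)
            * ((B / q) ^ (n + k) * |z (n + k)|) := by
          rw [abs_mul, abs_div, abs_mul, abs_mul, abs_pow, abs_pow, abs_pow, abs_neg, abs_one,
            one_pow, mul_one, abs_of_nonneg hq1', abs_of_pos hq0,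
            Nat.abs_cast, div_pow]
          field_simp
      _ ≤ ((n + k).choose n : ℝ) * (1 - q) ^ k / B ^ (n + k) * C := by gcongr; exact hC _
      _ = C / B ^ n * (((n + k).choose n : ℝ) * ((1 - q) / B) ^ k) := by
          rw [div_pow, pow_add]
          field_simp
  · simp [Nat.choose_eq_zero_of_lt (not_le.mp hni)]

theorem hasSum_sTerm_majorant {q b' : ℝ} (hq1 : q ≤ 1) (hb' : 0 < b') (C : ℝ) (n : ℕ) :
    HasSum (fun i : ℕ => C / (b' + 1 - q) ^ n *
        ((i.choose n : ℝ) * ((1 - q) / (b' + 1 - q)) ^ (i - n)))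
      (C * (b' + 1 - q) / b' ^ (n + 1)) := by
  have hB : 0 < b' + 1 - q := by linarith
  have hr : ‖(1 - q) / (b' + 1 - q)‖ < 1 := by
    rw [Real.norm_of_nonneg (div_nonneg (by linarith) hB.le), div_lt_one hB]
    linarith
  have hsum : C / (b' + 1 - q) ^ n * (1 / (1 - (1 - q) / (b' + 1 - q)) ^ (n + 1))
      = C * (b' + 1 - q) / b' ^ (n + 1) := by
    rw [one_sub_div hB.ne', show b' + 1 - q - (1 - q) = b' by ring, div_pow]
    field_simp
    ring
  exact hsum ▸ (hasSum_choose_mul_geometric_sub n hr).mul_left (C / (b' + 1 - q) ^ n)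

theorem summable_abs_sTerm {q b' C : ℝ} {z : ℕ → ℝ} (hq0 : 0 < q) (hq1 : q ≤ 1) (hb' : 0 < b')
    (hC : ∀ i, ((b' + 1 - q) / q) ^ i * |z i| ≤ C) (n : ℕ) :
    Summable fun i => |sTerm q z n i| :=
  (hasSum_sTerm_majorant hq1 hb' C n).summable.of_nonneg_of_le (fun _ => abs_nonneg _)
    (abs_sTerm_le hq0 hq1 (by linarith) hC n)

theorem abs_S_le {q b' C : ℝ} {z : ℕ → ℝ} (hq0 : 0 < q) (hq1 : q ≤ 1) (hb' : 0 < b')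
    (hC : ∀ i, ((b' + 1 - q) / q) ^ i * |z i| ≤ C) (n : ℕ) :
    |S q z n| ≤ C * (b' + 1 - q) / b' ^ (n + 1) :=
  tsum_of_norm_bounded (f := sTerm q z n) (hasSum_sTerm_majorant hq1 hb' C n)
    (abs_sTerm_le hq0 hq1 (by linarith) hC n)

theorem le_wnorm {a : ℝ} {x : ℕ → ℝ} (hx : BddAbove (Set.range fun n => a ^ n * |x n|)) (n : ℕ) :
    a ^ n * |x n| ≤ wnorm a x :=
  le_ciSup hx n

theorem wnorm_le {a M : ℝ} {x : ℕ → ℝ} (h : ∀ n, a ^ n * |x n| ≤ M) : wnorm a x ≤ M :=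
  ciSup_le h

theorem bddAbove_weighted_sub {a : ℝ} (ha : 0 ≤ a) {x y : ℕ → ℝ}
    (hx : BddAbove (Set.range fun n => a ^ n * |x n|))
    (hy : BddAbove (Set.range fun n => a ^ n * |y n|)) :
    BddAbove (Set.range fun n => a ^ n * |x n - y n|) := by
  obtain ⟨Cx, hCx⟩ := hx
  obtain ⟨Cy, hCy⟩ := hy
  refine ⟨Cx + Cy, Set.forall_mem_range.mpr fun n => ?_⟩
  calc a ^ n * |x n - y n| ≤ a ^ n * |x n| + a ^ n * |y n| := by
        rw [← mul_add]; gcongr; exact abs_sub _ _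
    _ ≤ Cx + Cy := add_le_add (hCx ⟨n, rfl⟩) (hCy ⟨n, rfl⟩)

/-- Let `q ∈ (0,1)` and `0 < b < b'`.  If `x`, `y` are real
sequences with `‖x‖_{∞,(b'+1-q)/q} < ∞` and `‖y‖_{∞,(b'+1-q)/q} < ∞` (expressed as
boundedness of the corresponding weighted sequences), then the series defining
`S(x)_n` and `S(y)_n` converge absolutely for every `n ≥ 1`, and
`‖S(x) - S(y)‖_{∞,b} ≤ ((b'+1-q)/(b'-b)) ‖x - y‖_{∞,(b'+1-q)/q}`. -/
theorem stmt15 (q b b' : ℝ) (hq0 : 0 < q) (hq1 : q < 1) (hb : 0 < b) (hbb' : b < b')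
    (x y : ℕ → ℝ)
    (hx : BddAbove (Set.range fun n : ℕ => ((b' + 1 - q) / q) ^ n * |x n|))
    (hy : BddAbove (Set.range fun n : ℕ => ((b' + 1 - q) / q) ^ n * |y n|)) :
    (∀ n : ℕ, 1 ≤ n →
      Summable (fun i : ℕ =>
        |if n ≤ i then
            (i.choose n : ℝ) * (-1 : ℝ) ^ (i - n) * (1 - q) ^ (i - n) / q ^ i * x i
          else 0|)
      ∧ Summable (fun i : ℕ =>
        |if n ≤ i then
            (i.choose n : ℝ) * (-1 : ℝ) ^ (i - n) * (1 - q) ^ (i - n) / q ^ i * y i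
          else 0|))
    ∧ wnorm b (fun n => S q x n - S q y n)
        ≤ (b' + 1 - q) / (b' - b) * wnorm ((b' + 1 - q) / q) (fun n => x n - y n) := by
  have hb' : 0 < b' := hb.trans hbb'
  have hweight : 0 ≤ (b' + 1 - q) / q := div_nonneg (by linarith) hq0.le
  obtain ⟨Cx, hCx⟩ := hx
  obtain ⟨Cy, hCy⟩ := hy
  have hsx := summable_abs_sTerm hq0 hq1.le hb' (fun i => hCx ⟨i, rfl⟩)
  have hsy := summable_abs_sTerm hq0 hq1.le hb' (fun i => hCy ⟨i, rfl⟩)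
  refine ⟨fun n _ => ⟨hsx n, hsy n⟩, wnorm_le fun n => ?_⟩
  set M := wnorm ((b' + 1 - q) / q) (fun n => x n - y n)
  have hM := le_wnorm (bddAbove_weighted_sub hweight ⟨Cx, hCx⟩ ⟨Cy, hCy⟩)
  have hM0 : 0 ≤ M := (by positivity : (0 : ℝ) ≤ _).trans (hM 0)
  rw [S_sub (hsx n).of_abs (hsy n).of_abs]
  calc b ^ n * |S q (x - y) n| ≤ b' ^ n * (M * (b' + 1 - q) / b' ^ (n + 1)) := by
        gcongr
        exact abs_S_le hq0 hq1.le hb' hM n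
    _ = (b' + 1 - q) / b' * M := by
        rw [pow_succ]
        field_simp
    _ ≤ (b' + 1 - q) / (b' - b) * M := by
        gcongr <;> linarith

end Stmt15
end

section
/- Let x(z) = Σ_{n=1}^∞ x_n z^n, y(z) = Σ_{n=1}^∞ y_n z^n and ε(z) = Σ_{n=1}^∞ ε_n z^n be formal power series over ℝ with zero constant term. Then for every n ≥ 1, the n-th coefficient satisfies |(x∘(y+ε) − x∘y)_n| ≤ ((x^{(1)}_+ ∘ (y_+ + ε_+)) * ε_+)_n. -/
namespace Stmt17

open PowerSeries

/-- Coefficient-wise absolute value `u_+` of a formal power series. -/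
noncomputable def psabs (u : PowerSeries ℝ) : PowerSeries ℝ :=
  PowerSeries.mk fun n => |PowerSeries.coeff n u|

/-- Formal derivative `u^{(1)}` of a formal power series. -/
noncomputable def psderiv (u : PowerSeries ℝ) : PowerSeries ℝ :=
  PowerSeries.mk fun n => (n + 1 : ℝ) * PowerSeries.coeff (n + 1) u

/-- Formal composition `u ∘ v` (well defined, coefficient by coefficient, when `v` has
zero constant term): `(u ∘ v)_n = ∑_{m=0}^n u_m · (v^m)_n`. -/
noncomputable def pscomp (u v : PowerSeries ℝ) : PowerSeries ℝ :=
  PowerSeries.mk fun n =>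
    ∑ m ∈ Finset.range (n + 1), PowerSeries.coeff m u * PowerSeries.coeff n (v ^ m)

/-! Expand with the formal mean value theorem
`(y + ε)^m - y^m = (∑_{i<m} (y + ε)^i y^{m-1-i}) ε`, estimated with majorants: every factor
`y + ε` or `y` is majorized by `y_+ + ε_+`, so the `n`-th coefficient of the difference is at most
`m ((y_+ + ε_+)^{m-1} ε_+)_n`. Summing against `|x_m|` gives the coefficients of
`x^{(1)}_+ ∘ (y_+ + ε_+)`, up to the truncation in the composition, which is harmless because
`(y_+ + ε_+)^k` has no coefficients below degree `k`. -/

section Majorant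

variable {R : Type*} [CommRing R] [LinearOrder R] [IsStrictOrderedRing R]

def Majorizes (a u : R⟦X⟧) : Prop :=
  ∀ n, |coeff n u| ≤ coeff n a

theorem Majorizes.coeff_nonneg {a u : R⟦X⟧} (h : Majorizes a u) (n : ℕ) : 0 ≤ coeff n a :=
  (abs_nonneg _).trans (h n)

theorem Majorizes.mul {a b u v : R⟦X⟧} (hu : Majorizes a u) (hv : Majorizes b v) :
    Majorizes (a * b) (u * v) := by
  intro n
  rw [coeff_mul, coeff_mul]
  refine (Finset.abs_sum_le_sum_abs _ _).trans (Finset.sum_le_sum fun p _ => ?_)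
  rw [abs_mul]
  exact mul_le_mul (hu _) (hv _) (abs_nonneg _) (hu.coeff_nonneg _)

theorem Majorizes.pow {a u : R⟦X⟧} (hu : Majorizes a u) (k : ℕ) :
    Majorizes (a ^ k) (u ^ k) := by
  induction k with
  | zero =>
    intro n
    rcases eq_or_ne n 0 with rfl | hn <;> simp [coeff_one, *]
  | succ k ih => simpa only [pow_succ] using ih.mul hu

theorem abs_coeff_pow_sub_pow_le {a b s e : R⟦X⟧} (ha : Majorizes s a) (hb : Majorizes s b)
    (hab : Majorizes e (a - b)) (m n : ℕ) :
    |coeff n (a ^ m - b ^ m)| ≤ m * coeff n (s ^ (m - 1) * e) := by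
  rw [← geom_sum₂_mul, Finset.sum_mul, map_sum]
  refine (Finset.abs_sum_le_sum_abs _ _).trans ?_
  calc ∑ i ∈ Finset.range m, |coeff n (a ^ i * b ^ (m - 1 - i) * (a - b))|
      ≤ ∑ _i ∈ Finset.range m, coeff n (s ^ (m - 1) * e) := by
        refine Finset.sum_le_sum fun i hi => ?_
        have hsplit : s ^ (m - 1) = s ^ i * s ^ (m - 1 - i) := by
          rw [← pow_add]; congr 1; have := Finset.mem_range.mp hi; omega
        rw [hsplit]
        exact ((ha.pow i).mul (hb.pow _)).mul hab n
    _ = m * coeff n (s ^ (m - 1) * e) := by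
        rw [Finset.sum_const, Finset.card_range, nsmul_eq_mul]

end Majorant

theorem coeff_pow_eq_zero_of_lt {R : Type*} [CommSemiring R] {v : R⟦X⟧}
    (hv : constantCoeff v = 0) {k p : ℕ} (hpk : p < k) : coeff p (v ^ k) = 0 :=
  coeff_of_lt_order p ((Nat.cast_lt.mpr hpk).trans_le (le_order_pow_of_constantCoeff_eq_zero k hv))

theorem majorizes_psabs (u : PowerSeries ℝ) : Majorizes (psabs u) u := fun n => by
  simp [psabs]

theorem coeff_pscomp_sub (x u v : PowerSeries ℝ) (n : ℕ) :
    coeff n (pscomp x u - pscomp x v) =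
      ∑ m ∈ Finset.range (n + 1), coeff m x * coeff n (u ^ m - v ^ m) := by
  simp only [map_sub, pscomp, coeff_mk, ← Finset.sum_sub_distrib, mul_sub]

theorem coeff_pscomp_mul {v : PowerSeries ℝ} (hv : constantCoeff v = 0) (u e : PowerSeries ℝ)
    (n : ℕ) :
    coeff n (pscomp u v * e) = ∑ k ∈ Finset.range (n + 1), coeff k u * coeff n (v ^ k * e) := by
  simp only [coeff_mul, Finset.mul_sum, pscomp, coeff_mk, Finset.sum_mul, mul_assoc]
  rw [Finset.sum_comm]
  refine Finset.sum_congr rfl fun pq hpq => ?_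
  have hp : pq.1 + 1 ≤ n + 1 := by
    have := Finset.HasAntidiagonal.mem_antidiagonal.mp hpq; omega
  refine Finset.sum_subset (Finset.range_subset_range.mpr hp) fun k _ hk => ?_
  rw [coeff_pow_eq_zero_of_lt hv (by simpa using hk)]
  ring

theorem abs_coeff_pscomp_sub_le {a b s e : PowerSeries ℝ} (ha : Majorizes s a)
    (hb : Majorizes s b) (hab : Majorizes e (a - b)) (x : PowerSeries ℝ) (n : ℕ) :
    |coeff n (pscomp x a - pscomp x b)| ≤
      ∑ k ∈ Finset.range n, coeff k (psderiv (psabs x)) * coeff n (s ^ k * e) := by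
  rw [coeff_pscomp_sub]
  refine (Finset.abs_sum_le_sum_abs _ _).trans ?_
  calc ∑ m ∈ Finset.range (n + 1), |coeff m x * coeff n (a ^ m - b ^ m)|
      ≤ ∑ m ∈ Finset.range (n + 1), m * |coeff m x| * coeff n (s ^ (m - 1) * e) := by
        refine Finset.sum_le_sum fun m _ => ?_
        rw [abs_mul]
        exact (mul_le_mul_of_nonneg_left (abs_coeff_pow_sub_pow_le ha hb hab m n)
          (abs_nonneg _)).trans_eq (by ring)
    _ = ∑ k ∈ Finset.range n, coeff k (psderiv (psabs x)) * coeff n (s ^ k * e) := by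
        simp [Finset.sum_range_succ' _ n, psderiv, psabs, mul_assoc]

theorem stmt17_general (x y ε : PowerSeries ℝ)
    (hy : PowerSeries.constantCoeff y = 0)
    (hε : PowerSeries.constantCoeff ε = 0) :
    ∀ n : ℕ, 1 ≤ n →
      |PowerSeries.coeff n (pscomp x (y + ε) - pscomp x y)|
        ≤ PowerSeries.coeff n (pscomp (psderiv (psabs x)) (psabs y + psabs ε) * psabs ε) := by
  intro n _
  set s := psabs y + psabs ε
  have hs : constantCoeff s = 0 := by
    rw [← coeff_zero_eq_constantCoeff_apply] at hy hε ⊢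
    simp [s, psabs, hy, hε]
  have hsum : Majorizes s (y + ε) := fun m => by simpa [s, psabs] using abs_add_le _ _
  have hy' : Majorizes s y := fun m => by simp [s, psabs]
  have hdiff : Majorizes (psabs ε) (y + ε - y) := by simpa using majorizes_psabs ε
  rw [coeff_pscomp_mul hs, Finset.sum_range_succ]
  refine (abs_coeff_pscomp_sub_le hsum hy' hdiff x n).trans (le_add_of_nonneg_right ?_)
  exact mul_nonneg (by simp only [psderiv, psabs, coeff_mk]; positivity)
    (((hsum.pow n).mul hdiff).coeff_nonneg n)

/-- For formal power series `x`, `y`, `ε` over `ℝ` with zero constant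
term, for every `n ≥ 1`,
`|(x∘(y+ε) - x∘y)_n| ≤ ((x^{(1)}_+ ∘ (y_+ + ε_+)) * ε_+)_n`. -/
theorem stmt17 (x y ε : PowerSeries ℝ)
    (hx : PowerSeries.constantCoeff x = 0)
    (hy : PowerSeries.constantCoeff y = 0)
    (hε : PowerSeries.constantCoeff ε = 0) :
    ∀ n : ℕ, 1 ≤ n →
      |PowerSeries.coeff n (pscomp x (y + ε) - pscomp x y)|
        ≤ PowerSeries.coeff n (pscomp (psderiv (psabs x)) (psabs y + psabs ε) * psabs ε) :=
  stmt17_general x y ε hy hε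

end Stmt17
end

section
/- Let x(z) = Σ_{n=1}^∞ x_n z^n, y(z) = Σ_{n=1}^∞ y_n z^n and ε(z) = Σ_{n=1}^∞ ε_n z^n be formal power series over ℝ with zero constant term. Then for every n ≥ 1, the n-th coefficient satisfies |(x∘(y+ε) − x∘y − (x^{(1)}∘y) * ε)_n| ≤ (1/2) ((x^{(2)}_+ ∘ (y_+ + ε_+)) * ε_+ * ε_+)_n. -/
/-!
Writing `v ∘ w` as `∑ₘ vₘ wᵐ` (only `m ≤ n` matters for the `n`-th coefficient, since `wᵐ` has
order `≥ m`), the left-hand side is `∑ₘ x_{m+2} Rₘ` with the Taylor remainder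
`Rₘ = (y + ε)^(m+2) - y^(m+2) - (m+2) y^(m+1) ε = ε² ∑_{i+j=m} (i+1) yⁱ (y+ε)ʲ`.
Replacing `y`, `ε` by their coefficientwise majorants `y₊`, `ε₊` bounds each of the
`(m+1)(m+2)/2` summands by `ε₊² (y₊ + ε₊)ᵐ`, and `(m+1)(m+2) |x_{m+2}|` is the `m`-th
coefficient of `x₊⁽²⁾`.
-/

namespace Stmt18

open PowerSeries

/-- Coefficient-wise absolute value `u_+` of a formal power series. -/
noncomputable def psabs (u : PowerSeries ℝ) : PowerSeries ℝ :=
  PowerSeries.mk fun n => |PowerSeries.coeff n u|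

/-- Formal derivative `u^{(1)}` of a formal power series. -/
noncomputable def psderiv (u : PowerSeries ℝ) : PowerSeries ℝ :=
  PowerSeries.mk fun n => (n + 1 : ℝ) * PowerSeries.coeff (n + 1) u

/-- Formal composition `u ∘ v` (well defined, coefficient by coefficient, when `v` has
zero constant term): `(u ∘ v)_n = ∑_{m=0}^n u_m · (v^m)_n`. -/
noncomputable def pscomp (u v : PowerSeries ℝ) : PowerSeries ℝ :=
  PowerSeries.mk fun n =>
    ∑ m ∈ Finset.range (n + 1), PowerSeries.coeff m u * PowerSeries.coeff n (v ^ m)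

open Finset

theorem add_pow_sub_pow_sub_nsmul {R : Type*} [CommRing R] (a b : R) (m : ℕ) :
    (a + b) ^ (m + 2) - a ^ (m + 2) - (m + 2) • (a ^ (m + 1) * b) =
      b ^ 2 * ∑ p ∈ antidiagonal m, (p.1 + 1) • (a ^ p.1 * (a + b) ^ p.2) := by
  induction m with
  | zero =>
    simp only [zero_add, pow_one, nsmul_eq_mul, Nat.cast_ofNat, HasAntidiagonal.antidiagonal_zero,
      sum_singleton, pow_zero]
    ring
  | succ m ih =>
    have shift : ∑ p ∈ antidiagonal m, (p.1 + 1) • (a ^ p.1 * (a + b) ^ (p.2 + 1)) =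
        (a + b) * ∑ p ∈ antidiagonal m, (p.1 + 1) • (a ^ p.1 * (a + b) ^ p.2) := by
      rw [mul_sum]
      exact sum_congr rfl fun p _ => by rw [mul_smul_comm]; ring
    rw [Nat.sum_antidiagonal_succ', shift]
    linear_combination (a + b) * ih

theorem sum_antidiagonal_fst_add_one_mul_two (m : ℕ) :
    (∑ p ∈ antidiagonal m, (p.1 + 1)) * 2 = (m + 1) * (m + 2) := by
  induction m with
  | zero => simp
  | succ m ih => rw [Nat.sum_antidiagonal_succ', add_mul, ih]; ring

def MajorizedBy (u U : PowerSeries ℝ) : Prop := ∀ n, |coeff n u| ≤ coeff n U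

theorem majorizedBy_psabs (u : PowerSeries ℝ) : MajorizedBy u (psabs u) := fun n => by
  rw [psabs, coeff_mk]

theorem constantCoeff_psabs (u : PowerSeries ℝ) : constantCoeff (psabs u) = |constantCoeff u| := by
  rw [← coeff_zero_eq_constantCoeff_apply, psabs, coeff_mk, coeff_zero_eq_constantCoeff_apply]

theorem majorizedBy_one : MajorizedBy 1 1 := fun n => by
  rw [coeff_one]; split_ifs <;> simp

namespace MajorizedBy

variable {u v U V : PowerSeries ℝ}

theorem nonneg (hu : MajorizedBy u U) (n : ℕ) : 0 ≤ coeff n U :=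
  (abs_nonneg _).trans (hu n)

theorem add (hu : MajorizedBy u U) (hv : MajorizedBy v V) : MajorizedBy (u + v) (U + V) :=
  fun n => by rw [map_add, map_add]; exact (abs_add_le _ _).trans (add_le_add (hu n) (hv n))

theorem add_majorant (hu : MajorizedBy u U) (hv : MajorizedBy v V) : MajorizedBy u (U + V) :=
  fun n => by rw [map_add]; linarith [hu n, hv.nonneg n]

theorem mul (hu : MajorizedBy u U) (hv : MajorizedBy v V) : MajorizedBy (u * v) (U * V) :=
  fun n => by
    rw [coeff_mul, coeff_mul]
    refine (abs_sum_le_sum_abs _ _).trans (sum_le_sum fun p _ => ?_)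
    rw [abs_mul]
    exact mul_le_mul (hu _) (hv _) (abs_nonneg _) (hu.nonneg _)

theorem pow (hu : MajorizedBy u U) (m : ℕ) : MajorizedBy (u ^ m) (U ^ m) := by
  induction m with
  | zero => simpa using majorizedBy_one
  | succ m ih => rw [pow_succ, pow_succ]; exact ih.mul hu

theorem smul (hu : MajorizedBy u U) (c : ℝ) : MajorizedBy (c • u) (|c| • U) := fun n => by
  rw [coeff_smul, coeff_smul, smul_eq_mul, smul_eq_mul, abs_mul]
  exact mul_le_mul_of_nonneg_left (hu n) (abs_nonneg c)

theorem nsmul (hu : MajorizedBy u U) (k : ℕ) : MajorizedBy (k • u) (k • U) := by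
  simpa only [Nat.cast_smul_eq_nsmul, Nat.abs_cast] using hu.smul k

theorem sum {ι : Type*} {s : Finset ι} {f F : ι → PowerSeries ℝ}
    (h : ∀ i ∈ s, MajorizedBy (f i) (F i)) : MajorizedBy (∑ i ∈ s, f i) (∑ i ∈ s, F i) :=
  fun n => by
    rw [map_sum, map_sum]
    exact (abs_sum_le_sum_abs _ _).trans (sum_le_sum fun i hi => h i hi n)

theorem taylor_remainder {a b A B : PowerSeries ℝ} (ha : MajorizedBy a A)
    (hb : MajorizedBy b B) (m : ℕ) :
    MajorizedBy ((a + b) ^ (m + 2) - a ^ (m + 2) - (m + 2) • (a ^ (m + 1) * b))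
      (((m + 1) * (m + 2) / 2 : ℝ) • (B ^ 2 * (A + B) ^ m)) := by
  have hsum : MajorizedBy (∑ p ∈ antidiagonal m, (p.1 + 1) • (a ^ p.1 * (a + b) ^ p.2))
      (∑ p ∈ antidiagonal m, (p.1 + 1) • ((A + B) ^ p.1 * (A + B) ^ p.2)) :=
    sum fun p _ => (((ha.add_majorant hb).pow _).mul ((ha.add hb).pow _)).nsmul _
  have count : ∑ p ∈ antidiagonal m, (p.1 + 1) • ((A + B) ^ p.1 * (A + B) ^ p.2) =
      ((m + 1) * (m + 2) / 2 : ℝ) • (A + B) ^ m := by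
    rw [sum_congr rfl fun p hp => by rw [← pow_add, mem_antidiagonal.mp hp], ← sum_smul,
      ← Nat.cast_smul_eq_nsmul ℝ]
    congr 1
    have := congrArg (Nat.cast (R := ℝ)) (sum_antidiagonal_fst_add_one_mul_two m)
    push_cast at this ⊢
    linarith
  rw [add_pow_sub_pow_sub_nsmul, ← mul_smul_comm, ← count]
  exact (hb.pow 2).mul hsum

end MajorizedBy

noncomputable def compTrunc (N : ℕ) (u v : PowerSeries ℝ) : PowerSeries ℝ :=
  ∑ m ∈ range N, coeff m u • v ^ m

theorem compTrunc_mul (N : ℕ) (u v w : PowerSeries ℝ) :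
    compTrunc N u v * w = ∑ m ∈ range N, coeff m u • (v ^ m * w) := by
  simp only [compTrunc, sum_mul, smul_mul_assoc]

theorem coeff_pscomp_eq_coeff_compTrunc {u v : PowerSeries ℝ} (hv : constantCoeff v = 0)
    {n N : ℕ} (h : n < N) : coeff n (pscomp u v) = coeff n (compTrunc N u v) := by
  simp only [pscomp, coeff_mk, compTrunc, map_sum, coeff_smul, smul_eq_mul]
  refine sum_subset (range_subset_range.mpr h) fun m hm hm' => ?_
  have hnm : n < m := by simp only [mem_range, not_lt] at hm' ⊢; omega
  rw [X_pow_dvd_iff.mp (pow_dvd_pow_of_dvd (X_dvd_iff.mpr hv) m) n hnm, mul_zero]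

theorem coeff_pscomp_mul_eq_coeff_compTrunc_mul {u v : PowerSeries ℝ}
    (hv : constantCoeff v = 0) (w : PowerSeries ℝ) {n N : ℕ} (h : n < N) :
    coeff n (pscomp u v * w) = coeff n (compTrunc N u v * w) := by
  rw [coeff_mul, coeff_mul]
  refine sum_congr rfl fun p hp => ?_
  rw [coeff_pscomp_eq_coeff_compTrunc hv ((HasAntidiagonal.antidiagonal.fst_le hp).trans_lt h)]

theorem coeff_psderiv_psderiv (u : PowerSeries ℝ) (m : ℕ) :
    coeff m (psderiv (psderiv u)) = (m + 1) * (m + 2) * coeff (m + 2) u := by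
  simp only [psderiv, coeff_mk]
  push_cast
  ring

theorem compTrunc_taylor (N : ℕ) (x y ε : PowerSeries ℝ) :
    compTrunc (N + 2) x (y + ε) - compTrunc (N + 2) x y - compTrunc (N + 1) (psderiv x) y * ε =
      ∑ m ∈ range N, coeff (m + 2) x •
        ((y + ε) ^ (m + 2) - y ^ (m + 2) - (m + 2) • (y ^ (m + 1) * ε)) := by
  have hderiv (m : ℕ) : coeff m (psderiv x) • y ^ m * ε =
      coeff (m + 1) x • (m + 1) • (y ^ m * ε) := by
    rw [psderiv, coeff_mk, smul_mul_assoc, mul_comm, mul_smul, ← Nat.cast_smul_eq_nsmul ℝ]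
    push_cast
    ring_nf
  rw [compTrunc, compTrunc, compTrunc, sum_range_succ' _ (N + 1), sum_range_succ' _ N,
    sum_range_succ' _ (N + 1), sum_range_succ' _ N, sum_range_succ' _ N, add_mul, sum_mul,
    sum_congr rfl fun m _ => hderiv (m + 1), hderiv]
  simp only [smul_sub, sum_sub_distrib, pow_zero, pow_one, smul_add, zero_add, one_smul, one_mul]
  abel

theorem majorizedBy_compTrunc_taylor (N : ℕ) (x : PowerSeries ℝ) {y ε Y E : PowerSeries ℝ}
    (hy : MajorizedBy y Y) (hε : MajorizedBy ε E) :
    MajorizedBy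
      (compTrunc (N + 2) x (y + ε) - compTrunc (N + 2) x y - compTrunc (N + 1) (psderiv x) y * ε)
      ((1 / 2 : ℝ) • (compTrunc N (psderiv (psderiv (psabs x))) (Y + E) * (E * E))) := by
  have hterm (m : ℕ) : |coeff (m + 2) x| • (((m + 1) * (m + 2) / 2 : ℝ) • (E ^ 2 * (Y + E) ^ m)) =
      (1 / 2 : ℝ) • (coeff m (psderiv (psderiv (psabs x))) • ((Y + E) ^ m * (E * E))) := by
    rw [coeff_psderiv_psderiv, psabs, coeff_mk, smul_smul, smul_smul, sq, mul_comm (E * E)]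
    ring_nf
  rw [compTrunc_taylor, compTrunc_mul, smul_sum, ← sum_congr rfl fun m _ => hterm m]
  exact MajorizedBy.sum fun m _ => (hy.taylor_remainder hε m).smul _

theorem stmt18_general (x y ε : PowerSeries ℝ)
    (hy : PowerSeries.constantCoeff y = 0)
    (hε : PowerSeries.constantCoeff ε = 0) :
    ∀ n : ℕ, 1 ≤ n →
      |PowerSeries.coeff n (pscomp x (y + ε) - pscomp x y - pscomp (psderiv x) y * ε)|
        ≤ (1 / 2 : ℝ) *
            PowerSeries.coeff n
              (pscomp (psderiv (psderiv (psabs x))) (psabs y + psabs ε)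
                * psabs ε * psabs ε) := by
  intro n _
  have hyε : constantCoeff (y + ε) = 0 := by rw [map_add, hy, hε, add_zero]
  have hYE : constantCoeff (psabs y + psabs ε) = 0 := by
    rw [map_add, constantCoeff_psabs, constantCoeff_psabs, hy, hε, abs_zero, add_zero]
  rw [map_sub, map_sub, coeff_pscomp_eq_coeff_compTrunc hyε (N := n + 1 + 2) (by omega),
    coeff_pscomp_eq_coeff_compTrunc hy (N := n + 1 + 2) (by omega),
    coeff_pscomp_mul_eq_coeff_compTrunc_mul hy ε (N := n + 1 + 1) (by omega), mul_assoc,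
    coeff_pscomp_mul_eq_coeff_compTrunc_mul hYE _ (N := n + 1) (by omega), ← map_sub, ← map_sub,
    ← smul_eq_mul (1 / 2 : ℝ), ← coeff_smul]
  exact majorizedBy_compTrunc_taylor (n + 1) x (majorizedBy_psabs y) (majorizedBy_psabs ε) n

/-- For formal power series `x`, `y`, `ε` over `ℝ` with zero constant
term, for every `n ≥ 1`,
`|(x∘(y+ε) - x∘y - (x^{(1)}∘y) * ε)_n|
   ≤ (1/2) ((x^{(2)}_+ ∘ (y_+ + ε_+)) * ε_+ * ε_+)_n`. -/
theorem stmt18 (x y ε : PowerSeries ℝ)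
    (hx : PowerSeries.constantCoeff x = 0)
    (hy : PowerSeries.constantCoeff y = 0)
    (hε : PowerSeries.constantCoeff ε = 0) :
    ∀ n : ℕ, 1 ≤ n →
      |PowerSeries.coeff n (pscomp x (y + ε) - pscomp x y - pscomp (psderiv x) y * ε)|
        ≤ (1 / 2 : ℝ) *
            PowerSeries.coeff n
              (pscomp (psderiv (psderiv (psabs x))) (psabs y + psabs ε)
                * psabs ε * psabs ε) :=
  stmt18_general x y ε hy hε

end Stmt18
end

section
/- Let q, c ∈ (0,1) and let f_W(w) = c^{w−1}(1−c) for w ≥ 1 (geometric distribution with parameter c). Define f_{W_q}(s) = Σ_{w=s}^∞ C(w,s) q^s (1−q)^{w−s} f_W(w) and R_{q,w} = Σ_{s=w}^∞ C(s,w)^2 (1−q)^{2(s−w)} q^{−2s} f_{W_q}(s). Then: (i) there exists a constant C_1 > 0 (depending on c and q) such that R_{q,w} ≥ C_1 (c/q)^w for all w ≥ 1; (ii) if e^3 c / q ≤ 1, there exists a constant C_2 > 0 (depending on c and q) such that R_{q,w} ≤ C_2 (e^3 c / q)^w for all w ≥ 1. In particular, sup_{w≥1} R_{q,w} < ∞ when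 c/q ≤ e^{−3}, and sup_{w≥1} R_{q,w} = ∞ when c/q > 1. -/
/-!
Summing the negative binomial series gives, for `s ≥ 1`,
`f_{W_q}(s) = (1-c) c^{s-1} q^s / (1 - (1-q)c)^{s+1}`, and `1 - c ≤ 1 - (1-q)c ≤ 1`.
The term `s = w` of `R_{q,w}` alone is therefore at least `(1-c)/c · (c/q)^w`. Conversely,
`C(s,w)² ≤ 4^s` and `(1-q)^{2(s-w)} ≤ 1` dominate the `s`-th term by `u^s / c` with
`u = 4c/(q(1-c))`, so `R_{q,w} ≤ u^w / (c(1-u))`; and `u < e³c/q` because `e³c ≤ q < 1`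
forces `e³(1-c) > 4`.
-/

open scoped ENNReal

namespace Stmt19

/-- `f_W(w) = c^{w-1}(1-c)`, the geometric distribution with parameter `c` on the
positive integers. -/
noncomputable def fW (c : ℝ) (w : ℕ) : ℝ := c ^ (w - 1) * (1 - c)

/-- `f_{W_q}(s) = ∑_{w=s}^∞ C(w,s) q^s (1-q)^{w-s} f_W(w)`. -/
noncomputable def fWq (q c : ℝ) (s : ℕ) : ℝ :=
  ∑' w : ℕ, if s ≤ w then (w.choose s : ℝ) * q ^ s * (1 - q) ^ (w - s) * fW c w else 0

/-- `R_{q,w} = ∑_{s=w}^∞ C(s,w)² (1-q)^{2(s-w)} q^{-2s} f_{W_q}(s)`, as a sum of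
nonnegative terms valued in `ℝ≥0∞` (so a divergent series has value `∞`). -/
noncomputable def R (q c : ℝ) (w : ℕ) : ℝ≥0∞ :=
  ∑' s : ℕ, if w ≤ s then
    ENNReal.ofReal ((s.choose w : ℝ) ^ 2 * (1 - q) ^ (2 * (s - w)) / q ^ (2 * s)
      * fWq q c s)
  else 0

theorem tsum_ite_le_eq_tsum_add {M : Type*} [AddCommMonoid M] [TopologicalSpace M]
    (f : ℕ → M) (k : ℕ) :
    (∑' n, if k ≤ n then f n else 0) = ∑' n, f (n + k) := by
  rw [← (add_left_injective k).tsum_eq (f := fun n => if k ≤ n then f n else 0)]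
  · simp only [le_add_iff_nonneg_left, zero_le, if_true]
  · intro n hn
    refine ⟨n - k, Nat.sub_add_cancel ?_⟩
    by_contra h
    exact hn (if_neg h)

theorem tsum_ite_le_ofReal_mul_pow {a u : ℝ} (ha : 0 ≤ a) (hu0 : 0 ≤ u) (hu1 : u < 1) (w : ℕ) :
    (∑' s, if w ≤ s then ENNReal.ofReal (a * u ^ s) else 0) =
      ENNReal.ofReal (a * u ^ w / (1 - u)) := by
  have hsum : Summable fun n => a * u ^ w * u ^ n :=
    (summable_geometric_of_lt_one hu0 hu1).mul_left _
  rw [tsum_ite_le_eq_tsum_add]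
  simp_rw [pow_add, mul_comm (u ^ _) (u ^ w), ← mul_assoc]
  rw [← ENNReal.ofReal_tsum_of_nonneg (fun n => by positivity) hsum, tsum_mul_left,
    tsum_geometric_of_lt_one hu0 hu1, div_eq_mul_inv]

variable {q c : ℝ}

theorem abs_one_sub_mul_lt_one (hq0 : 0 < q) (hq1 : q < 1) (hc0 : 0 < c) (hc1 : c < 1) :
    |(1 - q) * c| < 1 := by
  rw [abs_of_pos (by nlinarith)]
  nlinarith

theorem fWq_eq (h : |(1 - q) * c| < 1) {s : ℕ} (hs : 1 ≤ s) :
    fWq q c s = (1 - c) * c ^ (s - 1) * q ^ s / (1 - (1 - q) * c) ^ (s + 1) := by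
  have hterm : ∀ n : ℕ, ((n + s).choose s : ℝ) * q ^ s * (1 - q) ^ (n + s - s) * fW c (n + s)
      = (1 - c) * c ^ (s - 1) * q ^ s * ((n + s).choose s * ((1 - q) * c) ^ n) := by
    intro n
    rw [fW, Nat.add_sub_cancel, show n + s - 1 = s - 1 + n by omega, pow_add, mul_pow]
    ring
  rw [fWq, tsum_ite_le_eq_tsum_add, tsum_congr hterm, tsum_mul_left,
    tsum_choose_mul_geometric_of_norm_lt_one s (by rwa [Real.norm_eq_abs])]
  ring

theorem mul_pow_le_fWq (hq0 : 0 < q) (hq1 : q < 1) (hc0 : 0 < c) (hc1 : c < 1) {s : ℕ}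
    (hs : 1 ≤ s) : (1 - c) / c * (c * q) ^ s ≤ fWq q c s := by
  have hd0 : 0 < 1 - (1 - q) * c := by nlinarith
  have hd1 : 1 - (1 - q) * c ≤ 1 := by nlinarith
  rw [fWq_eq (abs_one_sub_mul_lt_one hq0 hq1 hc0 hc1) hs]
  calc (1 - c) / c * (c * q) ^ s = (1 - c) * c ^ (s - 1) * q ^ s / 1 := by
        rw [mul_pow, ← pow_sub_one_mul (n := s) (by omega) c]
        field_simp
    _ ≤ _ := by gcongr; exact pow_le_one₀ hd0.le hd1

theorem fWq_le (hq0 : 0 < q) (hq1 : q < 1) (hc0 : 0 < c) (hc1 : c < 1) {s : ℕ} (hs : 1 ≤ s) :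
    fWq q c s ≤ c⁻¹ * (c * q / (1 - c)) ^ s := by
  have hc : 0 < 1 - c := by linarith
  rw [fWq_eq (abs_one_sub_mul_lt_one hq0 hq1 hc0 hc1) hs]
  calc _ ≤ (1 - c) * c ^ (s - 1) * q ^ s / (1 - c) ^ (s + 1) := by
        gcongr
        · nlinarith
    _ = c⁻¹ * (c * q / (1 - c)) ^ s := by
        rw [div_pow, mul_pow, ← pow_sub_one_mul (n := s) (by omega) c, pow_succ]
        field_simp

theorem ofReal_mul_pow_le_R (hq0 : 0 < q) (hq1 : q < 1) (hc0 : 0 < c) (hc1 : c < 1) {w : ℕ}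
    (hw : 1 ≤ w) : ENNReal.ofReal ((1 - c) / c * (c / q) ^ w) ≤ R q c w := by
  refine le_trans ?_ (ENNReal.le_tsum w)
  simp only [le_refl, if_true, Nat.choose_self, Nat.cast_one, one_pow, Nat.sub_self, mul_zero,
    pow_zero, one_mul]
  refine ENNReal.ofReal_le_ofReal ?_
  calc (1 - c) / c * (c / q) ^ w = 1 / q ^ (2 * w) * ((1 - c) / c * (c * q) ^ w) := by
        rw [div_pow, mul_pow, two_mul, pow_add]
        field_simp
    _ ≤ _ := by gcongr; exact mul_pow_le_fWq hq0 hq1 hc0 hc1 hw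

theorem R_term_le (hq0 : 0 < q) (hq1 : q < 1) (hc0 : 0 < c) (hc1 : c < 1) {s w : ℕ}
    (hw : 1 ≤ w) (hws : w ≤ s) :
    (s.choose w : ℝ) ^ 2 * (1 - q) ^ (2 * (s - w)) / q ^ (2 * s) * fWq q c s ≤
      c⁻¹ * (4 * c / (q * (1 - c))) ^ s := by
  have hchoose : (s.choose w : ℝ) ^ 2 ≤ 4 ^ s := by
    calc (s.choose w : ℝ) ^ 2 ≤ ((2 : ℝ) ^ s) ^ 2 := by
          gcongr; exact_mod_cast Nat.choose_le_two_pow s w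
      _ = 4 ^ s := by rw [← pow_mul, mul_comm, pow_mul]; norm_num
  have hfWq : 0 ≤ fWq q c s :=
    le_trans (by positivity) (mul_pow_le_fWq hq0 hq1 hc0 hc1 (hw.trans hws))
  calc _ ≤ 4 ^ s * 1 / q ^ (2 * s) * (c⁻¹ * (c * q / (1 - c)) ^ s) := by
        gcongr
        · exact pow_le_one₀ (by linarith) (by linarith)
        · exact fWq_le hq0 hq1 hc0 hc1 (hw.trans hws)
    _ = c⁻¹ * (4 * c / (q * (1 - c))) ^ s := by
        simp only [div_pow, mul_pow, two_mul, pow_add]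
        field_simp

theorem R_le (hq0 : 0 < q) (hq1 : q < 1) (hc0 : 0 < c) (hc1 : c < 1) {u : ℝ}
    (hu : 4 * c / (q * (1 - c)) ≤ u) (hu1 : u < 1) {w : ℕ} (hw : 1 ≤ w) :
    R q c w ≤ ENNReal.ofReal (c⁻¹ * u ^ w / (1 - u)) := by
  have hu0 : 0 ≤ 4 * c / (q * (1 - c)) := by positivity
  rw [← tsum_ite_le_ofReal_mul_pow (inv_nonneg.2 hc0.le) (hu0.trans hu) hu1]
  refine ENNReal.tsum_le_tsum fun s => ?_
  split_ifs with hws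
  · refine ENNReal.ofReal_le_ofReal ((R_term_le hq0 hq1 hc0 hc1 hw hws).trans ?_)
    gcongr
  · exact le_rfl

theorem exists_R_le_exp_three_mul_pow (hq0 : 0 < q) (hq1 : q < 1) (hc0 : 0 < c) (hc1 : c < 1)
    (h : Real.exp 3 * c / q ≤ 1) :
    ∃ C₂ : ℝ, 0 < C₂ ∧ ∀ w : ℕ, 1 ≤ w →
      R q c w ≤ ENNReal.ofReal (C₂ * (Real.exp 3 * c / q) ^ w) := by
  have hexp : (17 : ℝ) / 2 ≤ Real.exp 3 := by
    have := Real.quadratic_le_exp_of_nonneg (x := 3) (by norm_num)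
    norm_num at this
    linarith
  have hc : Real.exp 3 * c ≤ q := (div_le_one hq0).1 h
  obtain ⟨u, hu_def⟩ : ∃ u, u = 4 * c / (q * (1 - c)) := ⟨_, rfl⟩
  have hu0 : 0 ≤ u := by rw [hu_def]; positivity
  have hu : u < Real.exp 3 * c / q := by
    rw [hu_def, div_lt_div_iff₀ (mul_pos hq0 (by linarith)) hq0]
    nlinarith [mul_pos hc0 hq0]
  have hu1 : u < 1 := hu.trans_le h
  refine ⟨c⁻¹ * (1 - u)⁻¹, by positivity, fun w hw => ?_⟩
  refine (R_le hq0 hq1 hc0 hc1 hu_def.ge hu1 hw).trans (ENNReal.ofReal_le_ofReal ?_)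
  calc c⁻¹ * u ^ w / (1 - u) = c⁻¹ * (1 - u)⁻¹ * u ^ w := by ring
    _ ≤ _ := by gcongr

theorem iSup_lt_top_of_le_ofReal_mul_pow {f : ℕ → ℝ≥0∞} {C x : ℝ} (hC : 0 ≤ C) (hx0 : 0 ≤ x)
    (hx1 : x ≤ 1) (h : ∀ w : ℕ, 1 ≤ w → f w ≤ ENNReal.ofReal (C * x ^ w)) :
    (⨆ w : ℕ, ⨆ _ : 1 ≤ w, f w) < ∞ := by
  refine lt_of_le_of_lt (iSup₂_le fun w hw => (h w hw).trans ?_) (ENNReal.ofReal_lt_top (r := C))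
  exact ENNReal.ofReal_le_ofReal (mul_le_of_le_one_right hC (pow_le_one₀ hx0 hx1))

theorem iSup_eq_top_of_ofReal_mul_pow_le {f : ℕ → ℝ≥0∞} {C x : ℝ} (hC : 0 < C) (hx : 1 < x)
    (h : ∀ w : ℕ, 1 ≤ w → ENNReal.ofReal (C * x ^ w) ≤ f w) :
    (⨆ w : ℕ, ⨆ _ : 1 ≤ w, f w) = ∞ := by
  refine iSup_eq_top.2 fun b hb => ?_
  obtain ⟨n, hn⟩ := pow_unbounded_of_one_lt (b.toReal / C) hx
  refine ⟨n + 1, ?_⟩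
  rw [iSup_pos (Nat.le_add_left 1 n)]
  refine lt_of_lt_of_le ?_ (h (n + 1) (Nat.le_add_left 1 n))
  rw [ENNReal.lt_ofReal_iff_toReal_lt hb.ne, ← div_lt_iff₀' hC]
  exact hn.trans_le (pow_le_pow_right₀ hx.le n.le_succ)

/-- For the geometric `f_W` with parameter `c ∈ (0,1)` and sampling
probability `q ∈ (0,1)`:
(i) there is `C₁ > 0` with `R_{q,w} ≥ C₁ (c/q)^w` for all `w ≥ 1`;
(ii) if `e³ c / q ≤ 1`, there is `C₂ > 0` with `R_{q,w} ≤ C₂ (e³ c / q)^w` for all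
`w ≥ 1`.  In particular `sup_{w ≥ 1} R_{q,w} < ∞` when `c/q ≤ e⁻³`, and
`sup_{w ≥ 1} R_{q,w} = ∞` when `c/q > 1`. -/
theorem stmt19 (q c : ℝ) (hq0 : 0 < q) (hq1 : q < 1) (hc0 : 0 < c) (hc1 : c < 1) :
    (∃ C₁ : ℝ, 0 < C₁ ∧ ∀ w : ℕ, 1 ≤ w →
        ENNReal.ofReal (C₁ * (c / q) ^ w) ≤ R q c w)
    ∧ (Real.exp 3 * c / q ≤ 1 →
        ∃ C₂ : ℝ, 0 < C₂ ∧ ∀ w : ℕ, 1 ≤ w →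
          R q c w ≤ ENNReal.ofReal (C₂ * (Real.exp 3 * c / q) ^ w))
    ∧ (c / q ≤ Real.exp (-3) → (⨆ w : ℕ, ⨆ _ : 1 ≤ w, R q c w) < ∞)
    ∧ (1 < c / q → (⨆ w : ℕ, ⨆ _ : 1 ≤ w, R q c w) = ∞) := by
  have hC₁ : 0 < (1 - c) / c := div_pos (by linarith) hc0
  have hupper := exists_R_le_exp_three_mul_pow hq0 hq1 hc0 hc1
  refine ⟨⟨_, hC₁, fun w => ofReal_mul_pow_le_R hq0 hq1 hc0 hc1⟩, hupper, fun h => ?_,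
    fun h => iSup_eq_top_of_ofReal_mul_pow_le hC₁ h fun w => ofReal_mul_pow_le_R hq0 hq1 hc0 hc1⟩
  have hx : Real.exp 3 * c / q ≤ 1 := by
    calc Real.exp 3 * c / q = Real.exp 3 * (c / q) := mul_div_assoc _ _ _
      _ ≤ Real.exp 3 * Real.exp (-3) := by gcongr
      _ = 1 := by rw [← Real.exp_add, add_neg_cancel, Real.exp_zero]
  obtain ⟨C₂, hC₂, hC₂_le⟩ := hupper hx
  exact iSup_lt_top_of_le_ofReal_mul_pow hC₂.le (by positivity) hx hC₂_le

end Stmt19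
end
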